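/- arXiv:1507.07360 — 6 statements merged into one kernel-verified Lean document; each statement's English description precedes it below -/
import Mathlib

section
/- Let M be the generic tetrahedron-free 3-hypergraph (a Fraïssé limit of K). Then M is primitive: every equivalence relation on the universe of M that is definable in M by a first-order formula without parameters is either the equality relation or the full relation relating all pairs of elements. -/
open FirstOrder FirstOrder.Language CategoryTheory

/-- The language with a single ternary relation symbol `P`. -/
inductive TRel : ℕ → Type
  | p : TRel 3

/-- The language `L₃` of 3-hypergraphs: one ternary relation symbol, nothing else. -/
def L3 : FirstOrder.Language :=
  ⟨fun _ => Empty, TRel⟩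

/-- The ternary relation symbol of `L3`. -/
abbrev pSym : L3.Relations 3 := TRel.p

/-- An `L3`-structure is a 3-hypergraph if whenever `P(x₁,x₂,x₃)` holds, the `xᵢ` are
pairwise distinct and `P` holds of every permutation of them. -/
def IsHypergraph (A : Type*) [L3.Structure A] : Prop :=
  ∀ x : Fin 3 → A, Structure.RelMap pSym x →
    Function.Injective x ∧ ∀ π : Equiv.Perm (Fin 3), Structure.RelMap pSym (x ∘ π)

/-- A tetrahedron: a 3-hypergraph with exactly 4 elements in which every triple of
pairwise distinct elements is related. -/
def IsTetrahedron (B : Type*) [L3.Structure B] : Prop :=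
  IsHypergraph B ∧ Nat.card B = 4 ∧
    ∀ a b c : B, a ≠ b → a ≠ c → b ≠ c → Structure.RelMap pSym ![a, b, c]

/-- A 3-hypergraph is tetrahedron-free if no tetrahedron embeds into it. -/
def TetrahedronFree (A : Type*) [L3.Structure A] : Prop :=
  ∀ B : Bundled.{0} L3.Structure, IsTetrahedron B → IsEmpty (B ↪[L3] A)

/-- The class `K` of all finite tetrahedron-free 3-hypergraphs. -/
def K3 : Set (Bundled.{0} L3.Structure) :=
  {A | Finite A ∧ IsHypergraph A ∧ TetrahedronFree A}

/-- Any set of an `L3`-structure is a substructure, since there are no function symbols. -/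
def subOf {M : Type} [L3.Structure M] (s : Set M) : L3.Substructure M where
  carrier := s
  fun_mem := fun {n} f => Empty.elim f

lemma closure_subOf {M : Type} [L3.Structure M] (s : Set M) :
    Substructure.closure L3 s = subOf s :=
  le_antisymm ((Substructure.closure_le).2 le_rfl) (Substructure.subset_closure)

lemma subOf_fg {M : Type} [L3.Structure M] {s : Set M} (hs : s.Finite) :
    (subOf s).FG := by
  rw [← closure_subOf]; exact Substructure.fg_closure hs

lemma not_inj_of_two {M : Type} (a b : M) (x : Fin 3 → M)
    (h : ∀ i, x i = a ∨ x i = b) : ¬ Function.Injective x := by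
  intro hinj
  rcases h 0 with h0 | h0 <;> rcases h 1 with h1 | h1 <;> rcases h 2 with h2 | h2 <;>
    first
      | exact absurd (hinj (h0.trans h1.symm)) (by decide)
      | exact absurd (hinj (h0.trans h2.symm)) (by decide)
      | exact absurd (hinj (h1.trans h2.symm)) (by decide)

/-- If the age of `M` consists of hypergraphs, any related triple in `M` is injective. -/
lemma inj_of_rel {M : Type} [L3.Structure M] (hage : L3.age M = K3)
    (x : Fin 3 → M) (hx : Structure.RelMap pSym x) : Function.Injective x := by
  set S := subOf (Set.range x) with hS
  have hfg : S.FG := subOf_fg (Set.finite_range x)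
  have hmem : (⟨S, inferInstance⟩ : Bundled.{0} L3.Structure) ∈ L3.age M :=
    ⟨(Substructure.fg_iff_structure_fg S).1 hfg, ⟨S.subtype⟩⟩
  rw [hage] at hmem
  have hhyp : IsHypergraph S := hmem.2.1
  set x' : Fin 3 → S := fun i => ⟨x i, Set.mem_range_self i⟩ with hx'
  have hxx : (Subtype.val ∘ x') = x := rfl
  have hrel : Structure.RelMap pSym x' := by
    have := (S.subtype.map_rel pSym x').mpr
    rw [show (S.subtype ∘ x') = x from rfl] at this
    exact ((S.subtype.map_rel pSym x').mp (by rw [show (S.subtype ∘ x') = x from rfl]; exact hx))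
  have hinj := (hhyp x' hrel).1
  intro i j hij
  exact hinj (Subtype.ext hij)

/-- Two-transitivity of the automorphism group. -/
lemma two_trans {M : Type} [L3.Structure M]
    (hhomog : L3.IsUltrahomogeneous M) (hage : L3.age M = K3)
    {a b c d : M} (hab : a ≠ b) (hcd : c ≠ d) :
    ∃ g : M ≃[L3] M, g a = c ∧ g b = d := by
  classical
  set S := subOf ({a, b} : Set M) with hS
  have hfg : S.FG := subOf_fg ((Set.finite_singleton b).insert a)
  have hmemS : ∀ y : S, (y : M) = a ∨ (y : M) = b := fun y => y.2
  set f0 : S → M := fun y => if (y : M) = a then c else d with hf0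
  have hno3 : ∀ (z : Fin 3 → M), (∀ i, z i = a ∨ z i = b) →
      ¬ Structure.RelMap pSym z := fun z hz hrel =>
    not_inj_of_two a b z hz (inj_of_rel hage z hrel)
  have hno3' : ∀ (z : Fin 3 → M), (∀ i, z i = c ∨ z i = d) →
      ¬ Structure.RelMap pSym z := fun z hz hrel =>
    not_inj_of_two c d z hz (inj_of_rel hage z hrel)
  set f : S ↪[L3] M :=
  { toFun := f0
    inj' := by
      intro y z hyz
      simp only [hf0] at hyz
      by_cases hy : (y : M) = a <;> by_cases hz : (z : M) = a
      · exact Subtype.ext (hy.trans hz.symm)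
      · simp [hy, hz] at hyz; exact absurd hyz hcd
      · simp [hy, hz] at hyz; exact absurd hyz.symm hcd
      · rcases hmemS y with h | h; · exact absurd h hy
        rcases hmemS z with h' | h'; · exact absurd h' hz
        exact Subtype.ext (h.trans h'.symm)
    map_fun' := fun {n} F => Empty.elim F
    map_rel' := by
      intro n r z
      cases r
      constructor
      · intro h
        exfalso
        refine hno3' (f0 ∘ z) (fun i => ?_) h
        by_cases hz : ((z i : M)) = a <;> simp [hf0, hz]
      · intro h
        exfalso
        have hz : Structure.RelMap pSym (Subtype.val ∘ z) :=
          (S.subtype.map_rel pSym z).mpr h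
        exact hno3 _ (fun i => hmemS (z i)) hz
  } with hf
  obtain ⟨g, hg⟩ := hhomog S hfg f
  have ha : a ∈ S := Or.inl rfl
  have hb : b ∈ S := Or.inr rfl
  refine ⟨g, ?_, ?_⟩
  · have := congrFun (congrArg (fun e => e.toFun) hg) ⟨a, ha⟩
    simp only [hf, hf0] at this
    have h' := this.symm; simp at h'; exact h'
  · have := congrFun (congrArg (fun e => e.toFun) hg) ⟨b, hb⟩
    simp only [hf, hf0] at this
    rw [if_neg (by exact fun h => hab h.symm)] at this
    have h' := this.symm; simp at h'; exact h'

/-- The generic tetrahedron-free 3-hypergraph is primitive: every equivalence relation on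
its universe which is definable by a first-order formula without parameters is either
equality or the full relation. -/
theorem generic_tetrahedronFree_primitive
    (M : Type) [L3.Structure M] [Countable M] [Infinite M]
    (hhomog : L3.IsUltrahomogeneous M) (hage : L3.age M = K3)
    (E : M → M → Prop) (hE : Equivalence E)
    (hdef : ∃ φ : L3.Formula (Fin 2), ∀ a b : M, E a b ↔ φ.Realize ![a, b]) :
    (∀ a b : M, E a b ↔ a = b) ∨ (∀ a b : M, E a b) := by
  obtain ⟨φ, hφ⟩ := hdef
  by_cases h : ∀ a b : M, E a b → a = b
  · exact Or.inl fun a b => ⟨h a b, fun e => e ▸ hE.refl a⟩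
  · push_neg at h
    obtain ⟨a, b, hEab, hab⟩ := h
    refine Or.inr fun c d => ?_
    by_cases hcd : c = d
    · exact hcd ▸ hE.refl c
    · obtain ⟨g, hga, hgb⟩ := two_trans hhomog hage hab hcd
      have h1 : φ.Realize ![a, b] := (hφ a b).1 hEab
      have h2 : φ.Realize (g ∘ ![a, b]) :=
        (StrongHomClass.realize_formula g φ).2 h1
      have h3 : (g ∘ ![a, b]) = ![c, d] := by
        funext i; fin_cases i <;> simp [hga, hgb]
      rw [h3] at h2
      exact (hφ c d).2 h2
end

section
/- Let M be the generic tetrahedron-free 3-hypergraph (a Fraïssé limit of K). Then for every n ≥ 1 and every complete n-type p over the empty set realized in M, condition (*) holds for X, the set of n-tuples of M realizing p: whenever ā' (possibly empty) and nonempty ā*, b̄*, c̄*, d̄* are tuples of elements of M with pairwise disjoint ranges such that the concatenations ā'ā*, ā'b̄*, ā'c̄*, ā'd̄* all belong to X, there is a tuple ē* such that tp(ē*ā*ā') = tp(c̄*ā*ā') and tp(ē*b̄*ā') = tp(d̄*b̄*ā'), where tp denotes the complete type over the empty set. -/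
open FirstOrder FirstOrder.Language CategoryTheory

/-- Two tuples have the same complete type over the empty set iff they satisfy the same
parameter-free first-order formulas. -/
def SameType (L : FirstOrder.Language) {M : Type*} [L.Structure M] {α : Type*}
    (x y : α → M) : Prop :=
  ∀ φ : L.Formula α, φ.Realize x ↔ φ.Realize y

/-- Condition (*): whenever `a'` (possibly empty) and nonempty `as`, `bs`, `cs`, `ds` are
tuples with pairwise disjoint ranges such that the concatenations `a'as`, `a'bs`, `a'cs`,
`a'ds` all belong to `X`, there is a tuple `es` with
`tp(es as a') = tp(cs as a')` and `tp(es bs a') = tp(ds bs a')`. -/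
def StarCond (L : FirstOrder.Language) (M : Type*) [L.Structure M] (n : ℕ)
    (X : Set (Fin n → M)) : Prop :=
  ∀ (k m : ℕ) (h : k + m = n) (a' : Fin k → M) (as bs cs ds : Fin m → M),
    1 ≤ m →
    List.Pairwise Disjoint
      [Set.range a', Set.range as, Set.range bs, Set.range cs, Set.range ds] →
    Fin.append a' as ∘ Fin.cast h.symm ∈ X →
    Fin.append a' bs ∘ Fin.cast h.symm ∈ X →
    Fin.append a' cs ∘ Fin.cast h.symm ∈ X →
    Fin.append a' ds ∘ Fin.cast h.symm ∈ X →
    ∃ es : Fin m → M,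
      SameType L (Fin.append (Fin.append es as) a') (Fin.append (Fin.append cs as) a') ∧
      SameType L (Fin.append (Fin.append es bs) a') (Fin.append (Fin.append ds bs) a')

section Aux

instance : L3.IsRelational := fun _ => ⟨fun f => f.elim⟩

variable {M : Type} [L3.Structure M]

/-- The substructure on an arbitrary set (the language has no function symbols). -/
def setSub (s : Set M) : L3.Substructure M := ⟨s, fun f => f.elim⟩

lemma setSub_fg {s : Set M} (hs : s.Finite) : (setSub s).FG := by
  haveI : Finite (setSub s) := hs.to_subtype
  exact Substructure.FG.of_finite

lemma mem_K3_of_finite (hage : L3.age M = K3) {s : Set M} (hs : s.Finite) :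
    Finite (setSub s) ∧ IsHypergraph (setSub s) ∧ TetrahedronFree (setSub s) := by
  have h : Bundled.mk ↥(setSub s) ∈ L3.age M := age.fg_substructure (setSub_fg hs)
  rw [hage] at h
  exact h

lemma relMap_sub {S : L3.Substructure M} {z : Fin 3 → S} :
    Structure.RelMap pSym z ↔ Structure.RelMap pSym (fun i => (z i : M)) := Iff.rfl

lemma hyperM (hage : L3.age M = K3) : IsHypergraph M := by
  intro x hx
  obtain ⟨-, hH, -⟩ := mem_K3_of_finite hage (Set.finite_range x)
  have hmem : ∀ i, x i ∈ setSub (Set.range x) := fun i => Set.mem_range_self i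
  have h := hH (fun i => ⟨x i, hmem i⟩) hx
  constructor
  · intro i j hij
    exact h.1 (Subtype.ext hij)
  · intro π
    exact h.2 π

/-- The abstract tetrahedron on `Fin 4`. -/
def T4 : Bundled.{0} L3.Structure :=
  ⟨Fin 4, ⟨fun f => f.elim, fun {_} _ z => Function.Injective z⟩⟩

lemma T4_tetra : IsTetrahedron T4 := by
  refine ⟨?_, ?_, ?_⟩
  · intro x hx
    exact ⟨hx, fun π => hx.comp (Equiv.injective π)⟩
  · simp [T4]
  · intro a b c hab hac hbc
    show Function.Injective ![a, b, c]
    intro i j hij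
    fin_cases i <;> fin_cases j <;> simp_all

lemma no_tetra (hage : L3.age M = K3) (p : Fin 4 → M) (hp : Function.Injective p)
    (hall : ∀ x : Fin 3 → Fin 4, Function.Injective x → Structure.RelMap pSym (p ∘ x)) :
    False := by
  obtain ⟨-, -, hTF⟩ := mem_K3_of_finite hage (Set.finite_range p)
  refine (hTF T4 T4_tetra).false ?_
  refine ⟨⟨fun i => ⟨p i, Set.mem_range_self i⟩, ?_⟩, fun f => f.elim, ?_⟩
  · intro i j hij
    exact hp (congrArg Subtype.val hij)
  · intro n r z
    cases r
    show Structure.RelMap pSym (fun i => (⟨p (z i), _⟩ : ↥(setSub (Set.range p)))) ↔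
      Function.Injective z
    rw [relMap_sub]
    constructor
    · intro hL
      have hinj := (hyperM hage (fun i => p (z i)) hL).1
      intro i j hij
      exact hinj (show p (z i) = p (z j) from congrArg p hij)
    · intro hz
      exact hall z hz

end Aux


section TypeLemmas

variable {M : Type} [L3.Structure M]

lemma sameType_of_pattern (hhomog : L3.IsUltrahomogeneous M) {N : ℕ} {x y : Fin N → M}
    (heq : ∀ i j, x i = x j ↔ y i = y j)
    (hrel : ∀ v : Fin 3 → Fin N,
      Structure.RelMap pSym (x ∘ v) ↔ Structure.RelMap pSym (y ∘ v)) :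
    SameType L3 x y := by
  classical
  have hmem : ∀ i, x i ∈ setSub (Set.range x) := fun i => Set.mem_range_self i
  have key : ∀ (q : ↥(setSub (Set.range x))) (i : Fin N), x i = (q : M) →
      y (Classical.choose q.2) = y i := by
    intro q i hi
    have hspec : x (Classical.choose q.2) = (q : M) := Classical.choose_spec q.2
    exact (heq _ i).1 (hspec.trans hi.symm)
  let F : ↥(setSub (Set.range x)) ↪[L3] M := by
    refine ⟨⟨fun q => y (Classical.choose q.2), ?_⟩, fun f => f.elim, ?_⟩
    · intro q r hqr
      have hq : x (Classical.choose q.2) = (q : M) := Classical.choose_spec q.2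
      have hr : x (Classical.choose r.2) = (r : M) := Classical.choose_spec r.2
      apply Subtype.ext
      rw [← hq, ← hr]
      exact (heq _ _).2 hqr
    · intro n r z
      cases r
      show Structure.RelMap pSym (fun j => y (Classical.choose (z j).2)) ↔
        Structure.RelMap pSym z
      have h2 : Structure.RelMap pSym z ↔
          Structure.RelMap pSym (x ∘ fun j => Classical.choose (z j).2) := by
        rw [relMap_sub]
        exact iff_of_eq (congrArg _ (funext fun j => (Classical.choose_spec (z j).2).symm))
      exact ((hrel fun j => Classical.choose (z j).2).symm).trans h2.symm
  obtain ⟨g, hg⟩ := hhomog (setSub (Set.range x)) (setSub_fg (Set.finite_range x)) F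
  have hyx : y = ⇑g ∘ x := by
    funext i
    calc y i = F ⟨x i, hmem i⟩ := (key ⟨x i, hmem i⟩ i rfl).symm
      _ = g (x i) := by rw [hg]; rfl
  intro φ
  rw [hyx]
  exact (StrongHomClass.realize_formula g φ).symm

lemma SameType.eq_iff {N : ℕ} {x y : Fin N → M} (st : SameType L3 x y) (i j : Fin N) :
    x i = x j ↔ y i = y j := by
  have h := st (Term.equal (Term.var i) (Term.var j))
  simpa [Formula.realize_equal] using h

lemma SameType.rel_iff {N : ℕ} {x y : Fin N → M} (st : SameType L3 x y)
    (v : Fin 3 → Fin N) :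
    Structure.RelMap pSym (x ∘ v) ↔ Structure.RelMap pSym (y ∘ v) := by
  have h := st (Relations.formula pSym fun i => Term.var (v i))
  simpa [Formula.realize_rel, Function.comp_def] using h

end TypeLemmas

noncomputable section Constr

variable {M : Type} [L3.Structure M] {k m : ℕ}
variable (a' : Fin k → M) (as bs cs ds : Fin m → M)

def Aset : Set M := Set.range a' ∪ Set.range as ∪ Set.range bs

/-- The carrier of the extension structure. -/
@[reducible]
def TT {M : Type} {k m : ℕ} (a' : Fin k → M) (as bs cs _ds : Fin m → M) : Type :=
  ↥(Aset a' as bs) ⊕ ↥(Set.range cs)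

def idxC (c : ↥(Set.range cs)) : Fin m := Classical.choose c.2

lemma cs_idxC (c : ↥(Set.range cs)) : cs (idxC cs c) = c.val := Classical.choose_spec c.2

def umap : TT a' as bs cs ds → M := Sum.elim Subtype.val Subtype.val

def vmap : TT a' as bs cs ds → M := Sum.elim Subtype.val fun c => ds (idxC cs c)

def isNewT : TT a' as bs cs ds → Prop := Sum.elim (fun _ => False) fun _ => True

def isAT : TT a' as bs cs ds → Prop :=
  Sum.elim (fun a => a.val ∈ Set.range as) fun _ => False

def isBT : TT a' as bs cs ds → Prop :=
  Sum.elim (fun a => a.val ∈ Set.range bs) fun _ => False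

instance TStr : L3.Structure (TT a' as bs cs ds) where
  funMap := fun f _ => f.elim
  RelMap := fun {n} r z =>
    match r with
    | TRel.p =>
      ((∀ j, ¬ isNewT a' as bs cs ds (z j)) ∧
        Structure.RelMap pSym (umap a' as bs cs ds ∘ z)) ∨
      ((∃ j, isNewT a' as bs cs ds (z j)) ∧ (∀ j, ¬ isBT a' as bs cs ds (z j)) ∧
        Structure.RelMap pSym (umap a' as bs cs ds ∘ z)) ∨
      ((∃ j, isNewT a' as bs cs ds (z j)) ∧ (∀ j, ¬ isAT a' as bs cs ds (z j)) ∧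
        Structure.RelMap pSym (vmap a' as bs cs ds ∘ z))

lemma relT_iff (z : Fin 3 → TT a' as bs cs ds) :
    Structure.RelMap pSym z ↔
      ((∀ j, ¬ isNewT a' as bs cs ds (z j)) ∧
        Structure.RelMap pSym (umap a' as bs cs ds ∘ z)) ∨
      ((∃ j, isNewT a' as bs cs ds (z j)) ∧ (∀ j, ¬ isBT a' as bs cs ds (z j)) ∧
        Structure.RelMap pSym (umap a' as bs cs ds ∘ z)) ∨
      ((∃ j, isNewT a' as bs cs ds (z j)) ∧ (∀ j, ¬ isAT a' as bs cs ds (z j)) ∧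
        Structure.RelMap pSym (vmap a' as bs cs ds ∘ z)) := Iff.rfl

variable {a' as bs cs ds}

lemma ds_idxC (hE1 : ∀ i j, cs i = cs j ↔ ds i = ds j) (c : ↥(Set.range cs)) (i : Fin m)
    (h : c.val = cs i) : ds (idxC cs c) = ds i :=
  (hE1 _ _).1 ((cs_idxC cs c).trans h)

lemma umap_inj (hdAC : Disjoint (Aset a' as bs) (Set.range cs)) :
    Function.Injective (umap a' as bs cs ds) := by
  rintro (a | c) (a2 | c2) h <;> simp only [umap, Sum.elim_inl, Sum.elim_inr] at h
  · exact congrArg Sum.inl (Subtype.ext h)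
  · exact absurd c2.2 (Set.disjoint_left.1 hdAC (h ▸ a.2))
  · exact absurd (h.symm ▸ a2.2) (Set.disjoint_right.1 hdAC c.2)
  · exact congrArg Sum.inr (Subtype.ext h)

lemma vmap_inj (hE1 : ∀ i j, cs i = cs j ↔ ds i = ds j)
    (hdAD : Disjoint (Aset a' as bs) (Set.range ds)) :
    Function.Injective (vmap a' as bs cs ds) := by
  rintro (a | c) (a2 | c2) h <;> simp only [vmap, Sum.elim_inl, Sum.elim_inr] at h
  · exact congrArg Sum.inl (Subtype.ext h)
  · exact absurd (h ▸ a.2) (Set.disjoint_right.1 hdAD ⟨idxC cs c2, rfl⟩)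
  · exact absurd (h.symm ▸ a2.2) (Set.disjoint_right.1 hdAD ⟨idxC cs c, rfl⟩)
  · refine congrArg Sum.inr (Subtype.ext ?_)
    have h2 := (hE1 (idxC cs c) (idxC cs c2)).2 h
    rw [cs_idxC cs c, cs_idxC cs c2] at h2
    exact h2

lemma agreeT (hE1 : ∀ i j, cs i = cs j ↔ ds i = ds j)
    (hE2 : ∀ w : Fin 3 → Fin k ⊕ Fin m,
      Structure.RelMap pSym (Sum.elim a' cs ∘ w) ↔ Structure.RelMap pSym (Sum.elim a' ds ∘ w))
    (z : Fin 3 → TT a' as bs cs ds)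
    (hA : ∀ j, ¬ isAT a' as bs cs ds (z j)) (hB : ∀ j, ¬ isBT a' as bs cs ds (z j)) :
    Structure.RelMap pSym (umap a' as bs cs ds ∘ z) ↔
      Structure.RelMap pSym (vmap a' as bs cs ds ∘ z) := by
  have hw : ∀ j, ∃ w : Fin k ⊕ Fin m,
      umap a' as bs cs ds (z j) = Sum.elim a' cs w ∧
      vmap a' as bs cs ds (z j) = Sum.elim a' ds w := by
    intro j
    cases hz : z j with
    | inl a =>
      have ha : a.val ∈ Set.range a' := by
        rcases a.2 with (h | h) | h
        · exact h
        · exact absurd (by rw [hz]; exact h) (hA j)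
        · exact absurd (by rw [hz]; exact h) (hB j)
      obtain ⟨i, hi⟩ := ha
      exact ⟨Sum.inl i, by simp [umap, hi], by simp [vmap, hi]⟩
    | inr c =>
      exact ⟨Sum.inr (idxC cs c), by simp [umap, cs_idxC], by simp [vmap]⟩
  choose w hw1 hw2 using hw
  rw [show umap a' as bs cs ds ∘ z = Sum.elim a' cs ∘ w from funext hw1,
    show vmap a' as bs cs ds ∘ z = Sum.elim a' ds ∘ w from funext hw2]
  exact hE2 w

lemma relT_umap (hE1 : ∀ i j, cs i = cs j ↔ ds i = ds j)
    (hE2 : ∀ w : Fin 3 → Fin k ⊕ Fin m,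
      Structure.RelMap pSym (Sum.elim a' cs ∘ w) ↔ Structure.RelMap pSym (Sum.elim a' ds ∘ w))
    (z : Fin 3 → TT a' as bs cs ds) (hB : ∀ j, ¬ isBT a' as bs cs ds (z j)) :
    Structure.RelMap pSym z ↔ Structure.RelMap pSym (umap a' as bs cs ds ∘ z) := by
  rw [relT_iff]
  by_cases hnew : ∃ j, isNewT a' as bs cs ds (z j)
  · constructor
    · rintro (⟨_, h⟩ | ⟨_, _, h⟩ | ⟨_, hA, h⟩)
      · exact h
      · exact h
      · exact (agreeT hE1 hE2 z hA hB).2 h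
    · intro h
      exact Or.inr (Or.inl ⟨hnew, hB, h⟩)
  · constructor
    · rintro (⟨_, h⟩ | ⟨hn, _, _⟩ | ⟨hn, _, _⟩)
      · exact h
      · exact absurd hn hnew
      · exact absurd hn hnew
    · intro h
      exact Or.inl ⟨fun j hj => hnew ⟨j, hj⟩, h⟩

lemma relT_umap' (z : Fin 3 → TT a' as bs cs ds)
    (hnew : ∀ j, ¬ isNewT a' as bs cs ds (z j)) :
    Structure.RelMap pSym z ↔ Structure.RelMap pSym (umap a' as bs cs ds ∘ z) := by
  rw [relT_iff]
  constructor
  · rintro (⟨_, h⟩ | ⟨⟨j, hj⟩, _, _⟩ | ⟨⟨j, hj⟩, _, _⟩)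
    · exact h
    · exact absurd hj (hnew j)
    · exact absurd hj (hnew j)
  · intro h
    exact Or.inl ⟨hnew, h⟩

lemma relT_vmap (hE1 : ∀ i j, cs i = cs j ↔ ds i = ds j)
    (hE2 : ∀ w : Fin 3 → Fin k ⊕ Fin m,
      Structure.RelMap pSym (Sum.elim a' cs ∘ w) ↔ Structure.RelMap pSym (Sum.elim a' ds ∘ w))
    (z : Fin 3 → TT a' as bs cs ds) (hA : ∀ j, ¬ isAT a' as bs cs ds (z j)) :
    Structure.RelMap pSym z ↔ Structure.RelMap pSym (vmap a' as bs cs ds ∘ z) := by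
  rw [relT_iff]
  by_cases hnew : ∃ j, isNewT a' as bs cs ds (z j)
  · constructor
    · rintro (⟨hno, h⟩ | ⟨_, hB, h⟩ | ⟨_, _, h⟩)
      · obtain ⟨j, hj⟩ := hnew
        exact absurd hj (hno j)
      · exact (agreeT hE1 hE2 z hA hB).1 h
      · exact h
    · intro h
      exact Or.inr (Or.inr ⟨hnew, hA, h⟩)
  · have huv : umap a' as bs cs ds ∘ z = vmap a' as bs cs ds ∘ z := by
      funext j
      cases hz : z j with
      | inl a =>
        show umap a' as bs cs ds (z j) = vmap a' as bs cs ds (z j)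
        rw [hz]; rfl
      | inr c => exact absurd (by rw [hz]; trivial) (fun hh => hnew ⟨j, hh⟩)
    constructor
    · rintro (⟨_, h⟩ | ⟨hn, _, _⟩ | ⟨hn, _, _⟩)
      · rw [← huv]; exact h
      · exact absurd hn hnew
      · exact absurd hn hnew
    · intro h
      refine Or.inl ⟨fun j hj => hnew ⟨j, hj⟩, ?_⟩
      rw [huv]; exact h

lemma hyperT (hM : IsHypergraph M) : IsHypergraph (TT a' as bs cs ds) := by
  intro z hz
  constructor
  · have hinj : ∃ f : TT a' as bs cs ds → M, Function.Injective (f ∘ z) := by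
      rcases (relT_iff a' as bs cs ds z).1 hz with ⟨_, h⟩ | ⟨_, _, h⟩ | ⟨_, _, h⟩
      · exact ⟨_, (hM _ h).1⟩
      · exact ⟨_, (hM _ h).1⟩
      · exact ⟨_, (hM _ h).1⟩
    obtain ⟨f, hf⟩ := hinj
    intro i j hij
    exact hf (show f (z i) = f (z j) from congrArg f hij)
  · intro π
    rw [relT_iff] at hz ⊢
    rcases hz with ⟨h1, h2⟩ | ⟨h1, h2, h3⟩ | ⟨h1, h2, h3⟩
    · exact Or.inl ⟨fun j => h1 (π j), (hM _ h2).2 π⟩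
    · refine Or.inr (Or.inl ⟨?_, fun j => h2 (π j), (hM _ h3).2 π⟩)
      obtain ⟨j, hj⟩ := h1
      exact ⟨π.symm j, by simpa using hj⟩
    · refine Or.inr (Or.inr ⟨?_, fun j => h2 (π j), (hM _ h3).2 π⟩)
      obtain ⟨j, hj⟩ := h1
      exact ⟨π.symm j, by simpa using hj⟩

lemma finTT : Finite (TT a' as bs cs ds) := by
  have h1 : (Aset a' as bs).Finite :=
    ((Set.finite_range a').union (Set.finite_range as)).union (Set.finite_range bs)
  haveI := h1.to_subtype
  haveI := (Set.finite_range cs).to_subtype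
  exact inferInstanceAs (Finite (↥(Aset a' as bs) ⊕ ↥(Set.range cs)))

lemma tetraFreeT (hM : IsHypergraph M)
    (hE1 : ∀ i j, cs i = cs j ↔ ds i = ds j)
    (hE2 : ∀ w : Fin 3 → Fin k ⊕ Fin m,
      Structure.RelMap pSym (Sum.elim a' cs ∘ w) ↔ Structure.RelMap pSym (Sum.elim a' ds ∘ w))
    (hdAC : Disjoint (Aset a' as bs) (Set.range cs))
    (hdAD : Disjoint (Aset a' as bs) (Set.range ds))
    (hdASBS : Disjoint (Set.range as) (Set.range bs))
    (hnoT : ∀ p : Fin 4 → M, Function.Injective p →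
      (∀ x : Fin 3 → Fin 4, Function.Injective x → Structure.RelMap pSym (p ∘ x)) → False) :
    TetrahedronFree (TT a' as bs cs ds) := by
  intro B hB
  constructor
  intro e
  obtain ⟨hBH, hBcard, hBall⟩ := hB
  haveI : Finite B := Nat.finite_of_card_ne_zero (by omega)
  have q := Finite.equivFinOfCardEq hBcard
  set p : Fin 4 → TT a' as bs cs ds := fun i => e (q.symm i) with hp
  have hpinj : Function.Injective p := e.injective.comp q.symm.injective
  have hpall : ∀ x : Fin 3 → Fin 4, Function.Injective x →
      Structure.RelMap pSym (p ∘ x) := by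
    intro x hx
    have h3 : Structure.RelMap pSym (fun i => q.symm (x i) : Fin 3 → B) := by
      have hd : ∀ i j : Fin 3, i ≠ j → q.symm (x i) ≠ q.symm (x j) := by
        intro i j hij hc
        exact hij (hx (q.symm.injective hc))
      have h4 := hBall (q.symm (x 0)) (q.symm (x 1)) (q.symm (x 2))
        (hd 0 1 (by decide)) (hd 0 2 (by decide)) (hd 1 2 (by decide))
      have h5 : ![q.symm (x 0), q.symm (x 1), q.symm (x 2)] = fun i => q.symm (x i) := by
        funext i
        fin_cases i <;> rfl
      rwa [h5] at h4
    exact (e.map_rel' pSym fun i => q.symm (x i)).2 h3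
  by_cases hnew : ∃ i, isNewT a' as bs cs ds (p i)
  · by_cases hBp : ∃ i, isBT a' as bs cs ds (p i)
    · by_cases hAp : ∃ i, isAT a' as bs cs ds (p i)
      · obtain ⟨i0, hi0⟩ := hnew
        obtain ⟨i1, hi1⟩ := hBp
        obtain ⟨i2, hi2⟩ := hAp
        have d01 : i0 ≠ i1 := by
          rintro rfl
          cases hpi : p i0 with
          | inl a => rw [hpi] at hi0; simpa [isNewT] using hi0
          | inr c => rw [hpi] at hi1; simpa [isBT] using hi1
        have d02 : i0 ≠ i2 := by
          rintro rfl
          cases hpi : p i0 with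
          | inl a => rw [hpi] at hi0; simpa [isNewT] using hi0
          | inr c => rw [hpi] at hi2; simpa [isAT] using hi2
        have d12 : i1 ≠ i2 := by
          rintro rfl
          cases hpi : p i1 with
          | inl a =>
            rw [hpi] at hi1 hi2
            simp only [isBT, isAT, Sum.elim_inl] at hi1 hi2
            exact Set.disjoint_right.1 hdASBS hi1 hi2
          | inr c => rw [hpi] at hi1; simpa [isBT] using hi1
        have hxinj : Function.Injective ![i0, i1, i2] := by
          intro i j hij
          fin_cases i <;> fin_cases j <;> simp_all
        have h := hpall ![i0, i1, i2] hxinj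
        rcases (relT_iff a' as bs cs ds (p ∘ ![i0, i1, i2])).1 h with
          ⟨h1, -⟩ | ⟨-, h1, -⟩ | ⟨-, h1, -⟩
        · exact h1 0 (by simpa using hi0)
        · exact h1 1 (by simpa using hi1)
        · exact h1 2 (by simpa using hi2)
      · -- no isA anywhere: use vmap
        refine hnoT (vmap a' as bs cs ds ∘ p) ((vmap_inj hE1 hdAD).comp hpinj) ?_
        intro x hx
        have h := hpall x hx
        rw [relT_vmap hE1 hE2 (p ∘ x) (fun j => (not_exists.1 hAp (x j)))] at h
        exact h
    · -- no isB anywhere: use umap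
      refine hnoT (umap a' as bs cs ds ∘ p) ((umap_inj hdAC).comp hpinj) ?_
      intro x hx
      have h := hpall x hx
      rw [relT_umap hE1 hE2 (p ∘ x) (fun j => (not_exists.1 hBp (x j)))] at h
      exact h
  · -- no new point at all
    refine hnoT (umap a' as bs cs ds ∘ p) ((umap_inj hdAC).comp hpinj) ?_
    intro x hx
    have h := hpall x hx
    rw [relT_umap' (p ∘ x) (fun j => (not_exists.1 hnew (x j)))] at h
    exact h

variable (a' as bs cs ds)

lemma comp_append' {α β : Type*} {p q : ℕ} (g : α → β) (u : Fin p → α) (v : Fin q → α) :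
    g ∘ Fin.append u v = Fin.append (g ∘ u) (g ∘ v) := by
  funext i
  induction i using Fin.addCases with
  | left j => simp [Fin.append_left]
  | right j => simp [Fin.append_right]

/-- The inclusion of the old points into the extension. -/
def inclT : ↥(setSub (Aset a' as bs)) ↪[L3] TT a' as bs cs ds := by
  refine ⟨⟨fun a => Sum.inl ⟨a.val, a.2⟩, ?_⟩, fun f => f.elim, ?_⟩
  · intro a b hab
    exact Subtype.ext (congrArg Subtype.val (Sum.inl.inj hab))
  · intro n r z
    cases r
    exact relT_umap' (fun j => Sum.inl ⟨(z j).val, (z j).2⟩)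
      (fun j hj => by simpa [isNewT] using hj)

def tau1 : Fin ((m + m) + k) → TT a' as bs cs ds :=
  Fin.append (Fin.append (fun i => Sum.inr ⟨cs i, Set.mem_range_self i⟩)
    (fun i => Sum.inl ⟨as i, Set.mem_union_left _ (Set.mem_union_right _ ⟨i, rfl⟩)⟩))
    (fun j => Sum.inl ⟨a' j, Set.mem_union_left _ (Set.mem_union_left _ ⟨j, rfl⟩)⟩)

def tau2 : Fin ((m + m) + k) → TT a' as bs cs ds :=
  Fin.append (Fin.append (fun i => Sum.inr ⟨cs i, Set.mem_range_self i⟩)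
    (fun i => Sum.inl ⟨bs i, Set.mem_union_right _ ⟨i, rfl⟩⟩))
    (fun j => Sum.inl ⟨a' j, Set.mem_union_left _ (Set.mem_union_left _ ⟨j, rfl⟩)⟩)

variable {a' as bs cs ds}

lemma tau1_noB (hdA'BS : Disjoint (Set.range a') (Set.range bs))
    (hdASBS : Disjoint (Set.range as) (Set.range bs)) :
    ∀ i, ¬ isBT a' as bs cs ds (tau1 a' as bs cs ds i) := by
  intro i
  unfold tau1
  induction i using Fin.addCases with
  | left j =>
    rw [Fin.append_left]
    induction j using Fin.addCases with
    | left j2 => rw [Fin.append_left]; simp [isBT]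
    | right j2 =>
      rw [Fin.append_right]
      intro hh
      simp only [isBT, Sum.elim_inl] at hh
      exact Set.disjoint_left.1 hdASBS (Set.mem_range_self j2) hh
  | right j =>
    rw [Fin.append_right]
    intro hh
    simp only [isBT, Sum.elim_inl] at hh
    exact Set.disjoint_left.1 hdA'BS (Set.mem_range_self j) hh

lemma tau2_noA (hdA'AS : Disjoint (Set.range a') (Set.range as))
    (hdASBS : Disjoint (Set.range as) (Set.range bs)) :
    ∀ i, ¬ isAT a' as bs cs ds (tau2 a' as bs cs ds i) := by
  intro i
  unfold tau2
  induction i using Fin.addCases with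
  | left j =>
    rw [Fin.append_left]
    induction j using Fin.addCases with
    | left j2 => rw [Fin.append_left]; simp [isAT]
    | right j2 =>
      rw [Fin.append_right]
      intro hh
      simp only [isAT, Sum.elim_inl] at hh
      exact Set.disjoint_left.1 hdASBS hh (Set.mem_range_self j2)
  | right j =>
    rw [Fin.append_right]
    intro hh
    simp only [isAT, Sum.elim_inl] at hh
    exact Set.disjoint_left.1 hdA'AS (Set.mem_range_self j) hh

lemma umap_tau1 : umap a' as bs cs ds ∘ tau1 a' as bs cs ds =
    Fin.append (Fin.append cs as) a' := by
  unfold tau1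
  rw [comp_append', comp_append']
  rfl

lemma vmap_tau2 (hE1 : ∀ i j, cs i = cs j ↔ ds i = ds j) :
    vmap a' as bs cs ds ∘ tau2 a' as bs cs ds = Fin.append (Fin.append ds bs) a' := by
  unfold tau2
  rw [comp_append', comp_append']
  have h1 : (vmap a' as bs cs ds ∘ fun i => Sum.inr ⟨cs i, Set.mem_range_self i⟩) = ds :=
    funext fun i => ds_idxC hE1 ⟨cs i, Set.mem_range_self i⟩ i rfl
  rw [h1]
  rfl

end Constr



/-- In the generic tetrahedron-free 3-hypergraph, for every `n ≥ 1` and every complete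
`n`-type over `∅` realized in `M` (represented by a realization `a₀`, so that `X` is the
set of tuples with the same complete type as `a₀`), condition (*) holds for `X`. -/
theorem generic_tetrahedronFree_starCond
    (M : Type) [L3.Structure M] [Countable M] [Infinite M]
    (hhomog : L3.IsUltrahomogeneous M) (hage : L3.age M = K3) :
    ∀ (n : ℕ), 1 ≤ n → ∀ a₀ : Fin n → M,
      StarCond L3 M n {b | SameType L3 b a₀} := by
  intro n _hn a₀ k m h a' as bs cs ds _hm hdisj hxa hxb hxc hxd
  -- unpack disjointness
  rcases hdisj with _ | ⟨h0, hd1⟩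
  rcases hd1 with _ | ⟨h1, hd2⟩
  rcases hd2 with _ | ⟨h2, hd3⟩
  have dA'AS : Disjoint (Set.range a') (Set.range as) := h0 _ (by simp)
  have dA'BS : Disjoint (Set.range a') (Set.range bs) := h0 _ (by simp)
  have dA'CS : Disjoint (Set.range a') (Set.range cs) := h0 _ (by simp)
  have dA'DS : Disjoint (Set.range a') (Set.range ds) := h0 _ (by simp)
  have dASBS : Disjoint (Set.range as) (Set.range bs) := h1 _ (by simp)
  have dASCS : Disjoint (Set.range as) (Set.range cs) := h1 _ (by simp)
  have dASDS : Disjoint (Set.range as) (Set.range ds) := h1 _ (by simp)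
  have dBSCS : Disjoint (Set.range bs) (Set.range cs) := h2 _ (by simp)
  have dBSDS : Disjoint (Set.range bs) (Set.range ds) := h2 _ (by simp)
  -- the types of `a'cs` and `a'ds` agree
  have stcd : SameType L3 (Fin.append a' cs ∘ Fin.cast h.symm)
      (Fin.append a' ds ∘ Fin.cast h.symm) := fun φ => (hxc φ).trans (hxd φ).symm
  -- evaluation lemmas
  have evalr : ∀ (x : Fin m → M) (i : Fin m),
      (Fin.append a' x ∘ Fin.cast h.symm) (Fin.cast h (Fin.natAdd k i)) = x i := by
    intro x i
    show Fin.append a' x (Fin.cast h.symm (Fin.cast h (Fin.natAdd k i))) = x i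
    rw [show Fin.cast h.symm (Fin.cast h (Fin.natAdd k i)) = Fin.natAdd k i from rfl]
    exact Fin.append_right a' x i
  have evall : ∀ (x : Fin m → M) (i : Fin k),
      (Fin.append a' x ∘ Fin.cast h.symm) (Fin.cast h (Fin.castAdd m i)) = a' i := by
    intro x i
    show Fin.append a' x (Fin.cast h.symm (Fin.cast h (Fin.castAdd m i))) = a' i
    rw [show Fin.cast h.symm (Fin.cast h (Fin.castAdd m i)) = Fin.castAdd m i from rfl]
    exact Fin.append_left a' x i
  have hE1 : ∀ i j, cs i = cs j ↔ ds i = ds j := by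
    intro i j
    have hh := SameType.eq_iff stcd (Fin.cast h (Fin.natAdd k i)) (Fin.cast h (Fin.natAdd k j))
    rwa [evalr cs i, evalr cs j, evalr ds i, evalr ds j] at hh
  have hE2 : ∀ w : Fin 3 → Fin k ⊕ Fin m,
      Structure.RelMap pSym (Sum.elim a' cs ∘ w) ↔
        Structure.RelMap pSym (Sum.elim a' ds ∘ w) := by
    intro w
    have hh := SameType.rel_iff stcd (fun j =>
      Sum.elim (fun i => Fin.cast h (Fin.castAdd m i))
        (fun i => Fin.cast h (Fin.natAdd k i)) (w j))
    have ec : ∀ (x : Fin m → M),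
        ((Fin.append a' x ∘ Fin.cast h.symm) ∘ fun j =>
          Sum.elim (fun i => Fin.cast h (Fin.castAdd m i))
            (fun i => Fin.cast h (Fin.natAdd k i)) (w j)) = Sum.elim a' x ∘ w := by
      intro x
      funext j
      cases hwj : w j with
      | inl i =>
        simp only [Function.comp_apply, hwj, Sum.elim_inl]
        exact evall x i
      | inr i =>
        simp only [Function.comp_apply, hwj, Sum.elim_inr]
        exact evalr x i
    rwa [ec cs, ec ds] at hh
  -- disjointness of Aset from cs and ds
  have hdAC : Disjoint (Aset a' as bs) (Set.range cs) := by
    show Disjoint (Set.range a' ∪ Set.range as ∪ Set.range bs) (Set.range cs)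
    rw [Set.disjoint_union_left, Set.disjoint_union_left]
    exact ⟨⟨dA'CS, dASCS⟩, dBSCS⟩
  have hdAD : Disjoint (Aset a' as bs) (Set.range ds) := by
    show Disjoint (Set.range a' ∪ Set.range as ∪ Set.range bs) (Set.range ds)
    rw [Set.disjoint_union_left, Set.disjoint_union_left]
    exact ⟨⟨dA'DS, dASDS⟩, dBSDS⟩
  have hM : IsHypergraph M := hyperM hage
  -- the extension structure is in K3, hence in the age of M
  have hK3 : (⟨TT a' as bs cs ds, TStr a' as bs cs ds⟩ : Bundled.{0} L3.Structure) ∈ K3 := by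
    refine ⟨?_, ?_, ?_⟩
    · exact finTT (a' := a') (as := as) (bs := bs) (cs := cs) (ds := ds)
    · exact hyperT hM
    · exact tetraFreeT hM hE1 hE2 hdAC hdAD dASBS (fun p hp hall => no_tetra hage p hp hall)
  have hAge : (⟨TT a' as bs cs ds, TStr a' as bs cs ds⟩ : Bundled.{0} L3.Structure) ∈ L3.age M := by
    rw [hage]; exact hK3
  haveI hNE : Nonempty (TT a' as bs cs ds ↪[L3] M) := hAge.2
  have hASfin : (Aset a' as bs).Finite :=
    ((Set.finite_range a').union (Set.finite_range as)).union (Set.finite_range bs)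
  have hFGA : Structure.FG L3 ↥(setSub (Aset a' as bs)) := by
    haveI : Finite ↥(setSub (Aset a' as bs)) := hASfin.to_subtype
    exact ⟨Substructure.FG.of_finite⟩
  obtain ⟨e, he⟩ := hhomog.extend_embedding hFGA (setSub (Aset a' as bs)).subtype
    (inclT a' as bs cs ds)
  have he' : ∀ (x : M) (hx : x ∈ Aset a' as bs), e (Sum.inl ⟨x, hx⟩) = x := by
    intro x hx
    have h2 := congrFun (congrArg DFunLike.coe he) ⟨x, hx⟩
    exact h2.symm
  refine ⟨fun i => e (Sum.inr ⟨cs i, Set.mem_range_self i⟩), ?_, ?_⟩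
  · -- first type equality, via tau1
    have hx1 : Fin.append (Fin.append (fun i => e (Sum.inr ⟨cs i, Set.mem_range_self i⟩)) as) a'
        = ⇑e ∘ tau1 a' as bs cs ds := by
      have hA : (⇑e ∘ fun i => (Sum.inl ⟨as i,
          Set.mem_union_left _ (Set.mem_union_right _ ⟨i, rfl⟩)⟩ : TT a' as bs cs ds)) = as :=
        funext fun i => he' (as i) _
      have hA' : (⇑e ∘ fun j => (Sum.inl ⟨a' j,
          Set.mem_union_left _ (Set.mem_union_left _ ⟨j, rfl⟩)⟩ : TT a' as bs cs ds)) = a' :=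
        funext fun j => he' (a' j) _
      unfold tau1
      rw [comp_append', comp_append', hA, hA']
      rfl
    rw [hx1, ← umap_tau1 (a' := a') (as := as) (bs := bs) (cs := cs) (ds := ds)]
    apply sameType_of_pattern hhomog
    · intro i j
      constructor
      · intro hEq
        exact congrArg (umap a' as bs cs ds) (e.injective hEq)
      · intro hEq
        exact congrArg ⇑e (umap_inj hdAC hEq)
    · intro v
      exact (e.map_rel' pSym (tau1 a' as bs cs ds ∘ v)).trans
        (relT_umap hE1 hE2 (tau1 a' as bs cs ds ∘ v)
          (fun j => tau1_noB dA'BS dASBS (v j)))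
  · -- second type equality, via tau2
    have hx2 : Fin.append (Fin.append (fun i => e (Sum.inr ⟨cs i, Set.mem_range_self i⟩)) bs) a'
        = ⇑e ∘ tau2 a' as bs cs ds := by
      have hB : (⇑e ∘ fun i => (Sum.inl ⟨bs i,
          Set.mem_union_right _ ⟨i, rfl⟩⟩ : TT a' as bs cs ds)) = bs :=
        funext fun i => he' (bs i) _
      have hA' : (⇑e ∘ fun j => (Sum.inl ⟨a' j,
          Set.mem_union_left _ (Set.mem_union_left _ ⟨j, rfl⟩)⟩ : TT a' as bs cs ds)) = a' :=
        funext fun j => he' (a' j) _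
      unfold tau2
      rw [comp_append', comp_append', hB, hA']
      rfl
    rw [hx2, ← vmap_tau2 hE1]
    apply sameType_of_pattern hhomog
    · intro i j
      constructor
      · intro hEq
        exact congrArg (vmap a' as bs cs ds) (e.injective hEq)
      · intro hEq
        exact congrArg ⇑e (vmap_inj hE1 hdAD hEq)
    · intro v
      exact (e.map_rel' pSym (tau2 a' as bs cs ds ∘ v)).trans
        (relT_vmap hE1 hE2 (tau2 a' as bs cs ds ∘ v)
          (fun j => tau2_noA dA'AS dASBS (v j)))
end

section
/- Suppose that M is a countably infinite L-structure whose complete theory is ℵ₀-categorical and which has degenerate algebraic closure, that p implies x_i ≠ x_j for all 1 ≤ i < j ≤ n, that condition (*) holds for X, and that E is a nontrivial ∅-definable equivalence relation on X. Suppose ā,b̄ ∈ X satisfy E(ā,b̄), rng(ā) ∩ rng(b̄) ≠ ∅, and the index sets {i : a_i ∈ rng(ā) ∩ rng(b̄)} and {j : b_j ∈ rng(ā) ∩ rng(b̄)} are distinct. Then there is c̄ ∈ X such that E(ā,c̄) holds and rng(ā) ∩ rng(c̄) is a proper subset of rng(ā) ∩ rng(b̄). -/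
open FirstOrder FirstOrder.Language Cardinal

set_option linter.unusedSectionVars false

universe u v

namespace SatAux

section Formulas

variable {L : FirstOrder.Language.{u, v}}
variable {M : Type*} [L.Structure M] {β : Type*} {m : ℕ}

/-- conjunction of a finite set of formulas, bundled with an existential over the
`Fin m` part of the variables. -/
noncomputable def exform (Γ : Finset (L.Formula (β ⊕ Fin m))) : L.Formula β :=
  Formula.iExs (Fin m) (FirstOrder.Language.BoundedFormula.iInf (fun γ : Γ => (γ : L.Formula (β ⊕ Fin m))))

theorem realize_exform {Γ : Finset (L.Formula (β ⊕ Fin m))} {v : β → M} :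
    (exform Γ).Realize v ↔ ∃ w : Fin m → M, ∀ γ ∈ Γ, γ.Realize (Sum.elim v w) := by
  rw [exform, Formula.realize_iExs]
  refine exists_congr fun w => ?_
  have : (fun a => Sum.elim v w (id a)) = Sum.elim v w := rfl
  exact (BoundedFormula.realize_iInf (v := Sum.elim v w) (v' := default)).trans Subtype.forall

theorem countable_formula [Countable β] (hL : L.card ≤ ℵ₀) :
    Countable (L.Formula β) := by
  have h := BoundedFormula.card_le (L := L) (α := β)
  have hβ : Cardinal.lift.{max u v} (#β) ≤ ℵ₀ := by
    rw [lift_le_aleph0]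
    exact Cardinal.mk_le_aleph0
  have hL' : Cardinal.lift.{_} L.card ≤ ℵ₀ := by
    rw [lift_le_aleph0]; exact hL
  have h2 : #(Σ n, L.BoundedFormula β n) ≤ ℵ₀ := by
    refine h.trans ?_
    rw [max_le_iff]
    refine ⟨le_rfl, ?_⟩
    calc Cardinal.lift.{max u v} (#β) + Cardinal.lift.{_} L.card ≤ ℵ₀ + ℵ₀ :=
          add_le_add hβ hL'
      _ = ℵ₀ := aleph0_add_aleph0
  have : Countable (Σ n, L.BoundedFormula β n) := by
    rw [← Cardinal.mk_le_aleph0_iff]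
    exact h2
  exact Function.Injective.countable
    (f := fun φ : L.Formula β => (⟨0, φ⟩ : Σ n, L.BoundedFormula β n))
    (fun φ ψ h => by simpa using h)

end Formulas

section Ultra

variable (L : FirstOrder.Language.{u, v})
variable (M : Type) [L.Structure M] [Nonempty M]

/-- The ultrapower of `M` along the hyperfilter on `ℕ`. -/
def MStar : Type :=
  (↑(Filter.hyperfilter ℕ) : Filter ℕ).Product (fun _ : ℕ => M)

noncomputable instance MStar.structure : L.Structure (MStar M) :=
  Ultraproduct.structure (L := L) (M := fun _ : ℕ => M) (u := Filter.hyperfilter ℕ)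

/-- The class of a sequence in the ultrapower. -/
noncomputable def MStar.mk (f : ℕ → M) : MStar M :=
  @Quotient.mk' _ ((↑(Filter.hyperfilter ℕ) : Filter ℕ).productSetoid (fun _ : ℕ => M)) f

instance MStar.nonempty : Nonempty (MStar M) := by
  refine Nonempty.map ?_ (inferInstance : Nonempty (∀ _ : ℕ, M))
  exact fun f => MStar.mk M f

theorem MStar.exists_rep (x : MStar M) : ∃ f : ℕ → M, MStar.mk M f = x :=
  @Quotient.exists_rep _ ((↑(Filter.hyperfilter ℕ) : Filter ℕ).productSetoid (fun _ : ℕ => M)) x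

theorem MStar.realize_formula {β : Type*} (φ : L.Formula β) (x : β → ℕ → M) :
    (φ.Realize fun i => MStar.mk M (x i)) ↔
      ∀ᶠ a : ℕ in (Filter.hyperfilter ℕ : Ultrafilter ℕ), φ.Realize fun i => x i a :=
  Ultraproduct.realize_formula_cast φ x

/-- The diagonal elementary embedding of `M` into its ultrapower. -/
noncomputable def diag : M ↪ₑ[L] MStar M where
  toFun x := MStar.mk M (fun _ => x)
  map_formula' := by
    intro n φ x
    have : ((fun y => MStar.mk M (fun _ => y)) ∘ x) =
        (fun i => MStar.mk M (fun _ => x i)) := rfl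
    rw [this, MStar.realize_formula]
    simp

theorem MStar.saturated (hL : L.card ≤ ℵ₀) {β : Type} [Fintype β] {m : ℕ}
    (t : β → MStar M) (q : Set (L.Formula (β ⊕ Fin m)))
    (hfs : ∀ Γ : Finset (L.Formula (β ⊕ Fin m)), ↑Γ ⊆ q →
      ∃ w : Fin m → MStar M, ∀ γ ∈ Γ, γ.Realize (Sum.elim t w)) :
    ∃ w : Fin m → MStar M, ∀ γ ∈ q, γ.Realize (Sum.elim t w) := by
  classical
  haveI : Countable (L.Formula (β ⊕ Fin m)) := countable_formula hL
  rcases q.eq_empty_or_nonempty with hq | hq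
  · subst hq
    exact ⟨fun _ => Classical.arbitrary _, fun γ h => absurd h (Set.notMem_empty γ)⟩
  obtain ⟨e, he⟩ := (Set.to_countable q).exists_eq_range hq
  choose pfun hpfun using fun i => MStar.exists_rep M (t i)
  set Γk : ℕ → Finset (L.Formula (β ⊕ Fin m)) :=
    fun k => (Finset.range (k + 1)).image e with hΓk
  have hΓq : ∀ k, ↑(Γk k) ⊆ q := by
    intro k γ hγ
    simp only [hΓk, Finset.coe_image, Set.mem_image, Finset.mem_coe,
      Finset.mem_range] at hγ
    obtain ⟨i, _, rfl⟩ := hγ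
    rw [he]; exact Set.mem_range_self i
  set A : ℕ → Set ℕ :=
    fun k => {j | (exform (Γk k)).Realize (M := M) fun i => pfun i j} with hA
  have hAU : ∀ k, A k ∈ (Filter.hyperfilter ℕ : Ultrafilter ℕ) := by
    intro k
    obtain ⟨w, hw⟩ := hfs (Γk k) (hΓq k)
    have : (exform (Γk k)).Realize t := realize_exform.2 ⟨w, hw⟩
    have ht : t = fun i => MStar.mk M (pfun i) := by
      funext i; exact (hpfun i).symm
    rw [ht, MStar.realize_formula] at this
    exact this
  have hmono : ∀ {k k' : ℕ}, k ≤ k' → A k' ⊆ A k := by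
    intro k k' hkk' j hj
    simp only [hA, Set.mem_setOf_eq, realize_exform] at hj ⊢
    obtain ⟨w, hw⟩ := hj
    exact ⟨w, fun γ hγ => hw γ (Finset.image_subset_image
      (Finset.range_subset_range.2 (Nat.succ_le_succ hkk')) hγ)⟩
  set P : ℕ → ℕ → Prop := fun j k => j ∈ A k with hP
  set K : ℕ → ℕ := fun j => Nat.findGreatest (P j) j with hK
  have hwM : ∀ j : ℕ, ∃ w : Fin m → M, j ∈ A (K j) →
      ∀ γ ∈ Γk (K j), γ.Realize (Sum.elim (fun i => pfun i j) w) := by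
    intro j
    by_cases h : j ∈ A (K j)
    · obtain ⟨w, hw⟩ := realize_exform.1 h
      exact ⟨w, fun _ => hw⟩
    · exact ⟨fun _ => Classical.arbitrary _, fun h' => absurd h' h⟩
  choose wM hwMs using hwM
  refine ⟨fun l => MStar.mk M (fun j => wM j l), ?_⟩
  intro γ hγ
  rw [he] at hγ
  obtain ⟨i, rfl⟩ := hγ
  have hassign : (Sum.elim t fun l => MStar.mk M (fun j => wM j l)) =
      fun s => MStar.mk M ((Sum.elim pfun (fun l j => wM j l)) s) := by
    funext s
    rcases s with i' | l
    · exact (hpfun i').symm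
    · rfl
  rw [hassign, MStar.realize_formula]
  have htail : {j : ℕ | i ≤ j} ∈ (Filter.hyperfilter ℕ : Ultrafilter ℕ) := by
    refine Filter.hyperfilter_le_cofinite ?_
    rw [Filter.mem_cofinite]
    have : {j : ℕ | i ≤ j}ᶜ = Set.Iio i := by
      ext j; simp [Set.mem_Iio, not_le]
    rw [this]
    exact Set.finite_Iio i
  have hsub : A i ∩ {j : ℕ | i ≤ j} ⊆
      {j : ℕ | (e i).Realize fun s => (Sum.elim pfun (fun l j' => wM j' l)) s j} := by
    rintro j ⟨hjA, hji⟩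
    have hKge : i ≤ K j := Nat.le_findGreatest (P := P j) hji hjA
    have hKP : P j (K j) := Nat.findGreatest_spec (P := P j) hji hjA
    have hei : e i ∈ Γk (K j) := by
      simp only [hΓk, Finset.mem_image]
      exact ⟨i, Finset.mem_range.2 (Nat.lt_succ_of_le hKge), rfl⟩
    have := hwMs j hKP (e i) hei
    have hassign2 : (Sum.elim (fun i' => pfun i' j) (wM j)) =
        fun s => (Sum.elim pfun (fun l j' => wM j' l)) s j := by
      funext s; rcases s with i' | l <;> rfl
    rw [hassign2] at this
    exact this
  exact Filter.mem_of_superset (Filter.inter_mem (hAU i) htail) hsub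

end Ultra

section Transfer

variable (L : FirstOrder.Language.{u, v})
variable (M : Type) [L.Structure M] [Countable M] [Infinite M]

include L in
theorem infinite_MStar : Infinite (MStar M) :=
  Infinite.of_injective (diag L M) (diag L M).injective

theorem mstar_equiv : MStar M ≅[L] M :=
  ((diag L M).elementarilyEquivalent).symm

variable (hcat : (ℵ₀ : Cardinal.{0}).Categorical (L.completeTheory M))
variable (hL : L.card ≤ ℵ₀)

include hcat hL in
/-- Transfer of complete types of tuples from the ultrapower down to `M`. -/
theorem transfer_type {β : Type} [Finite β] (x : β → MStar M) :
    ∃ v : β → M, ∀ φ : L.Formula β, (φ.Realize x ↔ φ.Realize v) := by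
  haveI := infinite_MStar L M
  have hrange : (Set.range x).Finite := Set.finite_range x
  obtain ⟨S, hsub, hScard⟩ :=
    exists_elementarySubstructure_card_eq L (Set.range x) (ℵ₀ : Cardinal.{0})
      le_rfl
      (by
        rw [Cardinal.lift_le]
        exact hrange.countable.le_aleph0.trans le_rfl)
      (by simpa using hL)
      (by
        rw [Cardinal.lift_le]
        exact Cardinal.aleph0_le_mk (MStar M))
  have hSalef : #(↥S) = ℵ₀ := by
    rw [← Cardinal.lift_inj.{0, 0}]
    simpa using hScard
  have hequiv : (↥S) ≅[L] M :=
    (S.elementarilyEquivalent).trans (mstar_equiv L M)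
  haveI : (↥S) ⊨ L.completeTheory M := by
    have : L.completeTheory (↥S) = L.completeTheory M := hequiv
    rw [← this]
    infer_instance
  obtain ⟨σ⟩ := hcat (Theory.ModelType.of (L.completeTheory M) (↥S))
    (Theory.ModelType.of (L.completeTheory M) M)
    (by simpa using hSalef) (by simpa using (Cardinal.mk_eq_aleph0 M))
  have F : (↥S) ≃[L] M := σ
  set x' : β → ↥S := fun i => ⟨x i, hsub (Set.mem_range_self i)⟩ with hx'
  refine ⟨fun i => F (x' i), fun φ => ?_⟩
  have h1 : φ.Realize x ↔ φ.Realize x' := by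
    have : (S.subtype ∘ x') = x := by
      funext i
      rfl
    rw [← this]
    exact S.subtype.map_formula φ x'
  have h2 : φ.Realize (F ∘ x') ↔ φ.Realize x' :=
    F.toElementaryEmbedding.map_formula φ x'
  rw [h1, ← h2]
  rfl

/-- Two tuples have the same type over a base tuple. -/
def SameOver {r m : ℕ} (t : Fin r → MStar M) (w w' : Fin m → MStar M) : Prop :=
  ∀ φ : L.Formula (Fin r ⊕ Fin m), φ.Realize (Sum.elim t w) ↔ φ.Realize (Sum.elim t w')

include hcat hL in
theorem exists_reps (r m : ℕ) (t : Fin r → MStar M) :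
    ∃ W : Set (Fin m → MStar M), W.Countable ∧
      ∀ w : Fin m → MStar M, ∃ w' ∈ W, SameOver L M t w w' := by
  classical
  set G : (Fin m → MStar M) → Set (L.Formula (Fin r ⊕ Fin m)) :=
    fun w => {φ | φ.Realize (Sum.elim t w)} with hG
  have key : ∀ w, ∃ v : (Fin r ⊕ Fin m) → M, G w = {φ | φ.Realize v} := by
    intro w
    obtain ⟨v, hv⟩ := transfer_type L M hcat hL (Sum.elim t w)
    exact ⟨v, Set.ext fun φ => hv φ⟩
  have hrange : (Set.range G).Countable := by
    have : Set.range G ⊆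
        (fun v : (Fin r ⊕ Fin m) → M => {φ : L.Formula (Fin r ⊕ Fin m) | φ.Realize v}) ''
          Set.univ := by
      rintro s ⟨w, rfl⟩
      obtain ⟨v, hv⟩ := key w
      exact ⟨v, Set.mem_univ v, hv.symm⟩
    exact (Set.countable_univ.image _).mono this
  have hchoose : ∀ s : ↥(Set.range G), ∃ w, G w = (s : Set (L.Formula (Fin r ⊕ Fin m))) := by
    rintro ⟨s, w, rfl⟩
    exact ⟨w, rfl⟩
  choose pick hpick using hchoose
  haveI : Countable ↥(Set.range G) := hrange.to_subtype
  refine ⟨Set.range pick, Set.countable_range pick, fun w => ?_⟩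
  refine ⟨pick ⟨G w, Set.mem_range_self w⟩, Set.mem_range_self _, ?_⟩
  have h : G (pick ⟨G w, Set.mem_range_self w⟩) = G w := hpick _
  intro φ
  exact (Set.ext_iff.1 h φ).symm

include hcat hL in
theorem exists_good_substructure :
    ∃ N : L.ElementarySubstructure (MStar M), Countable (↥N) ∧
      ∀ (r m : ℕ) (t : Fin r → MStar M), (∀ l, t l ∈ N) → ∀ w : Fin m → MStar M,
        ∃ w' : Fin m → MStar M, (∀ l, w' l ∈ N) ∧ SameOver L M t w w' := by
  classical
  choose W hWc hWmeet using fun (r m : ℕ) (t : Fin r → MStar M) =>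
    exists_reps L M hcat hL r m t
  set F : Set (MStar M) → Set (MStar M) := fun D =>
    D ∪ ⋃ (p : Σ r : ℕ, Σ m : ℕ, {f : Fin r → MStar M // ∀ l, f l ∈ D}),
      ⋃ (w : ↥(W p.1 p.2.1 p.2.2.1)), Set.range (w : Fin p.2.1 → MStar M) with hF
  have hFc : ∀ D : Set (MStar M), D.Countable → (F D).Countable := by
    intro D hD
    refine Set.Countable.union hD ?_
    haveI : Countable ↥D := hD.to_subtype
    haveI : ∀ r : ℕ, Countable {f : Fin r → MStar M // ∀ l, f l ∈ D} := by
      intro r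
      refine Function.Injective.countable
        (f := fun f : {f : Fin r → MStar M // ∀ l, f l ∈ D} =>
          (fun l => (⟨f.1 l, f.2 l⟩ : ↥D))) ?_
      intro f g hfg
      ext l
      exact congrArg Subtype.val (congrFun hfg l)
    refine Set.countable_iUnion fun p => ?_
    haveI : Countable ↥(W p.1 p.2.1 p.2.2.1) := (hWc _ _ _).to_subtype
    exact Set.countable_iUnion fun w => Set.countable_range _
  have hFsub : ∀ D, D ⊆ F D := fun D => Set.subset_union_left
  set D : ℕ → Set (MStar M) :=
    fun i => Nat.rec {Classical.arbitrary (MStar M)} (fun _ Dp => F Dp) i with hD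
  have hDmono : Monotone D := by
    refine monotone_nat_of_le_succ fun i => ?_
    exact hFsub (D i)
  have hDc : ∀ i, (D i).Countable := by
    intro i
    induction i with
    | zero => exact Set.countable_singleton _
    | succ i ih => exact hFc (D i) ih
  set U : Set (MStar M) := ⋃ i, D i with hU
  have hUc : U.Countable := Set.countable_iUnion hDc
  have hCL : ∀ (r m : ℕ) (t : Fin r → MStar M), (∀ l, t l ∈ U) →
      ∀ w : Fin m → MStar M, ∃ w', (∀ l, w' l ∈ U) ∧ SameOver L M t w w' := by
    intro r m t ht w
    have hstage : ∃ i, ∀ l, t l ∈ D i := by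
      have : ∀ l, ∃ i, t l ∈ D i := by
        intro l
        obtain ⟨s, ⟨i, rfl⟩, hmem⟩ := ht l
        exact ⟨i, hmem⟩
      choose idx hidx using this
      refine ⟨(Finset.univ : Finset (Fin r)).sup idx, fun l => ?_⟩
      exact hDmono (Finset.le_sup (Finset.mem_univ l)) (hidx l)
    obtain ⟨i, hti⟩ := hstage
    obtain ⟨w', hw'W, hw'same⟩ := hWmeet r m t w
    refine ⟨w', fun l => ?_, hw'same⟩
    have : w' l ∈ F (D i) := by
      refine Set.mem_union_right _ ?_
      refine Set.mem_iUnion.2 ⟨⟨r, m, ⟨t, hti⟩⟩, ?_⟩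
      exact Set.mem_iUnion.2 ⟨⟨w', hw'W⟩, Set.mem_range_self l⟩
    refine Set.mem_iUnion.2 ⟨i + 1, this⟩
  -- U is closed under functions
  have hfun : ∀ {k : ℕ} (f : L.Functions k), ClosedUnder f U := by
    intro k f x hx
    obtain ⟨w', hw'U, hsame⟩ := hCL k 1 x hx (fun _ => Structure.funMap f x)
    have hφ : (Term.equal (Term.var (Sum.inr (0 : Fin 1)))
        (Term.func f (fun l => Term.var (Sum.inl l)))).Realize
        (Sum.elim x (fun _ : Fin 1 => Structure.funMap f x)) := by
      simp [Formula.realize_equal, Term.realize]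
    rw [hsame _] at hφ
    have : w' 0 = Structure.funMap f x := by
      simpa [Formula.realize_equal, Term.realize] using hφ
    rw [← this]
    exact hw'U 0
  set S : L.Substructure (MStar M) := ⟨U, fun {k} f => hfun f⟩ with hS
  have htv : ∀ (n : ℕ) (φ : L.BoundedFormula Empty (n + 1)) (x : Fin n → ↥S) (a : MStar M),
      φ.Realize default (Fin.snoc ((↑) ∘ x) a : _ → MStar M) →
        ∃ b : ↥S, φ.Realize default (Fin.snoc ((↑) ∘ x) b : _ → MStar M) := by
    intro n φ x a ha
    set xc : Fin n → MStar M := fun l => (x l : MStar M) with hxc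
    have hxcU : ∀ l, xc l ∈ U := fun l => (x l).2
    set g : Empty ⊕ Fin (n + 1) → Fin n ⊕ Fin 1 :=
      Sum.elim Empty.elim (fun i => Fin.lastCases (Sum.inr 0) (fun j => Sum.inl j) i) with hg
    set ψ : L.Formula (Fin n ⊕ Fin 1) := (φ.toFormula).relabel g with hψ
    have helper : ∀ y : MStar M,
        ψ.Realize (Sum.elim xc (fun _ : Fin 1 => y)) ↔
          φ.Realize default (Fin.snoc xc y : _ → MStar M) := by
      intro y
      rw [hψ, Formula.realize_relabel, BoundedFormula.realize_toFormula]
      have e1 : ((Sum.elim xc (fun _ : Fin 1 => y) ∘ g) ∘ Sum.inl) =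
          (default : Empty → MStar M) := funext fun e => e.elim
      have e2 : ((Sum.elim xc (fun _ : Fin 1 => y) ∘ g) ∘ Sum.inr) =
          (Fin.snoc xc y : _ → MStar M) := by
        funext i
        refine Fin.lastCases ?_ (fun j => ?_) i
        · simp only [Function.comp_apply, hg, Sum.elim_inr, Fin.lastCases_last,
            Fin.snoc_last, Sum.elim_inr]
        · simp only [Function.comp_apply, hg, Sum.elim_inr, Fin.lastCases_castSucc,
            Fin.snoc_castSucc, Sum.elim_inl]
      rw [e1, e2]
    obtain ⟨w', hw'U, hsame⟩ := hCL n 1 xc hxcU (fun _ => a)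
    have hxceq : ((↑) ∘ x : Fin n → MStar M) = xc := rfl
    rw [hxceq] at ha ⊢
    refine ⟨⟨w' 0, hw'U 0⟩, ?_⟩
    have hcoe : ((⟨w' 0, hw'U 0⟩ : ↥S) : MStar M) = w' 0 := rfl
    rw [hcoe, ← helper (w' 0)]
    have hw : (fun _ : Fin 1 => w' 0) = w' := by
      funext l
      have : l = 0 := Subsingleton.elim l 0
      rw [this]
    rw [hw, ← hsame ψ]
    exact (helper a).2 ha
  refine ⟨S.toElementarySubstructure htv, hUc.to_subtype, fun r m t ht w => ?_⟩
  exact hCL r m t ht w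

include hcat hL in
/-- `M` is `ω`-saturated: every finitely satisfiable set of formulas over a finite
tuple of parameters in `M` is realized in `M`. -/
theorem M_saturated (β : Type) [Fintype β] (m : ℕ) (p : β → M)
    (q : Set (L.Formula (β ⊕ Fin m)))
    (hfs : ∀ Γ : Finset (L.Formula (β ⊕ Fin m)), ↑Γ ⊆ q →
      ∃ w : Fin m → M, ∀ γ ∈ Γ, γ.Realize (Sum.elim p w)) :
    ∃ w : Fin m → M, ∀ γ ∈ q, γ.Realize (Sum.elim p w) := by
  classical
  obtain ⟨N, hNc, hNclose⟩ := exists_good_substructure L M hcat hL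
  haveI : Countable ↥N := hNc
  have hNequiv : (↥N) ≅[L] M :=
    (N.elementarilyEquivalent).trans (mstar_equiv L M)
  haveI : (↥N) ⊨ L.completeTheory M := by
    have : L.completeTheory (↥N) = L.completeTheory M := hNequiv
    rw [← this]
    infer_instance
  haveI : Infinite ↥N := hNequiv.infinite_iff.2 inferInstance
  obtain ⟨σ⟩ := hcat (Theory.ModelType.of (L.completeTheory M) (↥N))
    (Theory.ModelType.of (L.completeTheory M) M)
    (by simpa using (Cardinal.mk_eq_aleph0 ↥N)) (by simpa using (Cardinal.mk_eq_aleph0 M))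
  have F : (↥N) ≃[L] M := σ
  set t : β → ↥N := fun i => F.toEquiv.symm (p i) with ht
  have hFt : ∀ i, F (t i) = p i := fun i => F.toEquiv.apply_symm_apply (p i)
  -- the type is finitely satisfiable in `MStar M` over the parameters `(↑) ∘ t`
  have hfsStar : ∀ Γ : Finset (L.Formula (β ⊕ Fin m)), ↑Γ ⊆ q →
      ∃ w : Fin m → MStar M, ∀ γ ∈ Γ, γ.Realize (Sum.elim ((↑) ∘ t) w) := by
    intro Γ hΓ
    obtain ⟨w, hw⟩ := hfs Γ hΓ
    have h1 : (exform Γ).Realize p := realize_exform.2 ⟨w, hw⟩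
    have h2 : (exform Γ).Realize t := by
      have := F.toElementaryEmbedding.map_formula (exform Γ) t
      rw [← this]
      have : (F ∘ t : β → M) = p := funext hFt
      rw [show ((F.toElementaryEmbedding : ↥N → M) ∘ t) = (F ∘ t : β → M) from rfl, this]
      exact h1
    have h3 : (exform Γ).Realize ((↑) ∘ t : β → MStar M) := by
      rw [show ((↑) ∘ t : β → MStar M) = ((N.subtype : ↥N → MStar M) ∘ t) from rfl]
      rw [N.subtype.map_formula]
      exact h2
    exact realize_exform.1 h3
  obtain ⟨wstar, hwstar⟩ := MStar.saturated L M hL ((↑) ∘ t) q hfsStar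
  -- find a tuple in `N` with the same type over the parameters
  set r : ℕ := Fintype.card β with hr
  set eβ : β ≃ Fin r := Fintype.equivFin β with heβ
  set tr : Fin r → MStar M := ((↑) ∘ t) ∘ eβ.symm with htr
  have htrN : ∀ l, tr l ∈ N := fun l => (t (eβ.symm l)).2
  obtain ⟨w', hw'N, hsame⟩ := hNclose r m tr htrN wstar
  have hq' : ∀ γ ∈ q, γ.Realize (Sum.elim ((↑) ∘ t : β → MStar M) w') := by
    intro γ hγ
    set γ' : L.Formula (Fin r ⊕ Fin m) := γ.relabel (Sum.map (eβ : β → Fin r) id) with hγ'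
    have key : ∀ w : Fin m → MStar M,
        γ'.Realize (Sum.elim tr w) ↔ γ.Realize (Sum.elim ((↑) ∘ t : β → MStar M) w) := by
      intro w
      rw [hγ', Formula.realize_relabel]
      have : (Sum.elim tr w ∘ Sum.map (eβ : β → Fin r) id) =
          Sum.elim (((↑) ∘ t : β → MStar M)) w := by
        funext s
        rcases s with i | l
        · simp [htr]
        · rfl
      rw [this]
    rw [← key w', ← hsame γ', key wstar]
    exact hwstar γ hγ
  -- bring the realization down into `N` and push it to `M` along `F`
  set w'N : Fin m → ↥N := fun l => ⟨w' l, hw'N l⟩ with hw'Ndef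
  refine ⟨fun l => F (w'N l), fun γ hγ => ?_⟩
  have h1 : γ.Realize (Sum.elim t w'N) := by
    have h2 := N.subtype.map_formula γ (Sum.elim t w'N)
    rw [← h2]
    have : ((N.subtype : ↥N → MStar M) ∘ Sum.elim t w'N) =
        Sum.elim ((↑) ∘ t : β → MStar M) w' := by
      funext s
      rcases s with i | l <;> rfl
    rw [this]
    exact hq' γ hγ
  have h3 := F.toElementaryEmbedding.map_formula γ (Sum.elim t w'N)
  rw [← h3] at h1
  have : ((F.toElementaryEmbedding : ↥N → M) ∘ Sum.elim t w'N) =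
      Sum.elim p (fun l => F (w'N l)) := by
    funext s
    rcases s with i | l
    · exact hFt i
    · rfl
  rw [← this]
  exact h1

section Move

variable (hacl : ∀ A s : Set M, A.Definable₁ L s → s.Finite → s ⊆ A)

include hcat hL hacl in
/-- Moving one coordinate of `c` off the range of `a`, preserving the full type of
the pair `(b, c)`. -/
theorem move_coordinate (n : ℕ) (a b c : Fin n → M)
    (hcinj : Function.Injective c)
    (j : Fin n) (hcjb : c j ∉ Set.range b) :
    ∃ y : M, y ∉ Set.range a ∧
      ∀ ψ : L.Formula (Fin n ⊕ Fin n),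
        ψ.Realize (Sum.elim b c) ↔ ψ.Realize (Sum.elim b (Function.update c j y)) := by
  classical
  set cjunk : Fin n → M := Function.update c j (b j) with hcjunk
  set P₂ : (Fin n ⊕ Fin n) → M := Sum.elim b cjunk with hP₂
  set P : ((Fin n ⊕ Fin n) ⊕ Fin n) → M := Sum.elim P₂ a with hP
  set emb : ((Fin n ⊕ Fin n) ⊕ Fin 1) → (((Fin n ⊕ Fin n) ⊕ Fin n) ⊕ Fin 1) :=
    Sum.map Sum.inl id with hemb
  have hPemb : ∀ y : M, (Sum.elim P (fun _ : Fin 1 => y)) ∘ emb =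
      Sum.elim P₂ (fun _ : Fin 1 => y) := by
    intro y
    funext s
    rcases s with s | l
    · rfl
    · rfl
  set ineq : Fin n → L.Formula (((Fin n ⊕ Fin n) ⊕ Fin n) ⊕ Fin 1) :=
    fun i => (Term.equal (Term.var (Sum.inr (0 : Fin 1)))
      (Term.var (Sum.inl (Sum.inr i)))).not with hineq
  have hineq_realize : ∀ (i : Fin n) (y : M),
      (ineq i).Realize (Sum.elim P (fun _ : Fin 1 => y)) ↔ y ≠ a i := by
    intro i y
    simp [hineq, hP, Formula.realize_not, Formula.realize_equal, Term.realize]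
  set qt : Set (L.Formula (((Fin n ⊕ Fin n) ⊕ Fin n) ⊕ Fin 1)) :=
    (fun δ : L.Formula ((Fin n ⊕ Fin n) ⊕ Fin 1) => δ.relabel emb) ''
      {δ | δ.Realize (Sum.elim P₂ (fun _ : Fin 1 => c j))} with hqt
  set qi : Set (L.Formula (((Fin n ⊕ Fin n) ⊕ Fin n) ⊕ Fin 1)) := Set.range ineq with hqi
  have hcj_not_mem : c j ∉ Set.range P₂ := by
    rintro ⟨s, hs⟩
    rcases s with i | k
    · exact hcjb ⟨i, hs⟩
    · by_cases hk : k = j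
      · subst hk
        rw [hP₂] at hs
        simp only [Sum.elim_inr, hcjunk, Function.update_self] at hs
        exact hcjb ⟨k, hs⟩
      · rw [hP₂] at hs
        simp only [Sum.elim_inr, hcjunk, Function.update_of_ne hk] at hs
        exact hk (hcinj hs)
  have hfs : ∀ Γ : Finset (L.Formula (((Fin n ⊕ Fin n) ⊕ Fin n) ⊕ Fin 1)), ↑Γ ⊆ qt ∪ qi →
      ∃ w : Fin 1 → M, ∀ γ ∈ Γ, γ.Realize (Sum.elim P w) := by
    intro Γ hΓ
    set Γt : Finset _ := Γ.filter (fun γ => γ ∈ qt) with hΓt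
    have hmem : ∀ γ ∈ Γt, ∃ δ : L.Formula ((Fin n ⊕ Fin n) ⊕ Fin 1),
        δ.Realize (Sum.elim P₂ (fun _ : Fin 1 => c j)) ∧ δ.relabel emb = γ := by
      intro γ hγ
      have := (Finset.mem_filter.1 hγ).2
      obtain ⟨δ, hδ1, hδ2⟩ := this
      exact ⟨δ, hδ1, hδ2⟩
    choose δf hδreal hδeq using hmem
    set Δ : Finset (L.Formula ((Fin n ⊕ Fin n) ⊕ Fin 1)) :=
      Γt.attach.image (fun x => δf x.1 x.2) with hΔ
    set D : Set M := {y | ∀ δ ∈ Δ, δ.Realize (Sum.elim P₂ (fun _ : Fin 1 => y))} with hD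
    have hcjD : c j ∈ D := by
      intro δ hδ
      simp only [hΔ, Finset.mem_image, Finset.mem_attach, true_and] at hδ
      obtain ⟨⟨γ, hγ⟩, rfl⟩ := hδ
      exact hδreal γ hγ
    have hDdef : (Set.range P₂).Definable₁ L D := by
      rw [Set.Definable₁, Set.definable_iff_exists_formula_sum]
      set gg : ((Fin n ⊕ Fin n) ⊕ Fin 1) → (↥(Set.range P₂) ⊕ Fin 1) :=
        Sum.map (fun s => (⟨P₂ s, Set.mem_range_self s⟩ : ↥(Set.range P₂))) id with hgg
      refine ⟨Formula.relabel gg (BoundedFormula.iInf (fun δ : Δ => (δ : L.Formula ((Fin n ⊕ Fin n) ⊕ Fin 1)))), ?_⟩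
      ext v
      simp only [Set.mem_setOf_eq]
      rw [Formula.realize_relabel]
      have hasg : (Sum.elim ((↑) : ↥(Set.range P₂) → M) v) ∘ gg =
          Sum.elim P₂ (fun _ : Fin 1 => v 0) := by
        funext s
        rcases s with s | l
        · rfl
        · have : l = 0 := Subsingleton.elim l 0
          rw [this]
          rfl
      rw [hasg]
      constructor
      · intro hv
        exact (BoundedFormula.realize_iInf (v := Sum.elim P₂ fun _ => v 0)
          (v' := default)).2 (fun δ => hv δ.1 δ.2)
      · intro hv δ hδ
        exact (BoundedFormula.realize_iInf (v := Sum.elim P₂ fun _ => v 0)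
          (v' := default)).1 hv ⟨δ, hδ⟩
    have hDinf : D.Infinite := by
      intro hfin
      exact hcj_not_mem (hacl (Set.range P₂) D hDdef hfin hcjD)
    obtain ⟨y, hyD, hya⟩ := (hDinf.diff (Set.finite_range a)).nonempty
    refine ⟨fun _ => y, fun γ hγ => ?_⟩
    rcases hΓ hγ with hγt | hγi
    · have hγt' : γ ∈ Γt := Finset.mem_filter.2 ⟨hγ, hγt⟩
      rw [← hδeq γ hγt', Formula.realize_relabel, hPemb]
      refine hyD (δf γ hγt') ?_
      simp only [hΔ, Finset.mem_image, Finset.mem_attach, true_and]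
      exact ⟨⟨γ, hγt'⟩, rfl⟩
    · obtain ⟨i, rfl⟩ := hγi
      rw [hineq_realize]
      intro hcontra
      exact (hya : y ∉ Set.range a) ⟨i, hcontra.symm⟩
  obtain ⟨w, hw⟩ := M_saturated L M hcat hL (((Fin n ⊕ Fin n) ⊕ Fin n)) 1 P (qt ∪ qi) hfs
  set y := w 0 with hy
  have hweq : w = fun _ : Fin 1 => y := by
    funext l
    have : l = 0 := Subsingleton.elim l 0
    rw [this]
  have hya : y ∉ Set.range a := by
    rintro ⟨i, hi⟩
    have := hw (ineq i) (Set.mem_union_right _ (Set.mem_range_self i))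
    rw [hweq, hineq_realize] at this
    exact this hi.symm
  have htype : ∀ δ : L.Formula ((Fin n ⊕ Fin n) ⊕ Fin 1),
      δ.Realize (Sum.elim P₂ (fun _ : Fin 1 => c j)) ↔
        δ.Realize (Sum.elim P₂ (fun _ : Fin 1 => y)) := by
    intro δ
    constructor
    · intro hδ
      have := hw (δ.relabel emb) (Set.mem_union_left _ ⟨δ, hδ, rfl⟩)
      rw [hweq, Formula.realize_relabel, hPemb] at this
      exact this
    · intro hδ
      by_contra hcon
      have := hw (δ.not.relabel emb) (Set.mem_union_left _ ⟨δ.not, by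
        rw [Set.mem_setOf_eq, Formula.realize_not]; exact hcon, rfl⟩)
      rw [hweq, Formula.realize_relabel, hPemb, Formula.realize_not] at this
      exact this hδ
  refine ⟨y, hya, fun ψ => ?_⟩
  set h : (Fin n ⊕ Fin n) → ((Fin n ⊕ Fin n) ⊕ Fin 1) :=
    Sum.elim (fun i => Sum.inl (Sum.inl i))
      (fun k => if k = j then Sum.inr 0 else Sum.inl (Sum.inr k)) with hh
  have hrel : ∀ z : M, (ψ.relabel h).Realize (Sum.elim P₂ (fun _ : Fin 1 => z)) ↔
      ψ.Realize (Sum.elim b (Function.update c j z)) := by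
    intro z
    rw [Formula.realize_relabel]
    have : (Sum.elim P₂ (fun _ : Fin 1 => z)) ∘ h =
        Sum.elim b (Function.update c j z) := by
      funext s
      rcases s with i | k
      · rfl
      · by_cases hk : k = j
        · subst hk
          simp [hh, hP₂, Function.update_self]
        · simp only [Function.comp_apply, hh, Sum.elim_inr, Sum.elim_inl, if_neg hk, hP₂, hcjunk, Function.update_of_ne hk]
    rw [this]
  have h1 := htype (ψ.relabel h)
  rw [hrel (c j), hrel y] at h1
  rw [Function.update_eq_self j c] at h1
  exact h1

include hcat hL in
/-- Transfer the type of the pair `(a,b)` to a pair `(b,c)`: since `a` and `b` have the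
same type, the type of `b` over `a` is finitely satisfiable over `b`, and by saturation it
is realized over `b`. -/
theorem pair_transfer (n : ℕ) (a b : Fin n → M)
    (hST : ∀ χ : L.Formula (Fin n), χ.Realize a ↔ χ.Realize b) :
    ∃ c : Fin n → M, ∀ ψ : L.Formula (Fin n ⊕ Fin n),
      ψ.Realize (Sum.elim a b) ↔ ψ.Realize (Sum.elim b c) := by
  classical
  set q : Set (L.Formula (Fin n ⊕ Fin n)) := {ψ | ψ.Realize (Sum.elim a b)} with hq
  have hfs' : ∀ Γ : Finset (L.Formula (Fin n ⊕ Fin n)), ↑Γ ⊆ q →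
      ∃ w : Fin n → M, ∀ γ ∈ Γ, γ.Realize (Sum.elim b w) := by
    intro Γ hΓ
    have h1 : (exform Γ).Realize a := realize_exform.2 ⟨b, fun γ hγ => hΓ hγ⟩
    exact realize_exform.1 ((hST _).1 h1)
  obtain ⟨c, hc⟩ := M_saturated L M hcat hL (Fin n) n b q hfs'
  refine ⟨c, fun ψ => ⟨fun h => hc ψ h, fun h => ?_⟩⟩
  by_contra hcon
  have : ψ.not ∈ q := by
    rw [hq, Set.mem_setOf_eq, Formula.realize_not]
    exact hcon
  have := hc ψ.not this
  rw [Formula.realize_not] at this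
  exact this h

include hcat hL hacl in
/-- Iterating `move_coordinate` along a list of coordinates. -/
theorem move_list (n : ℕ) (a b : Fin n → M) (hbinj : Function.Injective b) :
    ∀ (Jl : List (Fin n)), (∀ j ∈ Jl, b j ∉ Set.range a) →
    ∀ c : Fin n → M,
      (∀ ψ : L.Formula (Fin n ⊕ Fin n),
        ψ.Realize (Sum.elim a b) ↔ ψ.Realize (Sum.elim b c)) →
      ∃ c' : Fin n → M,
        (∀ ψ : L.Formula (Fin n ⊕ Fin n),
          ψ.Realize (Sum.elim a b) ↔ ψ.Realize (Sum.elim b c')) ∧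
        (∀ j ∈ Jl, c' j ∉ Set.range a) ∧ (∀ j, j ∉ Jl → c' j = c j) := by
  classical
  intro Jl
  induction Jl with
  | nil =>
    intro _ c hQ
    exact ⟨c, hQ, fun j hj => absurd hj List.not_mem_nil, fun _ _ => rfl⟩
  | cons j Jl' ih =>
    intro hJ c hQ
    -- `c` is injective since it has the same type as `b`... we only need `c j ∉ range b`.
    have hcjb : c j ∉ Set.range b := by
      rintro ⟨i, hi⟩
      have hbj := hJ j (List.mem_cons_self)
      have h1 : ¬ (Term.equal (Term.var (Sum.inr j))
          (Term.var (Sum.inl i)) : L.Formula (Fin n ⊕ Fin n)).Realize (Sum.elim a b) := by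
        rw [Formula.realize_equal]
        simp only [Term.realize, Sum.elim_inr, Sum.elim_inl]
        intro h
        exact hbj ⟨i, h.symm⟩
      rw [hQ _, Formula.realize_equal] at h1
      simp only [Term.realize, Sum.elim_inr, Sum.elim_inl] at h1
      exact h1 hi.symm
    have hcinj : Function.Injective c := by
      intro i i' hii'
      by_contra hne
      have h1 : (Term.equal (Term.var (Sum.inr i))
          (Term.var (Sum.inr i')) : L.Formula (Fin n ⊕ Fin n)).Realize (Sum.elim b c) := by
        rw [Formula.realize_equal]
        simpa [Term.realize] using hii'
      rw [← hQ _, Formula.realize_equal] at h1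
      simp only [Term.realize, Sum.elim_inr] at h1
      exact hne (hbinj h1)
    obtain ⟨y, hya, hQy⟩ := move_coordinate L M hcat hL hacl n a b c hcinj j hcjb
    set c₁ : Fin n → M := Function.update c j y with hc₁
    have hQ₁ : ∀ ψ : L.Formula (Fin n ⊕ Fin n),
        ψ.Realize (Sum.elim a b) ↔ ψ.Realize (Sum.elim b c₁) :=
      fun ψ => (hQ ψ).trans (hQy ψ)
    obtain ⟨c', hQ', hfresh', huntouched'⟩ := ih (fun j' hj' => hJ j' (List.mem_cons_of_mem j hj')) c₁ hQ₁
    refine ⟨c', hQ', fun j' hj' => ?_, fun j' hj' => ?_⟩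
    · rcases List.mem_cons.1 hj' with rfl | hj'ultra
      · by_cases hjJ : j' ∈ Jl'
        · exact hfresh' j' hjJ
        · rw [huntouched' j' hjJ, hc₁, Function.update_self]
          exact hya
      · exact hfresh' j' hj'ultra
    · have hne : j' ≠ j := fun h => hj' (h ▸ List.mem_cons_self)
      rw [huntouched' j' (fun h => hj' (List.mem_cons_of_mem j h)), hc₁,
        Function.update_of_ne hne]

end Move

end Transfer

end SatAux

/-- Lemma 5.6: if `E(a,b)` holds, the ranges of `a` and `b` intersect, and the index sets
of the intersection in `a` and in `b` differ, then there is `c ∈ X` with `E(a,c)` such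
that `rng(a) ∩ rng(c)` is a proper subset of `rng(a) ∩ rng(b)`. -/
theorem exists_smaller_intersection
    (L : FirstOrder.Language) (hL : L.card ≤ ℵ₀)
    (M : Type) [L.Structure M] [Countable M] [Infinite M]
    (hcat : (ℵ₀ : Cardinal.{0}).Categorical (L.completeTheory M))
    (hacl : ∀ A s : Set M, A.Definable₁ L s → s.Finite → s ⊆ A)
    (n : ℕ) (hn : 1 ≤ n) (a₀ : Fin n → M)
    (X : Set (Fin n → M)) (hX : X = {b | SameType L b a₀})
    (hinj : ∀ a ∈ X, Function.Injective a)
    (hstar : StarCond L M n X)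
    (E : (Fin n → M) → (Fin n → M) → Prop)
    (hdef : ∃ φ : L.Formula (Fin n ⊕ Fin n),
      ∀ a ∈ X, ∀ b ∈ X, (E a b ↔ φ.Realize (Sum.elim a b)))
    (hrefl : ∀ a ∈ X, E a a)
    (hsymm : ∀ a ∈ X, ∀ b ∈ X, E a b → E b a)
    (htrans : ∀ a ∈ X, ∀ b ∈ X, ∀ c ∈ X, E a b → E b c → E a c)
    (hnontriv₁ : ∃ a ∈ X, ∃ b ∈ X, ¬ E a b)
    (hnontriv₂ : ∃ a ∈ X, ∃ b ∈ X, a ≠ b ∧ E a b)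
    (a : Fin n → M) (ha : a ∈ X) (b : Fin n → M) (hb : b ∈ X) (hab : E a b)
    (hmeet : Set.range a ∩ Set.range b ≠ ∅)
    (hidx : {i : Fin n | a i ∈ Set.range a ∩ Set.range b} ≠
      {j : Fin n | b j ∈ Set.range a ∩ Set.range b}) :
    ∃ c ∈ X, E a c ∧ Set.range a ∩ Set.range c ⊂ Set.range a ∩ Set.range b := by
  classical
  obtain ⟨φE, hφE⟩ := hdef
  have hbinj : Function.Injective b := hinj b hb
  have hainj : Function.Injective a := hinj a ha
  have hSTab : ∀ χ : L.Formula (Fin n), χ.Realize a ↔ χ.Realize b := by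
    intro χ
    rw [hX] at ha hb
    exact (ha χ).trans ((hb χ)).symm
  obtain ⟨c₀, hQ₀⟩ := SatAux.pair_transfer L M hcat hL n a b hSTab
  set Jl : List (Fin n) := (Finset.univ.filter (fun j => b j ∉ Set.range a)).toList with hJldef
  have hJlmem : ∀ j : Fin n, j ∈ Jl ↔ b j ∉ Set.range a := by
    intro j
    rw [hJldef, Finset.mem_toList, Finset.mem_filter]
    simp
  obtain ⟨c, hQ, hfresh, -⟩ := SatAux.move_list L M hcat hL hacl n a b hbinj Jl
    (fun j hj => (hJlmem j).1 hj) c₀ hQ₀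
  -- `c` has the same type as `b`
  have hSTbc : ∀ χ : L.Formula (Fin n), χ.Realize b ↔ χ.Realize c := by
    intro χ
    have := hQ (χ.relabel Sum.inr)
    rw [Formula.realize_relabel, Formula.realize_relabel] at this
    rw [Sum.elim_comp_inr, Sum.elim_comp_inr] at this
    exact this
  have hc : c ∈ X := by
    rw [hX] at hb ⊢
    exact fun χ => ((hSTbc χ).symm).trans (hb χ)
  -- `E a c` via transitivity through `b`
  have hEbc : E b c := (hφE b hb c hc).2 ((hQ φE).1 ((hφE a ha b hb).1 hab))
  have hEac : E a c := htrans a ha b hb c hc hab hEbc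
  -- equality-pattern transfer
  have hpair : ∀ k i : Fin n, b k = a i → c k = b i := by
    intro k i hki
    have h1 : (Term.equal (Term.var (Sum.inr k))
        (Term.var (Sum.inl i)) : L.Formula (Fin n ⊕ Fin n)).Realize (Sum.elim a b) := by
      rw [Formula.realize_equal]
      simpa [Term.realize] using hki
    rw [hQ _, Formula.realize_equal] at h1
    simpa [Term.realize] using h1
  have hpair2 : ∀ i k : Fin n, a i = b k → b i = c k := by
    intro i k hik
    have h1 : (Term.equal (Term.var (Sum.inl i))
        (Term.var (Sum.inr k)) : L.Formula (Fin n ⊕ Fin n)).Realize (Sum.elim a b) := by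
      rw [Formula.realize_equal]
      simpa [Term.realize] using hik
    rw [hQ _, Formula.realize_equal] at h1
    simpa [Term.realize] using h1
  set S' : Set (Fin n) := {i | a i ∈ Set.range b} with hS'
  set T' : Set (Fin n) := {j | b j ∈ Set.range a} with hT'
  have hidx' : S' ≠ T' := by
    intro h
    apply hidx
    have e1 : {i : Fin n | a i ∈ Set.range a ∩ Set.range b} = S' := by
      ext i
      simp [hS', Set.mem_inter_iff, Set.mem_range_self]
    have e2 : {j : Fin n | b j ∈ Set.range a ∩ Set.range b} = T' := by
      ext j
      simp [hT', Set.mem_inter_iff, Set.mem_range_self]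
    rw [e1, e2, h]
  have hsub : Set.range a ∩ Set.range c ⊆ b '' (S' ∩ T') := by
    rintro x ⟨hxa, ⟨k, rfl⟩⟩
    have hk : b k ∈ Set.range a := by
      by_contra hknot
      exact (hfresh k ((hJlmem k).2 hknot)) hxa
    obtain ⟨i₀, hi₀⟩ := hk
    have hck : c k = b i₀ := hpair k i₀ hi₀.symm
    refine ⟨i₀, ⟨⟨k, hi₀.symm⟩, ?_⟩, hck.symm⟩
    rw [hT', Set.mem_setOf_eq, ← hck]
    exact hxa
  have hsup : b '' (S' ∩ T') ⊆ Set.range a ∩ Set.range c := by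
    rintro x ⟨i, ⟨hiS, hiT⟩, rfl⟩
    refine ⟨hiT, ?_⟩
    obtain ⟨k₀, hk₀⟩ := hiS
    exact ⟨k₀, (hpair2 i k₀ hk₀.symm).symm⟩
  have hIc : Set.range a ∩ Set.range c = b '' (S' ∩ T') := Set.Subset.antisymm hsub hsup
  have hIb : Set.range a ∩ Set.range b = b '' T' := by
    ext x
    constructor
    · rintro ⟨hxa, ⟨j, rfl⟩⟩
      exact ⟨j, hxa, rfl⟩
    · rintro ⟨j, hjT, rfl⟩
      exact ⟨hjT, Set.mem_range_self j⟩
  refine ⟨c, hc, hEac, ?_⟩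
  rw [hIc, hIb]
  refine ⟨Set.image_mono Set.inter_subset_right, ?_⟩
  intro heq
  have himeq : S' ∩ T' = T' :=
    Function.Injective.image_injective hbinj
      (Set.Subset.antisymm (Set.image_mono Set.inter_subset_right) heq)
  have hTS : T' ⊆ S' := by
    rw [← himeq]
    exact Set.inter_subset_left
  have haS : a '' S' = Set.range a ∩ Set.range b := by
    ext x
    constructor
    · rintro ⟨i, hiS, rfl⟩
      exact ⟨Set.mem_range_self i, hiS⟩
    · rintro ⟨⟨i, rfl⟩, hxb⟩
      exact ⟨i, hxb, rfl⟩
  have hcard : S'.ncard = T'.ncard := by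
    have h1 : (a '' S').ncard = S'.ncard := Set.ncard_image_of_injective S' hainj
    have h2 : (b '' T').ncard = T'.ncard := Set.ncard_image_of_injective T' hbinj
    rw [← h1, ← h2, haS, hIb]
  have : T' = S' := Set.eq_of_subset_of_ncard_le hTS (le_of_eq hcard) (Set.toFinite S')
  exact hidx' this.symm
end

section
/- Suppose that M is a countably infinite L-structure whose complete theory is ℵ₀-categorical and which has degenerate algebraic closure, that p implies x_i ≠ x_j for all 1 ≤ i < j ≤ n, that condition (*) holds for X, and that E is a nontrivial ∅-definable equivalence relation on X. Let k be the least cardinality of rng(ā) ∩ rng(b̄) over all pairs ā,b̄ ∈ X with E(ā,b̄), and let I ⊆ {1,…,n} with |I| = k be such that for every pair ā,b̄ ∈ X with E(ā,b̄) and |rng(ā) ∩ rng(b̄)| = k one has rng(ā) ∩ rng(b̄) = {a_i : i ∈ I} = {b_i : i ∈ I}. Then for all ā,b̄ ∈ X with E(ā,b̄) there is a permutation γ of I such that a_i = b_{γ(i)} for all i ∈ I. -/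
open FirstOrder FirstOrder.Language Cardinal

section AuxLemmas

universe u v w

variable {L : FirstOrder.Language.{u, v}} {M : Type w} [L.Structure M]

private noncomputable def finsetIInf {α β : Type*} {n : ℕ} (s : Finset β)
    (f : β → L.BoundedFormula α n) : L.BoundedFormula α n :=
  BoundedFormula.iInf (fun b : s => f b)

private noncomputable def finsetISup {α β : Type*} {n : ℕ} (s : Finset β)
    (f : β → L.BoundedFormula α n) : L.BoundedFormula α n :=
  BoundedFormula.iSup (fun b : s => f b)

private lemma realize_iInfF {α β : Type*} {s : Finset β} {f : β → L.Formula α} {v : α → M} :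
    Formula.Realize (finsetIInf s f) v ↔ ∀ b ∈ s, (f b).Realize v := by
  simp only [Formula.Realize, finsetIInf, BoundedFormula.realize_iInf, Subtype.forall]

private lemma realize_iSupF {α β : Type*} {s : Finset β} {f : β → L.Formula α} {v : α → M} :
    Formula.Realize (finsetISup s f) v ↔ ∃ b ∈ s, (f b).Realize v := by
  simp only [Formula.Realize, finsetISup, BoundedFormula.realize_iSup, Subtype.exists,
    exists_prop]

/-- "Claim C": using degenerate algebraic closure, a definable family with all
`J`-coordinates out of the parameter range has members avoiding any finite list. -/
private lemma avoidance
    (hacl : ∀ A s : Set M, A.Definable₁ L s → s.Finite → s ⊆ A)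
    {r n : ℕ} (a : Fin r → M) (J : Finset (Fin n)) (ω : L.Formula (Fin r ⊕ Fin n))
    (hfresh : ∀ c : Fin n → M, ω.Realize (Sum.elim a c) → ∀ j ∈ J, ∀ i, c j ≠ a i)
    (hne : ∃ c, ω.Realize (Sum.elim a c)) :
    ∀ F : List M, ∃ c, ω.Realize (Sum.elim a c) ∧ ∀ j ∈ J, c j ∉ F := by
  classical
  intro F
  induction F with
  | nil =>
    obtain ⟨c, hc⟩ := hne
    exact ⟨c, hc, fun j _ => List.not_mem_nil⟩
  | cons f F₀ ih =>
    obtain ⟨c₀, hc₀, hc₀F⟩ := ih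
    by_cases hfa : f ∈ Set.range a
    · refine ⟨c₀, hc₀, fun j hj => ?_⟩
      rw [List.mem_cons, not_or]
      obtain ⟨i, rfl⟩ := hfa
      exact ⟨hfresh c₀ hc₀ j hj i, hc₀F j hj⟩
    by_cases hfF : f ∈ F₀
    · refine ⟨c₀, hc₀, fun j hj => ?_⟩
      rw [List.mem_cons, not_or]
      exact ⟨fun h => hc₀F j hj (h ▸ hfF), hc₀F j hj⟩
    -- main case: `f` is not among the parameters
    by_contra hcon
    push_neg at hcon
    have hunav : ∀ c : Fin n → M,
        (ω.Realize (Sum.elim a c) ∧ ∀ j ∈ J, c j ∉ F₀) → ∃ j ∈ J, c j = f := by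
      rintro c ⟨h1, h2⟩
      obtain ⟨j, hj, hjf⟩ := hcon c h1
      rw [List.mem_cons] at hjf
      exact ⟨j, hj, hjf.resolve_right fun hh => h2 j hj hh⟩
    -- the formula defining the `F₀`-avoiding members of the family
    obtain ⟨ξ, hξ⟩ : ∃ ξ : L.Formula ((Fin r ⊕ Fin (F₀.length)) ⊕ Fin n),
        ∀ c : Fin n → M, ξ.Realize (Sum.elim (Sum.elim a F₀.get) c) ↔
          (ω.Realize (Sum.elim a c) ∧ ∀ j ∈ J, c j ∉ F₀) := by
      refine ⟨ω.relabel (Sum.map Sum.inl id) ⊓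
        finsetIInf J (fun j => finsetIInf Finset.univ
          (fun l : Fin F₀.length => (Term.equal (Term.var (Sum.inr j))
            (Term.var (Sum.inl (Sum.inr l)))).not)), ?_⟩
      intro c
      rw [Formula.realize_inf, Formula.realize_relabel]
      have hco : (Sum.elim (Sum.elim a F₀.get) c) ∘ (Sum.map Sum.inl id) = Sum.elim a c := by
        funext pp; cases pp <;> rfl
      rw [hco, realize_iInfF]
      apply and_congr Iff.rfl
      apply forall_congr'; intro j; apply imp_congr_right; intro _
      rw [realize_iInfF]
      constructor
      · intro h hmem
        obtain ⟨l, hl⟩ := List.mem_iff_get.1 hmem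
        have h2 := h l (Finset.mem_univ l)
        rw [Formula.realize_not, Formula.realize_equal] at h2
        exact h2 hl.symm
      · intro h l _
        rw [Formula.realize_not, Formula.realize_equal]
        intro heq
        exact h (List.mem_iff_get.2 ⟨l, heq.symm⟩)
    -- the formula defining the set of "unavoidable" elements
    obtain ⟨ζ, hζ⟩ : ∃ ζ : L.Formula ((Fin r ⊕ Fin (F₀.length)) ⊕ Fin 1),
        ∀ x : M, ζ.Realize (Sum.elim (Sum.elim a F₀.get) (fun _ : Fin 1 => x)) ↔
          ((∃ c, ξ.Realize (Sum.elim (Sum.elim a F₀.get) c)) ∧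
            ∀ c, ξ.Realize (Sum.elim (Sum.elim a F₀.get) c) → ∃ j ∈ J, c j = x) := by
      refine ⟨(Formula.iExs (Fin n) (ξ.relabel (Sum.map Sum.inl id))) ⊓
              (Formula.iAlls (Fin n) ((ξ.relabel (Sum.map Sum.inl id)).imp
                 (finsetISup J (fun j => Term.equal (Term.var (Sum.inr j))
                   (Term.var (Sum.inl (Sum.inr (0 : Fin 1)))))))), ?_⟩
      intro x
      rw [Formula.realize_inf, Formula.realize_iExs, Formula.realize_iAlls]
      have key : ∀ ys : Fin n → M,
          (Formula.Realize (ξ.relabel (Sum.map Sum.inl id))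
            (fun pp => Sum.elim (Sum.elim (Sum.elim a F₀.get) (fun _ : Fin 1 => x)) ys (id pp))) ↔
          ξ.Realize (Sum.elim (Sum.elim a F₀.get) ys) := by
        intro ys
        rw [Formula.realize_relabel]
        have henv : (fun pp => Sum.elim (Sum.elim (Sum.elim a F₀.get) (fun _ : Fin 1 => x)) ys
            (id pp)) ∘ (Sum.map Sum.inl id) = Sum.elim (Sum.elim a F₀.get) ys := by
          funext pp; cases pp <;> rfl
        rw [henv]
      constructor
      · rintro ⟨⟨ys, hys⟩, hall⟩
        refine ⟨⟨ys, (key ys).1 hys⟩, ?_⟩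
        intro c hc
        have h2 := hall c
        rw [Formula.realize_imp] at h2
        have h3 := h2 ((key c).2 hc)
        rw [realize_iSupF] at h3
        obtain ⟨j, hj, hjr⟩ := h3
        rw [Formula.realize_equal] at hjr
        exact ⟨j, hj, hjr⟩
      · rintro ⟨⟨c0, hc0⟩, hall⟩
        refine ⟨⟨c0, (key c0).2 hc0⟩, ?_⟩
        intro ys
        rw [Formula.realize_imp]
        intro hys
        rw [realize_iSupF]
        obtain ⟨j, hj, hjx⟩ := hall ys ((key ys).1 hys)
        refine ⟨j, hj, ?_⟩
        rw [Formula.realize_equal]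
        exact hjx
    -- the unavoidable set
    have hsdef : (Set.range a ∪ {x | x ∈ F₀}).Definable₁ L
        {x : M | ζ.Realize (Sum.elim (Sum.elim a F₀.get) (fun _ : Fin 1 => x))} := by
      have hqA : ∀ p : Fin r ⊕ Fin F₀.length,
          Sum.elim a F₀.get p ∈ (Set.range a ∪ {x | x ∈ F₀}) := by
        rintro (i | l)
        · exact Or.inl ⟨i, rfl⟩
        · exact Or.inr (List.mem_iff_get.2 ⟨l, rfl⟩)
      show (Set.range a ∪ {x | x ∈ F₀}).Definable L
        {x : Fin 1 → M |
          x 0 ∈ {x : M | ζ.Realize (Sum.elim (Sum.elim a F₀.get) (fun _ : Fin 1 => x))}}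
      rw [Set.definable_iff_exists_formula_sum]
      refine ⟨ζ.relabel (Sum.map
        (fun p => (⟨Sum.elim a F₀.get p, hqA p⟩ : ↥(Set.range a ∪ {x | x ∈ F₀}))) id), ?_⟩
      ext x
      rw [Set.mem_setOf_eq, Set.mem_setOf_eq, Set.mem_setOf_eq, Formula.realize_relabel]
      have henv : (Sum.elim (Subtype.val :
            (Set.range a ∪ {x | x ∈ F₀} : Set M) → M) x) ∘ (Sum.map
            (fun p => (⟨Sum.elim a F₀.get p, hqA p⟩ : ↥(Set.range a ∪ {x | x ∈ F₀}))) id) =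
          Sum.elim (Sum.elim a F₀.get) x := by
        funext pp; cases pp <;> rfl
      rw [henv]
      have hx : (fun _ : Fin 1 => x 0) = x := by
        funext i
        exact congrArg x (Subsingleton.elim 0 i)
      rw [hx]
    have hsfin : Set.Finite
        {x : M | ζ.Realize (Sum.elim (Sum.elim a F₀.get) (fun _ : Fin 1 => x))} := by
      apply Set.Finite.subset (Set.finite_range c₀)
      intro x hx
      rw [Set.mem_setOf_eq, hζ] at hx
      obtain ⟨-, h2⟩ := hx
      obtain ⟨j, -, hj2⟩ := h2 c₀ ((hξ c₀).2 ⟨hc₀, hc₀F⟩)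
      exact ⟨j, hj2⟩
    have hfs : f ∈ {x : M | ζ.Realize (Sum.elim (Sum.elim a F₀.get) (fun _ : Fin 1 => x))} := by
      rw [Set.mem_setOf_eq, hζ]
      refine ⟨⟨c₀, (hξ c₀).2 ⟨hc₀, hc₀F⟩⟩, ?_⟩
      intro c hcW
      exact hunav c ((hξ c).1 hcW)
    rcases hacl _ _ hsdef hsfin hfs with h | h
    · exact hfa h
    · exact hfF h

/-- Realize all formula-sentences of a satisfiable theory (extending the complete diagram-free
theory of `M`) inside `M` itself, using `ℵ₀`-categoricity. -/
private lemma transfer_model {M : Type} [L.Structure M] [Countable M] [Infinite M]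
    (hL : L.card ≤ ℵ₀)
    (hcat : (ℵ₀ : Cardinal.{0}).Categorical (L.completeTheory M))
    (α : Type) [Countable α] (T' : (L[[α]]).Theory)
    (hsub : (L.lhomWithConstants α).onTheory (L.completeTheory M) ⊆ T')
    (hsat : T'.IsSatisfiable) :
    ∃ w : α → M, ∀ χ : L.Formula α, Formula.equivSentence χ ∈ T' → χ.Realize w := by
  classical
  have hinf0 : Infinite hsat.some := by
    letI : L.Structure hsat.some := (L.lhomWithConstants α).reduct hsat.some
    haveI : (L.lhomWithConstants α).IsExpansionOn (hsat.some : Type _) :=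
      LHom.isExpansionOn_reduct (L.lhomWithConstants α) _
    rw [Cardinal.infinite_iff, Cardinal.aleph0_le]
    intro r
    have hmem : (L.lhomWithConstants α).onSentence (Sentence.cardGe L r) ∈ T' :=
      hsub (Set.mem_image_of_mem _ (mem_completeTheory.2 ((Sentence.realize_cardGe L r).2
        ((Cardinal.nat_lt_aleph0 r).le.trans (Cardinal.infinite_iff.1 inferInstance)))))
    have h2 : hsat.some ⊨ (L.lhomWithConstants α).onSentence (Sentence.cardGe L r) :=
      Theory.realize_sentence_of_mem T' hmem
    rw [LHom.realize_onSentence] at h2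
    exact (Sentence.realize_cardGe L r).1 h2
  have hcard : Cardinal.lift.{0} (L[[α]]).card ≤
      Cardinal.lift.{max u v} (ℵ₀ : Cardinal.{0}) := by
    rw [Cardinal.lift_aleph0, Cardinal.lift_uzero, card_withConstants]
    refine le_trans (add_le_add ?_ ?_) Cardinal.aleph0_add_aleph0.le
    · rw [Cardinal.lift_uzero]; exact hL
    · exact le_trans (Cardinal.lift_le.2 Cardinal.mk_le_aleph0) Cardinal.lift_aleph0.le
  obtain ⟨N, hNcard⟩ := Theory.exists_model_card_eq ⟨hsat.some, hinf0⟩ ℵ₀ le_rfl hcard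
  letI : L.Structure N := (L.lhomWithConstants α).reduct N
  haveI : (L.lhomWithConstants α).IsExpansionOn (N : Type _) :=
    LHom.isExpansionOn_reduct (L.lhomWithConstants α) _
  haveI hNmodC : (N : Type _) ⊨ L.completeTheory M :=
    ((L.lhomWithConstants α).onTheory_model (L.completeTheory M)).1
      (Theory.Model.mono N.is_model hsub)
  haveI : Nonempty N := Cardinal.mk_ne_zero_iff.1 (by rw [hNcard]; exact Cardinal.aleph0_ne_zero)
  obtain ⟨j0⟩ := hcat (Theory.ModelType.of (L.completeTheory M) N)
    (Theory.ModelType.of (L.completeTheory M) M) hNcard (Cardinal.mk_eq_aleph0 M)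
  have j : (N : Type _) ≃[L] M := j0
  refine ⟨fun i => j ((L.con i : (L[[α]]).Constants) : N), ?_⟩
  intro χ hχ
  have h1 : (Formula.equivSentence χ).Realize N := Theory.realize_sentence_of_mem T' hχ
  rw [Formula.realize_equivSentence] at h1
  have h2 := (StrongHomClass.realize_formula j χ
    (v := fun i => ((L.con i : (L[[α]]).Constants) : N))).2 h1
  have h3 : (⇑j ∘ fun i => ((L.con i : (L[[α]]).Constants) : N)) =
      fun i => j ((L.con i : (L[[α]]).Constants) : N) := rfl
  rwa [h3] at h2

end AuxLemmas

/-- Lemma 5.8: with `k` and `I` as in Lemma 5.7, whenever `a,b ∈ X` and `E(a,b)` there is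
a permutation `γ` of `I` such that `a i = b (γ i)` for all `i ∈ I`. -/
theorem E_implies_permutation
    (L : FirstOrder.Language) (hL : L.card ≤ ℵ₀)
    (M : Type) [L.Structure M] [Countable M] [Infinite M]
    (hcat : (ℵ₀ : Cardinal.{0}).Categorical (L.completeTheory M))
    (hacl : ∀ A s : Set M, A.Definable₁ L s → s.Finite → s ⊆ A)
    (n : ℕ) (hn : 1 ≤ n) (a₀ : Fin n → M)
    (X : Set (Fin n → M)) (hX : X = {b | SameType L b a₀})
    (hinj : ∀ a ∈ X, Function.Injective a)
    (hstar : StarCond L M n X)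
    (E : (Fin n → M) → (Fin n → M) → Prop)
    (hdef : ∃ φ : L.Formula (Fin n ⊕ Fin n),
      ∀ a ∈ X, ∀ b ∈ X, (E a b ↔ φ.Realize (Sum.elim a b)))
    (hrefl : ∀ a ∈ X, E a a)
    (hsymm : ∀ a ∈ X, ∀ b ∈ X, E a b → E b a)
    (htrans : ∀ a ∈ X, ∀ b ∈ X, ∀ c ∈ X, E a b → E b c → E a c)
    (hnontriv₁ : ∃ a ∈ X, ∃ b ∈ X, ¬ E a b)
    (hnontriv₂ : ∃ a ∈ X, ∃ b ∈ X, a ≠ b ∧ E a b)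
    (k : ℕ)
    (hk : IsLeast {m : ℕ | ∃ a ∈ X, ∃ b ∈ X, E a b ∧ (Set.range a ∩ Set.range b).ncard = m} k)
    (I : Finset (Fin n)) (hIcard : I.card = k)
    (hI : ∀ a ∈ X, ∀ b ∈ X, E a b → (Set.range a ∩ Set.range b).ncard = k →
      (Set.range a ∩ Set.range b = a '' ↑I ∧ Set.range a ∩ Set.range b = b '' ↑I))
    :
    ∀ a ∈ X, ∀ b ∈ X, E a b →
      ∃ γ : Equiv.Perm {i // i ∈ I}, ∀ i : {i // i ∈ I}, a ↑i = b ↑(γ i) := by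
  classical
  obtain ⟨φE, hφE⟩ := hdef
  intro a ha b hb hEab
  have hainj := hinj a ha
  have hbinj := hinj b hb
  -- reduce the goal to finding a suitable map `p`
  suffices hmain : ∃ p : Fin n → Fin n, (∀ i ∈ I, p i ∈ I) ∧ ∀ i ∈ I, a i = b (p i) by
    obtain ⟨p, hpI, hpe⟩ := hmain
    have hginj : Function.Injective
        (fun i : {i // i ∈ I} => (⟨p i.1, hpI i.1 i.2⟩ : {i // i ∈ I})) := by
      intro i j hij
      have h1 : p i.1 = p j.1 := congrArg Subtype.val hij
      have h2 : a i.1 = a j.1 := by rw [hpe i.1 i.2, hpe j.1 j.2, h1]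
      exact Subtype.ext (hainj h2)
    refine ⟨Equiv.ofBijective _ ((Finite.injective_iff_bijective).1 hginj), ?_⟩
    intro i
    exact hpe i.1 i.2
  -- basic facts about `X`
  have hXst : ∀ x : Fin n → M, x ∈ X ↔ SameType L x a₀ := by
    intro x; rw [hX]; exact Iff.rfl
  have hST : ∀ x, x ∈ X → ∀ ψ : L.Formula (Fin n), (ψ.Realize x ↔ ψ.Realize a₀) :=
    fun x hx => (hXst x).1 hx
  -- a minimal pair
  obtain ⟨u, hu, v, hv, hEuv, hcuv⟩ := hk.1
  obtain ⟨huvI, hvuI⟩ := hI u hu v hv hEuv hcuv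
  have hvinj := hinj v hv
  -- the permutation pattern of the minimal pair
  obtain ⟨π, hπ⟩ : ∃ π : Fin n → Fin n, ∀ i ∈ I, π i ∈ I ∧ v i = u (π i) := by
    have hπex : ∀ i ∈ I, ∃ j, j ∈ I ∧ v i = u j := by
      intro i hi
      have h1 : v i ∈ Set.range u ∩ Set.range v := by
        rw [hvuI]
        exact ⟨i, Finset.mem_coe.2 hi, rfl⟩
      rw [huvI] at h1
      obtain ⟨j, hj, hji⟩ := h1
      exact ⟨j, Finset.mem_coe.1 hj, hji.symm⟩
    choose pf h1 h2 using hπex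
    refine ⟨fun i => if hi : i ∈ I then pf i hi else i, fun i hi => ?_⟩
    simp only [dif_pos hi]
    exact ⟨h1 i hi, h2 i hi⟩
  -- the pattern formula θ
  obtain ⟨θ, hθreal⟩ : ∃ θ : L.Formula (Fin n ⊕ Fin n), ∀ x y : Fin n → M,
      (θ.Realize (Sum.elim x y) ↔
        ((∀ i ∈ I, y i = x (π i)) ∧ ∀ j, j ∉ I → ∀ l, y j ≠ x l)) := by
    refine ⟨(finsetIInf I (fun i => Term.equal (Term.var (Sum.inr i))
        (Term.var (Sum.inl (π i))))) ⊓
      (finsetIInf Iᶜ (fun j => finsetIInf (Finset.univ : Finset (Fin n))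
        (fun l => (Term.equal (Term.var (Sum.inr j)) (Term.var (Sum.inl l))).not))), ?_⟩
    intro x y
    rw [Formula.realize_inf, realize_iInfF, realize_iInfF]
    apply and_congr
    · apply forall_congr'; intro i; apply imp_congr_right; intro _
      rw [Formula.realize_equal]
      exact Iff.rfl
    · constructor
      · intro h j hj l
        have h2 := h j (Finset.mem_compl.2 hj)
        rw [realize_iInfF] at h2
        have h3 := h2 l (Finset.mem_univ l)
        rw [Formula.realize_not, Formula.realize_equal] at h3
        exact h3
      · intro h j hj
        rw [realize_iInfF]
        intro l _
        rw [Formula.realize_not, Formula.realize_equal]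
        exact h j (Finset.mem_compl.1 hj) l
  have hθuv : θ.Realize (Sum.elim u v) := by
    rw [hθreal]
    refine ⟨fun i hi => (hπ i hi).2, ?_⟩
    intro j hj l heq
    have hmem : v j ∈ Set.range u ∩ Set.range v := ⟨⟨l, heq.symm⟩, ⟨j, rfl⟩⟩
    rw [hvuI] at hmem
    obtain ⟨i, hiI, hiv⟩ := hmem
    exact hj (by rwa [hvinj hiv] at hiI)
  have hφuv : φE.Realize (Sum.elim u v) := (hφE u hu v hv).1 hEuv
  -- the big formula for the witness tuple
  obtain ⟨DF, hDFreal⟩ : ∃ DF : L.Formula ((Fin n ⊕ Fin n) ⊕ Fin n),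
      ∀ x y z : Fin n → M, (DF.Realize (Sum.elim (Sum.elim x y) z) ↔
        ((φE.Realize (Sum.elim x z) ∧ θ.Realize (Sum.elim x z)) ∧
          ∀ j, j ∉ I → ∀ l, z j ≠ y l)) := by
    refine ⟨(φE.relabel (Sum.elim (Sum.inl ∘ Sum.inl) Sum.inr) ⊓
        θ.relabel (Sum.elim (Sum.inl ∘ Sum.inl) Sum.inr)) ⊓
      (finsetIInf Iᶜ (fun j => finsetIInf (Finset.univ : Finset (Fin n))
        (fun l => (Term.equal (Term.var (Sum.inr j))
          (Term.var (Sum.inl (Sum.inr l)))).not))), ?_⟩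
    intro x y z
    have hco : (Sum.elim (Sum.elim x y) z) ∘ (Sum.elim (Sum.inl ∘ Sum.inl) Sum.inr) =
        Sum.elim x z := by
      funext pp; cases pp <;> rfl
    rw [Formula.realize_inf, Formula.realize_inf, Formula.realize_relabel,
      Formula.realize_relabel, hco, realize_iInfF]
    apply and_congr Iff.rfl
    constructor
    · intro h j hj l
      have h2 := h j (Finset.mem_compl.2 hj)
      rw [realize_iInfF] at h2
      have h3 := h2 l (Finset.mem_univ l)
      rw [Formula.realize_not, Formula.realize_equal] at h3
      exact h3
    · intro h j hj
      rw [realize_iInfF]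
      intro l _
      rw [Formula.realize_not, Formula.realize_equal]
      exact h j (Finset.mem_compl.1 hj) l
  -- the theory
  set T' : (L[[(Fin n ⊕ Fin n) ⊕ Fin n]]).Theory :=
    (L.lhomWithConstants ((Fin n ⊕ Fin n) ⊕ Fin n)).onTheory (L.completeTheory M)
    ∪ (fun ψ : L.Formula (Fin n ⊕ Fin n) =>
        Formula.equivSentence (ψ.relabel Sum.inl)) '' {ψ | ψ.Realize (Sum.elim a b)}
    ∪ (fun ψ : L.Formula (Fin n) =>
        Formula.equivSentence (ψ.relabel Sum.inr)) '' {ψ | ψ.Realize a₀}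
    ∪ {Formula.equivSentence DF} with hT'
  -- finite satisfiability
  have hsat : T'.IsSatisfiable := by
    rw [Theory.isSatisfiable_iff_isFinitelySatisfiable]
    intro T₀ hT₀
    -- extract the finitely many type formulas mentioned
    have hchoice : ∀ σ : {σ // σ ∈ T₀.filter (fun σ =>
        σ ∈ (fun ψ : L.Formula (Fin n) =>
          Formula.equivSentence (ψ.relabel Sum.inr)) '' {ψ | ψ.Realize a₀})},
        ∃ ψ : L.Formula (Fin n), ψ.Realize a₀ ∧
          Formula.equivSentence (ψ.relabel Sum.inr) = σ.1 := by
      rintro ⟨σ, hσ⟩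
      obtain ⟨ψ, hψ1, hψ2⟩ := (Finset.mem_filter.1 hσ).2
      exact ⟨ψ, hψ1, hψ2⟩
    set Δ : Finset (L.Formula (Fin n)) :=
      (T₀.filter (fun σ => σ ∈ (fun ψ : L.Formula (Fin n) =>
        Formula.equivSentence (ψ.relabel Sum.inr)) '' {ψ | ψ.Realize a₀})).attach.image
        (fun σ => (hchoice σ).choose) with hΔ
    have hΔreal : ∀ ψ ∈ Δ, ψ.Realize a₀ := by
      intro ψ hψ
      rw [hΔ] at hψ
      obtain ⟨σ, -, rfl⟩ := Finset.mem_image.1 hψ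
      exact (hchoice σ).choose_spec.1
    -- the witness formula
    obtain ⟨ωf, hωreal⟩ : ∃ ωf : L.Formula (Fin n ⊕ Fin n), ∀ x y : Fin n → M,
        (ωf.Realize (Sum.elim x y) ↔
          ((φE.Realize (Sum.elim x y) ∧ θ.Realize (Sum.elim x y)) ∧
            ∀ ψ ∈ Δ, ψ.Realize y)) := by
      refine ⟨(φE ⊓ θ) ⊓ (finsetIInf Δ
        (fun ψ => Formula.relabel Sum.inr ψ)), ?_⟩
      intro x y
      rw [Formula.realize_inf, Formula.realize_inf, realize_iInfF]
      apply and_congr Iff.rfl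
      apply forall_congr'; intro ψ; apply imp_congr_right; intro _
      rw [Formula.realize_relabel, Sum.elim_comp_inr]
    -- the witness formula is realized over `a`
    have hΞ : ∃ c, ωf.Realize (Sum.elim a c) := by
      have hΞu : (Formula.iExs (Fin n) ωf).Realize u := by
        rw [Formula.realize_iExs]
        refine ⟨v, ?_⟩
        have h1 : (fun pp => Sum.elim u v (id pp)) = Sum.elim u v := by
          funext pp; cases pp <;> rfl
        rw [hωreal]
        exact ⟨⟨hφuv, hθuv⟩, fun ψ hψ => (hST v hv ψ).2 (hΔreal ψ hψ)⟩
      have hΞa : (Formula.iExs (Fin n) ωf).Realize a := by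
        rw [(hST a ha _), ← (hST u hu _)]
        exact hΞu
      rw [Formula.realize_iExs] at hΞa
      obtain ⟨c, hc⟩ := hΞa
      refine ⟨c, ?_⟩
      have h1 : (fun pp => Sum.elim a c (id pp)) = Sum.elim a c := by
        funext pp; cases pp <;> rfl
      exact hc
    -- freshness of the witnesses
    have hfr : ∀ c, ωf.Realize (Sum.elim a c) → ∀ j ∈ Iᶜ, ∀ i, c j ≠ a i := by
      intro c hc j hj i
      have h1 := ((hωreal a c).1 hc).1.2
      rw [hθreal] at h1
      exact h1.2 j (Finset.mem_compl.1 hj) i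
    obtain ⟨c, hcω, hcF⟩ := avoidance hacl a Iᶜ ωf hfr hΞ (List.ofFn b)
    -- build the model `M` with constants
    letI : (constantsOn ((Fin n ⊕ Fin n) ⊕ Fin n)).Structure M :=
      constantsOn.structure (Sum.elim (Sum.elim a b) c)
    have hsent : ∀ χ : L.Formula ((Fin n ⊕ Fin n) ⊕ Fin n),
        (Formula.equivSentence χ).Realize M ↔ χ.Realize (Sum.elim (Sum.elim a b) c) := by
      intro χ
      rw [Formula.realize_equivSentence]
      exact iff_of_eq (congrArg χ.Realize (funext (fun i => rfl)))
    haveI : M ⊨ (T₀ : (L[[(Fin n ⊕ Fin n) ⊕ Fin n]]).Theory) := by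
      rw [Theory.model_iff]
      intro σ hσ
      have hσT' := hT₀ hσ
      rw [hT'] at hσT'
      rcases hσT' with ((h1 | h2) | h3) | h4
      · obtain ⟨ψ₀, hψ₀, rfl⟩ := h1
        rw [LHom.realize_onSentence]
        exact (L.completeTheory M).realize_sentence_of_mem hψ₀
      · obtain ⟨ψ, hψ, rfl⟩ := h2
        show (Formula.equivSentence (ψ.relabel Sum.inl)).Realize M
        rw [hsent, Formula.realize_relabel, Sum.elim_comp_inl]
        exact hψ
      · have hmemf : σ ∈ T₀.filter (fun σ => σ ∈ (fun ψ : L.Formula (Fin n) =>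
            Formula.equivSentence (ψ.relabel Sum.inr)) '' {ψ | ψ.Realize a₀}) :=
          Finset.mem_filter.2 ⟨hσ, h3⟩
        have hψΔ : (hchoice ⟨σ, hmemf⟩).choose ∈ Δ := by
          rw [hΔ]
          exact Finset.mem_image.2 ⟨⟨σ, hmemf⟩, Finset.mem_attach _ _, rfl⟩
        have heq : Formula.equivSentence
            (((hchoice ⟨σ, hmemf⟩).choose).relabel Sum.inr) = σ :=
          (hchoice ⟨σ, hmemf⟩).choose_spec.2
        rw [← heq]
        show (Formula.equivSentence
          (((hchoice ⟨σ, hmemf⟩).choose).relabel Sum.inr)).Realize M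
        rw [hsent, Formula.realize_relabel, Sum.elim_comp_inr]
        exact ((hωreal a c).1 hcω).2 _ hψΔ
      · rw [Set.mem_singleton_iff] at h4
        subst h4
        show (Formula.equivSentence DF).Realize M
        rw [hsent, hDFreal]
        refine ⟨((hωreal a c).1 hcω).1, ?_⟩
        intro j hj l heq
        have hmem : c j ∈ List.ofFn b := by
          rw [heq]
          exact (List.mem_ofFn (f := b)).2 ⟨l, rfl⟩
        exact hcF j (Finset.mem_compl.2 hj) hmem
    exact Theory.Model.isSatisfiable M
  -- use categoricity to pull a realization back into `M`
  obtain ⟨wX, hwX⟩ := transfer_model hL hcat ((Fin n ⊕ Fin n) ⊕ Fin n) T'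
    (by
      rw [hT']
      intro σ hσ
      exact Or.inl (Or.inl (Or.inl hσ))) hsat
  obtain ⟨a₁, b₁, d₁, hwdec⟩ : ∃ a₁ b₁ d₁ : Fin n → M,
      wX = Sum.elim (Sum.elim a₁ b₁) d₁ := by
    refine ⟨fun i => wX (Sum.inl (Sum.inl i)), fun i => wX (Sum.inl (Sum.inr i)),
      fun i => wX (Sum.inr i), ?_⟩
    funext pp
    rcases pp with (i | i) | i <;> rfl
  rw [hwdec] at hwX
  -- transfer of the pair type
  have hpairT : ∀ ψ : L.Formula (Fin n ⊕ Fin n),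
      ψ.Realize (Sum.elim a b) → ψ.Realize (Sum.elim a₁ b₁) := by
    intro ψ hψ
    have hmem : Formula.equivSentence (ψ.relabel Sum.inl) ∈ T' := by
      rw [hT']
      exact Or.inl (Or.inl (Or.inr (Set.mem_image_of_mem _ hψ)))
    have h1 := hwX (ψ.relabel Sum.inl) hmem
    rwa [Formula.realize_relabel, Sum.elim_comp_inl] at h1
  have hpairST : ∀ ψ : L.Formula (Fin n ⊕ Fin n),
      (ψ.Realize (Sum.elim a b) ↔ ψ.Realize (Sum.elim a₁ b₁)) := by
    intro ψ
    constructor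
    · exact hpairT ψ
    · intro h2
      by_contra h3
      exact Formula.realize_not.1 (hpairT ψ.not (Formula.realize_not.2 h3)) h2
  -- transfer of the base type
  have hbaseT : ∀ ψ : L.Formula (Fin n), ψ.Realize a₀ → ψ.Realize d₁ := by
    intro ψ hψ
    have hmem : Formula.equivSentence (ψ.relabel Sum.inr) ∈ T' := by
      rw [hT']
      exact Or.inl (Or.inr (Set.mem_image_of_mem _ hψ))
    have h1 := hwX (ψ.relabel Sum.inr) hmem
    rwa [Formula.realize_relabel, Sum.elim_comp_inr] at h1
  have hd₁X : d₁ ∈ X := by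
    rw [hXst]
    intro ψ
    constructor
    · intro h
      by_contra h3
      exact Formula.realize_not.1 (hbaseT ψ.not (Formula.realize_not.2 h3)) h
    · exact hbaseT ψ
  -- the witness properties
  have hDFr : DF.Realize (Sum.elim (Sum.elim a₁ b₁) d₁) := by
    have hmem : Formula.equivSentence DF ∈ T' := by
      rw [hT']
      exact Or.inr rfl
    exact hwX DF hmem
  rw [hDFreal] at hDFr
  obtain ⟨⟨hφad, hθad⟩, hfreshbd⟩ := hDFr
  rw [hθreal] at hθad
  -- memberships in X
  have ha₁X : a₁ ∈ X := by
    rw [hXst]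
    intro ψ
    have h1 := hpairST (ψ.relabel Sum.inl)
    rw [Formula.realize_relabel, Formula.realize_relabel, Sum.elim_comp_inl,
      Sum.elim_comp_inl] at h1
    exact h1.symm.trans (hST a ha ψ)
  have hb₁X : b₁ ∈ X := by
    rw [hXst]
    intro ψ
    have h1 := hpairST (ψ.relabel Sum.inr)
    rw [Formula.realize_relabel, Formula.realize_relabel, Sum.elim_comp_inr,
      Sum.elim_comp_inr] at h1
    exact h1.symm.trans (hST b hb ψ)
  -- E-relations
  have hEab₁ : E a₁ b₁ := (hφE a₁ ha₁X b₁ hb₁X).2 (hpairT φE ((hφE a ha b hb).1 hEab))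
  have hEad₁ : E a₁ d₁ := (hφE a₁ ha₁X d₁ hd₁X).2 hφad
  have hEdb₁ : E d₁ b₁ :=
    htrans d₁ hd₁X a₁ ha₁X b₁ hb₁X (hsymm a₁ ha₁X d₁ hd₁X hEad₁) hEab₁
  have hd₁inj := hinj d₁ hd₁X
  -- range computations
  have hcard_im : (d₁ '' ↑I).ncard = k := by
    rw [Set.ncard_image_of_injective _ hd₁inj, Set.ncard_coe_finset, hIcard]
  have hSad : Set.range a₁ ∩ Set.range d₁ = d₁ '' ↑I := by
    apply Set.Subset.antisymm
    · rintro x ⟨⟨l, hl⟩, ⟨j, hj⟩⟩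
      by_cases hjI : j ∈ I
      · exact ⟨j, Finset.mem_coe.2 hjI, hj⟩
      · exact absurd (hj.trans hl.symm) (hθad.2 j hjI l)
    · rintro x ⟨i, hiI, rfl⟩
      exact ⟨⟨π i, (hθad.1 i (Finset.mem_coe.1 hiI)).symm⟩, ⟨i, rfl⟩⟩
  have hcad : (Set.range a₁ ∩ Set.range d₁).ncard = k := by rw [hSad, hcard_im]
  obtain ⟨had1, had2⟩ := hI a₁ ha₁X d₁ hd₁X hEad₁ hcad
  have hadI : a₁ '' ↑I = d₁ '' ↑I := had1.symm.trans had2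
  -- the pair (d₁, b₁)
  have hSdb_sub : Set.range d₁ ∩ Set.range b₁ ⊆ d₁ '' ↑I := by
    rintro x ⟨⟨j, hj⟩, ⟨l, hl⟩⟩
    by_cases hjI : j ∈ I
    · exact ⟨j, Finset.mem_coe.2 hjI, hj⟩
    · exact absurd (hj.trans hl.symm) (hfreshbd j hjI l)
  have hkdb : (Set.range d₁ ∩ Set.range b₁).ncard = k := by
    refine le_antisymm ?_ (hk.2 ⟨d₁, hd₁X, b₁, hb₁X, hEdb₁, rfl⟩)
    rw [← hcard_im]
    exact Set.ncard_le_ncard hSdb_sub (Set.toFinite _)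
  obtain ⟨hdb1, hdb2⟩ := hI d₁ hd₁X b₁ hb₁X hEdb₁ hkdb
  have hdbI : d₁ '' ↑I = b₁ '' ↑I := hdb1.symm.trans hdb2
  have habI : a₁ '' ↑I = b₁ '' ↑I := hadI.trans hdbI
  -- extract the coordinate map
  obtain ⟨p, hp⟩ : ∃ p : Fin n → Fin n, ∀ i ∈ I, p i ∈ I ∧ a₁ i = b₁ (p i) := by
    have hpex : ∀ i ∈ I, ∃ j, j ∈ I ∧ a₁ i = b₁ j := by
      intro i hi
      have h1 : a₁ i ∈ b₁ '' ↑I := by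
        rw [← habI]
        exact Set.mem_image_of_mem a₁ (Finset.mem_coe.2 hi)
      obtain ⟨j, hj, hji⟩ := h1
      exact ⟨j, Finset.mem_coe.1 hj, hji.symm⟩
    choose pf h1 h2 using hpex
    refine ⟨fun i => if hi : i ∈ I then pf i hi else i, fun i hi => ?_⟩
    simp only [dif_pos hi]
    exact ⟨h1 i hi, h2 i hi⟩
  -- transfer the coordinate identities back to (a, b)
  obtain ⟨μ, hμreal⟩ : ∃ μ : L.Formula (Fin n ⊕ Fin n), ∀ x y : Fin n → M,
      (μ.Realize (Sum.elim x y) ↔ ∀ i ∈ I, x i = y (p i)) := by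
    refine ⟨finsetIInf I (fun i => Term.equal (Term.var (Sum.inl i))
      (Term.var (Sum.inr (p i)))), ?_⟩
    intro x y
    rw [realize_iInfF]
    apply forall_congr'; intro i; apply imp_congr_right; intro _
    rw [Formula.realize_equal]
    exact Iff.rfl
  have hμ₁ : μ.Realize (Sum.elim a₁ b₁) := by
    rw [hμreal]
    intro i hi
    exact (hp i hi).2
  have hμ : μ.Realize (Sum.elim a b) := (hpairST μ).2 hμ₁
  rw [hμreal] at hμ
  exact ⟨p, fun i hi => (hp i hi).1, hμ⟩
end

section
/- Suppose that M is a countably infinite L-structure whose complete theory is ℵ₀-categorical and which has degenerate algebraic closure, that p implies x_i ≠ x_j for all 1 ≤ i < j ≤ n, that condition (*) holds for X, and that E is a nontrivial ∅-definable equivalence relation on X. Let k be the least cardinality of rng(ā) ∩ rng(b̄) over all pairs ā,b̄ ∈ X with E(ā,b̄), and let I ⊆ {1,…,n} with |I| = k be such that for every pair ā,b̄ ∈ X with E(ā,b̄) and |rng(ā) ∩ rng(b̄)| = k one has rng(ā) ∩ rng(b̄) = {a_i : i ∈ I} = {b_i : i ∈ I}. Then there exist ā,b̄ ∈ X such that E(ā,b̄)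 holds, a_i = b_i for all i ∈ I, the sets {a_i : i ∉ I} and {b_j : j ∉ I} are disjoint, and the tuple (a_i)_{i ∉ I} has the same complete type over the parameter set {a_i : i ∈ I} as the tuple (b_i)_{i ∉ I}. -/
open FirstOrder FirstOrder.Language Cardinal

universe u v

theorem SameType.comp' {L : FirstOrder.Language} {M : Type*} [L.Structure M]
    {α β : Type*} {x y : β → M} (h : SameType L x y) (g : α → β) :
    SameType L (x ∘ g) (y ∘ g) := fun φ =>
  (Formula.realize_relabel.symm.trans (h (φ.relabel g))).trans Formula.realize_relabel

noncomputable def finsetInf {L : FirstOrder.Language} {α : Type*} {β : Type*}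
    (s : Finset β) (f : β → L.Formula α) : L.Formula α :=
  BoundedFormula.iInf (fun x : s => f x)

theorem realize_iInf' {L : FirstOrder.Language} {M : Type*} [L.Structure M] {α : Type*}
    {β : Type*} (s : Finset β) (fm : β → L.Formula α) (vv : α → M) :
    Formula.Realize (finsetInf s fm) vv ↔ ∀ x ∈ s, (fm x).Realize vv := by
  show BoundedFormula.Realize _ vv default ↔ _
  rw [finsetInf, BoundedFormula.realize_iInf]
  exact ⟨fun h x hx => h ⟨x, hx⟩, fun h x => h x.1 x.2⟩

noncomputable def iExs' {L : FirstOrder.Language} {α β γ : Type*} [Finite γ]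
    (φ : L.Formula α) (f : α → β ⊕ γ) : L.Formula β :=
  (φ.relabel f).iExs γ

theorem realize_iExs' {L : FirstOrder.Language} {M : Type*} [L.Structure M]
    {α β γ : Type*} [Finite γ] {φ : L.Formula α} {f : α → β ⊕ γ} {v : β → M} :
    (iExs' φ f).Realize v ↔ ∃ i : γ → M, φ.Realize (fun a => Sum.elim v i (f a)) := by
  rw [iExs', Formula.realize_iExs]
  simp only [Formula.realize_relabel]
  rfl

theorem infinite_of_model_completeTheory {L : FirstOrder.Language.{u, v}}
    (M : Type) [L.Structure M] [Infinite M]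
    (N : Type*) [L.Structure N] (hmodN : N ⊨ L.completeTheory M) : Infinite N := by
  have hinf : N ⊨ L.infiniteTheory := by
    refine hmodN.mono ?_
    intro φ hφ
    obtain ⟨n, rfl⟩ := hφ
    rw [completeTheory, Set.mem_setOf_eq, Sentence.realize_cardGe]
    exact le_trans (le_of_lt (nat_lt_aleph0 n)) (aleph0_le_mk M)
  exact (model_infiniteTheory_iff L).1 hinf

/-- Part A: in a countably infinite structure with ℵ₀-categorical complete theory, every
set of formulas in countably many variables that is finitely satisfiable in `M` is
realized in `M`. -/
theorem realize_of_finitelySatisfiable {L : FirstOrder.Language.{u, v}} (hL : L.card ≤ ℵ₀)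
    (M : Type) [L.Structure M] [Countable M] [Infinite M]
    (hcat : (ℵ₀ : Cardinal.{0}).Categorical (L.completeTheory M))
    {α : Type} [Countable α] (Sig₀ : Set (L.Formula α))
    (hfin : ∀ S : Finset (L.Formula α), ↑S ⊆ Sig₀ → ∃ v : α → M, ∀ φ ∈ S, φ.Realize v) :
    ∃ v : α → M, ∀ φ ∈ Sig₀, φ.Realize v := by
  classical
  set T' : (L[[α]]).Theory :=
    (L.lhomWithConstants α).onTheory (L.completeTheory M) ∪ (Formula.equivSentence '' Sig₀)
    with hT'
  have hsat : T'.IsSatisfiable := by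
    rw [Theory.isSatisfiable_iff_isFinitelySatisfiable]
    intro T0 hT0
    obtain ⟨v₀, hv₀⟩ := hfin ((T0.preimage Formula.equivSentence
        (Set.injOn_of_injective Formula.equivSentence.injective)).filter (· ∈ Sig₀))
      (by intro φ hφ
          simp only [Finset.coe_filter, Finset.mem_preimage, Set.mem_setOf_eq] at hφ
          exact hφ.2)
    letI : (constantsOn α).Structure M := constantsOn.structure v₀
    have hmod : M ⊨ (T0 : (L[[α]]).Theory) := by
      rw [Theory.model_iff]
      intro φ hφ
      rcases hT0 hφ with h | h
      · obtain ⟨ψ, hψT, rfl⟩ := h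
        rw [LHom.realize_onSentence]
        exact hψT
      · obtain ⟨ψ, hψ, rfl⟩ := h
        rw [Formula.realize_equivSentence]
        have hcon : (fun a => ((L.con a : (L[[α]]).Constants) : M)) = v₀ := rfl
        rw [hcon]
        exact hv₀ ψ (by
          simp only [Finset.mem_filter, Finset.mem_preimage]
          exact ⟨hφ, hψ⟩)
    exact Theory.Model.isSatisfiable M
  have hNinf : ∃ N : Theory.ModelType.{_, _, max u v} T', Infinite N := by
    obtain ⟨N⟩ := hsat
    refine ⟨N, ?_⟩
    letI : L.Structure N := (L.lhomWithConstants α).reduct N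
    haveI : (L.lhomWithConstants α).IsExpansionOn (N : Type (max u v)) :=
      LHom.isExpansionOn_reduct _ _
    have hmodN : (N : Type (max u v)) ⊨ L.completeTheory M := by
      rw [← LHom.onTheory_model (L.lhomWithConstants α)]
      exact N.is_model.mono Set.subset_union_left
    exact infinite_of_model_completeTheory M (N : Type (max u v)) hmodN
  have hcardbound : lift.{0} (L[[α]]).card ≤ lift.{max u v} (ℵ₀ : Cardinal.{0}) := by
    simp only [card_withConstants, lift_add, lift_aleph0]
    have h1 : lift.{0} (lift.{0} L.card) ≤ ℵ₀ := by
      simpa using hL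
    have h2 : lift.{0} (lift.{max u v} (#α)) ≤ ℵ₀ := by
      simpa using (Cardinal.mk_le_aleph0 : #α ≤ ℵ₀)
    calc lift.{0} (lift.{0} L.card) + lift.{0} (lift.{max u v} (#α))
        ≤ ℵ₀ + ℵ₀ := add_le_add h1 h2
      _ = ℵ₀ := by simp
  obtain ⟨N, hNcard⟩ := Theory.exists_model_card_eq hNinf ℵ₀ le_rfl hcardbound
  letI : L.Structure N := (L.lhomWithConstants α).reduct N
  haveI : (L.lhomWithConstants α).IsExpansionOn (N : Type 0) :=
    LHom.isExpansionOn_reduct _ _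
  have hmodN : (N : Type 0) ⊨ L.completeTheory M := by
    rw [← LHom.onTheory_model (L.lhomWithConstants α)]
    exact N.is_model.mono Set.subset_union_left
  haveI : Infinite N := infinite_of_model_completeTheory M (N : Type 0) hmodN
  haveI hmodN' : (N : Type 0) ⊨ L.completeTheory M := hmodN
  haveI : M ⊨ L.completeTheory M := inferInstance
  set NM : (L.completeTheory M).ModelType := Theory.ModelType.of _ N with hNM
  set MM : (L.completeTheory M).ModelType := Theory.ModelType.of _ M with hMM
  obtain ⟨g⟩ := hcat NM MM hNcard (Cardinal.mk_eq_aleph0 M)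
  refine ⟨fun a => g ((L.con a : (L[[α]]).Constants) : N), ?_⟩
  intro φ hφ
  have h1 : (N : Type 0) ⊨ Formula.equivSentence φ :=
    T'.realize_sentence_of_mem (Set.mem_union_right _ ⟨φ, hφ, rfl⟩)
  rw [Formula.realize_equivSentence] at h1
  have h2 := (StrongHomClass.realize_formula g
    (φ := φ) (v := fun a => ((L.con a : (L[[α]]).Constants) : N))).2 h1
  exact h2


/-- Part B: fresh realizations avoiding a finite set, from degenerate algebraic closure. -/
theorem fresh_realization {L : FirstOrder.Language.{u, v}} {M : Type} [L.Structure M]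
    (hacl : ∀ A s : Set M, A.Definable₁ L s → s.Finite → s ⊆ A) :
    ∀ (N : ℕ) (β : Type) (_ : Fintype β) (γ : Type) (_ : Fintype γ),
      Fintype.card β = N →
      ∀ (ψ : L.Formula (γ ⊕ β)) (pars : γ → M),
        (∃ z : β → M, ψ.Realize (Sum.elim pars z)) →
        (∀ z : β → M, ψ.Realize (Sum.elim pars z) →
          Function.Injective z ∧ ∀ (b : β) (g : γ), z b ≠ pars g) →
        ∀ F : Finset M, ∃ z : β → M, ψ.Realize (Sum.elim pars z) ∧ ∀ b, z b ∉ F := by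
  intro N
  induction N with
  | zero =>
    intro β _ γ _ hcard ψ pars hne _ F
    haveI : IsEmpty β := Fintype.card_eq_zero_iff.1 hcard
    obtain ⟨z, hz⟩ := hne
    exact ⟨z, hz, fun b => (IsEmpty.false b).elim⟩
  | succ N ih =>
    intro β _ γ _ hcard ψ pars hne hguard F
    classical
    haveI : Nonempty β := Fintype.card_pos_iff.1 (by omega)
    obtain ⟨b₀⟩ := ‹Nonempty β›
    set A : Set M := Set.range pars with hA
    set s : Set M := {y | ∃ z : β → M, ψ.Realize (Sum.elim pars z) ∧ z b₀ = y} with hs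
    -- definability of s over A
    have hdef : A.Definable₁ L s := by
      rw [Set.Definable₁, Set.definable_iff_exists_formula_sum]
      refine ⟨iExs' (γ := {x : β // x ≠ b₀}) ψ
        (fun aa => Sum.casesOn aa
          (fun g => Sum.inl (Sum.inl ⟨pars g, Set.mem_range_self g⟩))
          (fun b => if h : b = b₀ then Sum.inl (Sum.inr 0) else Sum.inr ⟨b, h⟩)), ?_⟩
      ext x
      simp only [Set.mem_setOf_eq, realize_iExs']
      constructor
      · rintro ⟨z, hz, hzb⟩
        refine ⟨fun b' => z b'.val, ?_⟩
        have heq : (fun aa => Sum.elim (Sum.elim (Subtype.val : A → M) x)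
            (fun b' : {x : β // x ≠ b₀} => z b'.val)
            (Sum.casesOn aa
              (fun g => Sum.inl (Sum.inl ⟨pars g, Set.mem_range_self g⟩))
              (fun b => if h : b = b₀ then Sum.inl (Sum.inr 0) else Sum.inr ⟨b, h⟩)))
            = Sum.elim pars z := by
          funext aa
          rcases aa with g | b
          · rfl
          · by_cases h : b = b₀
            · subst h; simp [hzb]
            · simp [h]
        rw [heq]; exact hz
      · rintro ⟨i, hi⟩
        refine ⟨fun b => if h : b = b₀ then x 0 else i ⟨b, h⟩, ?_, by simp⟩
        have heq : (fun aa => Sum.elim (Sum.elim (Subtype.val : A → M) x) i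
            (Sum.casesOn aa
              (fun g => Sum.inl (Sum.inl ⟨pars g, Set.mem_range_self g⟩))
              (fun b => if h : b = b₀ then Sum.inl (Sum.inr 0) else Sum.inr ⟨b, h⟩)))
            = Sum.elim pars (fun b => if h : b = b₀ then x 0 else i ⟨b, h⟩) := by
          funext aa
          rcases aa with g | b
          · rfl
          · by_cases h : b = b₀
            · subst h; simp
            · simp [h]
        rw [heq] at hi; exact hi
    -- s is infinite
    obtain ⟨z₁, hz₁⟩ := hne
    have hz₁mem : z₁ b₀ ∈ s := ⟨z₁, hz₁, rfl⟩
    have hz₁A : z₁ b₀ ∉ A := by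
      rintro ⟨g, hg⟩
      exact (hguard z₁ hz₁).2 b₀ g hg.symm
    have hsinf : s.Infinite := by
      intro hfin
      exact hz₁A (hacl A s hdef hfin hz₁mem)
    obtain ⟨y, hy_s, hy_F⟩ := hsinf.exists_notMem_finset F
    obtain ⟨z₀, hz₀, hz₀b⟩ := hy_s
    -- recurse on β' = {x // x ≠ b₀}
    set β' := {x : β // x ≠ b₀} with hβ'
    have hcard' : Fintype.card β' = N := by
      have h1 : Fintype.card β' = Fintype.card β - Fintype.card {x : β // x = b₀} :=
        Fintype.card_subtype_compl _
      rw [Fintype.card_subtype_eq, hcard] at h1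
      omega
    set pars' : γ ⊕ Unit → M := Sum.elim pars (fun _ => y) with hpars'
    set h₄ : γ ⊕ β → (γ ⊕ Unit) ⊕ β' := fun aa => Sum.casesOn aa
      (fun g => Sum.inl (Sum.inl g))
      (fun b => if h : b = b₀ then Sum.inl (Sum.inr ()) else Sum.inr ⟨b, h⟩) with hh₄
    set ψ' : L.Formula ((γ ⊕ Unit) ⊕ β') := ψ.relabel h₄ with hψ'
    have htrans : ∀ z' : β' → M,
        ψ'.Realize (Sum.elim pars' z') ↔
        ψ.Realize (Sum.elim pars (fun b => if h : b = b₀ then y else z' ⟨b, h⟩)) := by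
      intro z'
      rw [hψ', Formula.realize_relabel]
      have heq : (Sum.elim pars' z') ∘ h₄
          = Sum.elim pars (fun b => if h : b = b₀ then y else z' ⟨b, h⟩) := by
        funext aa
        rcases aa with g | b
        · rfl
        · by_cases h : b = b₀
          · simp [hh₄, h, hpars']
          · simp [hh₄, h]
      rw [heq]
    have hne' : ∃ z' : β' → M, ψ'.Realize (Sum.elim pars' z') := by
      refine ⟨fun b' => z₀ b'.val, ?_⟩
      rw [htrans]
      have heq2 : (fun b => if h : b = b₀ then y else (fun b' : β' => z₀ b'.val) ⟨b, h⟩) = z₀ := by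
        funext b
        by_cases h : b = b₀
        · subst h; simp [hz₀b]
        · simp [h]
      rw [heq2]; exact hz₀
    have hguard' : ∀ z' : β' → M, ψ'.Realize (Sum.elim pars' z') →
        Function.Injective z' ∧ ∀ (b : β') (g : γ ⊕ Unit), z' b ≠ pars' g := by
      intro z' hz'
      rw [htrans] at hz'
      set z : β → M := fun b => if h : b = b₀ then y else z' ⟨b, h⟩ with hzdef
      obtain ⟨hinj, havoid⟩ := hguard z hz'
      have hzval : ∀ b' : β', z b'.val = z' b' := by
        intro b'
        simp [hzdef, b'.prop]
      constructor
      · intro b' b'' he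
        have : z b'.val = z b''.val := by rw [hzval, hzval, he]
        exact Subtype.ext (hinj this)
      · rintro b' (g | u)
        · rw [← hzval]; exact havoid b'.val g
        · rw [← hzval]
          intro hcon
          have hzb₀ : z b₀ = y := by simp [hzdef]
          have : b'.val = b₀ := hinj (by rw [hzb₀]; exact hcon)
          exact b'.prop this
    obtain ⟨z'', hz''real, hz''F⟩ := ih β' inferInstance (γ ⊕ Unit) inferInstance hcard'
      ψ' pars' hne' hguard' F
    refine ⟨fun b => if h : b = b₀ then y else z'' ⟨b, h⟩, ?_, ?_⟩
    · rw [htrans] at hz''real; exact hz''real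
    · intro b
      by_cases h : b = b₀
      · subst h; simpa using hy_F
      · simpa [h] using hz''F ⟨b, h⟩


/-- Chain lemma: build a chain of length `r` of approximate copies of the pair `(a,b)`
with fresh off-`I` parts. -/
theorem chain_lemma' {L : FirstOrder.Language.{u, v}} {M : Type} [L.Structure M]
    (hacl : ∀ A s : Set M, A.Definable₁ L s → s.Finite → s ⊆ A)
    {n : ℕ} (I : Finset (Fin n)) (σ : Equiv.Perm (Fin n))
    (a b : Fin n → M) (hST : SameType L a b)
    (χ : L.Formula (Fin n ⊕ Fin n))
    (hχab : χ.Realize (Sum.elim a b))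
    (hχI : ∀ w z : Fin n → M, χ.Realize (Sum.elim w z) → ∀ i ∈ I, w (σ i) = z i)
    (hχNe : ∀ w z : Fin n → M, χ.Realize (Sum.elim w z) → ∀ j ∉ I, ∀ l, z j ≠ w l)
    (hχInj : ∀ w z : Fin n → M, χ.Realize (Sum.elim w z) →
      ∀ j j', j ∉ I → j' ∉ I → j ≠ j' → z j ≠ z j')
    (r : ℕ) (hr : 1 ≤ r) :
    ∃ u : ℕ → Fin n → M, u 0 = a ∧ u 1 = b ∧
      (∀ s, s + 1 ≤ r → χ.Realize (Sum.elim (u s) (u (s + 1)))) ∧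
      (∀ s, 1 ≤ s → s ≤ r → ∀ j, j ∉ I → ∀ l, u s j ≠ a l) := by
  classical
  -- the "there exists a next element" operator
  let nextE : L.Formula (Fin n ⊕ Fin n) → L.Formula (Fin n ⊕ Fin n) := fun ψ =>
    iExs' (γ := Fin n) ψ (fun aa => Sum.casesOn aa
      (fun i => Sum.inl (Sum.inr i)) (fun i => Sum.inr i))
  have hnextE : ∀ (ψ : L.Formula (Fin n ⊕ Fin n)) (w z : Fin n → M),
      (nextE ψ).Realize (Sum.elim w z) ↔ ∃ z', ψ.Realize (Sum.elim z z') := by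
    intro ψ w z
    rw [show nextE ψ = iExs' (γ := Fin n) ψ (fun aa => Sum.casesOn aa
      (fun i => Sum.inl (Sum.inr i)) (fun i => Sum.inr i)) from rfl, realize_iExs']
    apply exists_congr
    intro z'
    have heq : (fun aa => Sum.elim (Sum.elim w z) z' ((Sum.casesOn aa
        (fun i => Sum.inl (Sum.inr i)) (fun i => Sum.inr i) : (Fin n ⊕ Fin n) ⊕ Fin n)))
        = Sum.elim z z' := by
      funext aa; rcases aa with i | i <;> rfl
    rw [heq]
  -- projection formula
  let proj : L.Formula (Fin n ⊕ Fin n) → L.Formula (Fin n) := fun ψ =>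
    iExs' (γ := Fin n) ψ (fun aa => Sum.casesOn aa
      (fun i => Sum.inl i) (fun i => Sum.inr i))
  have hproj : ∀ (ψ : L.Formula (Fin n ⊕ Fin n)) (w : Fin n → M),
      (proj ψ).Realize w ↔ ∃ z, ψ.Realize (Sum.elim w z) := by
    intro ψ w
    rw [show proj ψ = iExs' (γ := Fin n) ψ (fun aa => Sum.casesOn aa
      (fun i => Sum.inl i) (fun i => Sum.inr i)) from rfl, realize_iExs']
    apply exists_congr
    intro z'
    have heq : (fun aa => Sum.elim w z' ((Sum.casesOn aa
        (fun i => Sum.inl i) (fun i => Sum.inr i) : Fin n ⊕ Fin n)))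
        = Sum.elim w z' := by
      funext aa; rcases aa with i | i <;> rfl
    rw [heq]
  -- the tower of formulas
  let g : ℕ → L.Formula (Fin n ⊕ Fin n) := fun t => Nat.rec χ (fun _ ih => χ ⊓ nextE ih) t
  have hgsucc : ∀ t, g (t + 1) = χ ⊓ nextE (g t) := fun t => rfl
  have hgchi : ∀ t (w z : Fin n → M), (g t).Realize (Sum.elim w z) → χ.Realize (Sum.elim w z) := by
    intro t w z h
    cases t with
    | zero => exact h
    | succ t =>
      rw [hgsucc, Formula.realize_inf] at h
      exact h.1
  have hgab : ∀ t, (g t).Realize (Sum.elim a b) := by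
    intro t
    induction t with
    | zero => exact hχab
    | succ t ih =>
      rw [hgsucc, Formula.realize_inf]
      refine ⟨hχab, (hnextE _ _ _).2 ?_⟩
      have h1 : (proj (g t)).Realize a := (hproj _ _).2 ⟨b, ih⟩
      have h2 : (proj (g t)).Realize b := (hST (proj (g t))).1 h1
      exact (hproj _ _).1 h2
  -- main chain construction
  have main : ∀ t, 1 ≤ t → t ≤ r → ∃ u : ℕ → Fin n → M, u 0 = a ∧ u 1 = b ∧
      (∀ s, s + 1 ≤ t → (g (r - s - 1)).Realize (Sum.elim (u s) (u (s + 1)))) ∧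
      (∀ s, 1 ≤ s → s ≤ t → ∀ j, j ∉ I → ∀ l, u s j ≠ a l) := by
    intro t
    induction t with
    | zero => omega
    | succ t ih =>
      intro _ htr
      by_cases ht : t = 0
      · subst ht
        refine ⟨fun s => if s = 0 then a else b, by simp, by simp, ?_, ?_⟩
        · intro s hs
          have hs0 : s = 0 := by omega
          subst hs0
          simpa using hgab (r - 0 - 1)
        · intro s h1s hst j hj l
          have hs1 : s = 1 := by omega
          subst hs1
          simpa using hχNe a b hχab j hj l
      · obtain ⟨u, hu0, hu1, hulinks, huoff⟩ := ih (by omega) (by omega)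
        have hlink := hulinks (t - 1) (by omega)
        have e1 : t - 1 + 1 = t := by omega
        rw [e1] at hlink
        have e2 : r - (t - 1) - 1 = (r - t - 1) + 1 := by omega
        rw [e2] at hlink
        have hlink' : (χ ⊓ nextE (g (r - t - 1))).Realize (Sum.elim (u (t - 1)) (u t)) := by
          rw [← hgsucc]; exact hlink
        rw [Formula.realize_inf] at hlink'
        obtain ⟨z', hz'⟩ := (hnextE _ _ _).1 hlink'.2
        -- freshness
        set mix : ({j : Fin n // j ∉ I} → M) → Fin n → M :=
          fun zoff i => if h : i ∈ I then u t (σ i) else zoff ⟨i, h⟩ with hmix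
        set h₃ : Fin n ⊕ Fin n → Fin n ⊕ {j : Fin n // j ∉ I} := fun aa => Sum.casesOn aa
          Sum.inl (fun i => if h : i ∈ I then Sum.inl (σ i) else Sum.inr ⟨i, h⟩) with hh₃
        have htr3 : ∀ zoff : {j : Fin n // j ∉ I} → M,
            ((g (r - t - 1)).relabel h₃).Realize (Sum.elim (u t) zoff) ↔
            (g (r - t - 1)).Realize (Sum.elim (u t) (mix zoff)) := by
          intro zoff
          rw [Formula.realize_relabel]
          have heq : (Sum.elim (u t) zoff) ∘ h₃ = Sum.elim (u t) (mix zoff) := by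
            funext aa
            rcases aa with i | i
            · rfl
            · by_cases h : i ∈ I
              · simp [hh₃, hmix, h]
              · simp [hh₃, hmix, h]
          rw [heq]
        have hne : ∃ zoff : {j : Fin n // j ∉ I} → M,
            ((g (r - t - 1)).relabel h₃).Realize (Sum.elim (u t) zoff) := by
          refine ⟨fun j => z' j.val, ?_⟩
          rw [htr3]
          have heq : mix (fun j => z' j.val) = z' := by
            funext i
            by_cases h : i ∈ I
            · simp only [hmix, dif_pos h]
              exact hχI _ _ (hgchi _ _ _ hz') i h
            · simp [hmix, h]
          rw [heq]
          exact hz'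
        have hguard : ∀ zoff : {j : Fin n // j ∉ I} → M,
            ((g (r - t - 1)).relabel h₃).Realize (Sum.elim (u t) zoff) →
            Function.Injective zoff ∧ ∀ (b2 : {j : Fin n // j ∉ I}) (g2 : Fin n),
              zoff b2 ≠ u t g2 := by
          intro zoff hzoff
          rw [htr3] at hzoff
          have hχre := hgchi _ _ _ hzoff
          have hval : ∀ j : {j : Fin n // j ∉ I}, mix zoff j.val = zoff j := by
            intro j
            simp [hmix, j.prop]
          constructor
          · intro x y he
            by_contra hxy
            have hvne : x.val ≠ y.val := fun hv => hxy (Subtype.ext hv)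
            exact hχInj _ _ hχre x.val y.val x.prop y.prop hvne
              (by rw [hval, hval, he])
          · intro b2 g2
            rw [← hval]
            exact hχNe _ _ hχre b2.val b2.prop g2
        obtain ⟨zoff, hzoffreal, hzoffF⟩ := fresh_realization hacl
          (Fintype.card {j : Fin n // j ∉ I}) {j : Fin n // j ∉ I} inferInstance
          (Fin n) inferInstance rfl ((g (r - t - 1)).relabel h₃) (u t) hne hguard
          (Finset.image a Finset.univ)
        rw [htr3] at hzoffreal
        refine ⟨fun s => if s ≤ t then u s else mix zoff, by simp [hu0], ?_, ?_, ?_⟩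
        · have h1t : 1 ≤ t := by omega
          simp [h1t, hu1]
        · intro s hs
          by_cases hst : s + 1 ≤ t
          · have hs' : s ≤ t := by omega
            simpa [hs', hst] using hulinks s hst
          · have hseq : s = t := by omega
            subst hseq
            have h1 : s ≤ s := le_refl s
            have h2 : ¬ (s + 1 ≤ s) := by omega
            simpa [h1, h2] using hzoffreal
        · intro s h1s hst j hj l
          by_cases hs' : s ≤ t
          · simpa [hs'] using huoff s h1s hs' j hj l
          · show (if s ≤ t then u s else mix zoff) j ≠ a l
            rw [if_neg hs']
            have hmj : mix zoff j = zoff ⟨j, hj⟩ := by simp [hmix, hj]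
            rw [hmj]
            intro hcon
            have hmem : zoff ⟨j, hj⟩ ∈ Finset.image a Finset.univ := by
              rw [hcon]; exact Finset.mem_image_of_mem a (Finset.mem_univ l)
            exact hzoffF ⟨j, hj⟩ hmem
  obtain ⟨u, hu0, hu1, hulinks, huoff⟩ := main r hr le_rfl
  exact ⟨u, hu0, hu1, fun s hs => hgchi _ _ _ (hulinks s hs), huoff⟩


/-- Lemma (getting tuples satisfying `E` with the same type over the parameters indexed by
`I`): with `k` and `I` as in Lemma 5.7, there are `a, b ∈ X` with `E(a,b)` that agree on
`I`, have disjoint sets of remaining coordinates, and whose tuples of remaining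
coordinates have the same complete type over the parameter set `{a_i : i ∈ I}`. -/
theorem exists_E_pair_same_type_over_I
    (L : FirstOrder.Language) (hL : L.card ≤ ℵ₀)
    (M : Type) [L.Structure M] [Countable M] [Infinite M]
    (hcat : (ℵ₀ : Cardinal.{0}).Categorical (L.completeTheory M))
    (hacl : ∀ A s : Set M, A.Definable₁ L s → s.Finite → s ⊆ A)
    (n : ℕ) (hn : 1 ≤ n) (a₀ : Fin n → M)
    (X : Set (Fin n → M)) (hX : X = {b | SameType L b a₀})
    (hinj : ∀ a ∈ X, Function.Injective a)
    (hstar : StarCond L M n X)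
    (E : (Fin n → M) → (Fin n → M) → Prop)
    (hdef : ∃ φ : L.Formula (Fin n ⊕ Fin n),
      ∀ a ∈ X, ∀ b ∈ X, (E a b ↔ φ.Realize (Sum.elim a b)))
    (hrefl : ∀ a ∈ X, E a a)
    (hsymm : ∀ a ∈ X, ∀ b ∈ X, E a b → E b a)
    (htrans : ∀ a ∈ X, ∀ b ∈ X, ∀ c ∈ X, E a b → E b c → E a c)
    (hnontriv₁ : ∃ a ∈ X, ∃ b ∈ X, ¬ E a b)
    (hnontriv₂ : ∃ a ∈ X, ∃ b ∈ X, a ≠ b ∧ E a b)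
    (k : ℕ)
    (hk : IsLeast {m : ℕ | ∃ a ∈ X, ∃ b ∈ X, E a b ∧ (Set.range a ∩ Set.range b).ncard = m} k)
    (I : Finset (Fin n)) (hIcard : I.card = k)
    (hI : ∀ a ∈ X, ∀ b ∈ X, E a b → (Set.range a ∩ Set.range b).ncard = k →
      (Set.range a ∩ Set.range b = a '' ↑I ∧ Set.range a ∩ Set.range b = b '' ↑I))
    :
    ∃ a ∈ X, ∃ b ∈ X, E a b ∧ (∀ i ∈ I, a i = b i) ∧
      Disjoint (a '' {i : Fin n | i ∉ I}) (b '' {j : Fin n | j ∉ I}) ∧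
      SameType L
        (Sum.elim (fun i : {i // i ∈ I} => a ↑i) (fun j : {j : Fin n // j ∉ I} => a ↑j))
        (Sum.elim (fun i : {i // i ∈ I} => a ↑i) (fun j : {j : Fin n // j ∉ I} => b ↑j)) := by
  classical
  obtain ⟨φE, hφE⟩ := hdef
  obtain ⟨a, haX, b, hbX, hEab, hcard⟩ := hk.1
  obtain ⟨hIa, hIb⟩ := hI a haX b hbX hEab hcard
  have ainj : Function.Injective a := hinj a haX
  have binj : Function.Injective b := hinj b hbX
  have haT : SameType L a a₀ := by rw [hX] at haX; exact haX
  have hbT : SameType L b a₀ := by rw [hX] at hbX; exact hbX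
  have hST : SameType L a b := fun φ => (haT φ).trans (hbT φ).symm
  -- b's off-I coordinates avoid all of a
  have hboff : ∀ j, j ∉ I → ∀ l, b j ≠ a l := by
    intro j hj l hcon
    have hmem : b j ∈ Set.range a ∩ Set.range b := ⟨⟨l, hcon.symm⟩, ⟨j, rfl⟩⟩
    rw [hIb] at hmem
    obtain ⟨i, hi, hbi⟩ := hmem
    exact hj (by rwa [binj hbi] at hi)
  -- the permutation
  have hex : ∀ i, i ∈ I → ∃ j, j ∈ I ∧ a j = b i := by
    intro i hi
    have hmem : b i ∈ a '' ↑I := by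
      rw [← hIa, hIb]
      exact Set.mem_image_of_mem b (by exact_mod_cast hi)
    obtain ⟨j, hj, hja⟩ := hmem
    exact ⟨j, by exact_mod_cast hj, hja⟩
  set f : Fin n → Fin n := fun i => if h : i ∈ I then (hex i h).choose else i with hf
  have hfI : ∀ i (h : i ∈ I), f i ∈ I ∧ a (f i) = b i := by
    intro i h
    rw [hf]
    simp only [dif_pos h]
    exact (hex i h).choose_spec
  have hfnot : ∀ i, i ∉ I → f i = i := by
    intro i h
    rw [hf]
    simp [h]
  have hfinj : Function.Injective f := by
    intro i i' he
    by_cases hi : i ∈ I <;> by_cases hi' : i' ∈ I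
    · have h1 := (hfI i hi).2
      have h2 := (hfI i' hi').2
      rw [he] at h1
      exact binj (h1.symm.trans h2)
    · exfalso
      rw [hfnot i' hi'] at he
      rw [← he] at hi'
      exact hi' (hfI i hi).1
    · exfalso
      rw [hfnot i hi] at he
      rw [he] at hi
      exact hi (hfI i' hi').1
    · rw [hfnot i hi, hfnot i' hi'] at he
      exact he
  set σ : Equiv.Perm (Fin n) := Equiv.ofBijective f (Finite.injective_iff_bijective.1 hfinj)
    with hσ
  have hσapp : ∀ i, σ i = f i := fun i => rfl
  set r := orderOf σ with hrdef
  have hr1 : 1 ≤ r := orderOf_pos σ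
  have hσr : σ ^ r = 1 := pow_orderOf_eq_one σ
  have hσI : ∀ i ∈ I, σ i ∈ I := by
    intro i hi
    rw [hσapp]
    exact (hfI i hi).1
  have hσab : ∀ i ∈ I, a (σ i) = b i := by
    intro i hi
    rw [hσapp]
    exact (hfI i hi).2
  -- basic formulas
  set eqF : Fin n → L.Formula (Fin n ⊕ Fin n) := fun i =>
    (Term.var (Sum.inl (σ i))).equal (Term.var (Sum.inr i)) with heqFdef
  have heqF : ∀ (w z : Fin n → M) (i : Fin n),
      (eqF i).Realize (Sum.elim w z) ↔ w (σ i) = z i := by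
    intro w z i
    simp [heqFdef, Formula.realize_equal, Term.realize_var]
  set neF : Fin n × Fin n → L.Formula (Fin n ⊕ Fin n) := fun p =>
    if p.1 ∈ I then ⊤ else
      ((Term.var (Sum.inr p.1 : Fin n ⊕ Fin n)).equal (Term.var (Sum.inl p.2))).not
    with hneFdef
  set injF : Fin n × Fin n → L.Formula (Fin n ⊕ Fin n) := fun p =>
    if p.1 = p.2 then ⊤ else
      ((Term.var (Sum.inr p.1 : Fin n ⊕ Fin n)).equal (Term.var (Sum.inr p.2))).not
    with hinjFdef
  have hneFr : ∀ (w z : Fin n → M),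
      (∀ p ∈ (Finset.univ : Finset (Fin n × Fin n)), (neF p).Realize (Sum.elim w z)) ↔
      (∀ j ∉ I, ∀ l, z j ≠ w l) := by
    intro w z
    constructor
    · intro h j hj l
      have := h (j, l) (Finset.mem_univ _)
      rw [hneFdef] at this
      simp only [if_neg hj] at this
      rw [Formula.realize_not, Formula.realize_equal] at this
      simpa [Term.realize_var] using this
    · intro h p _
      rw [hneFdef]
      by_cases hp : p.1 ∈ I
      · simp [hp]
      · simp only [if_neg hp]
        rw [Formula.realize_not, Formula.realize_equal]
        simpa [Term.realize_var] using h p.1 hp p.2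
  have hinjFr : ∀ (w z : Fin n → M),
      (∀ p ∈ (Finset.univ : Finset (Fin n × Fin n)), (injF p).Realize (Sum.elim w z)) ↔
      (∀ j j' : Fin n, j ≠ j' → z j ≠ z j') := by
    intro w z
    constructor
    · intro h j j' hne
      have := h (j, j') (Finset.mem_univ _)
      rw [hinjFdef] at this
      simp only [if_neg hne] at this
      rw [Formula.realize_not, Formula.realize_equal] at this
      simpa [Term.realize_var] using this
    · intro h p _
      rw [hinjFdef]
      by_cases hp : p.1 = p.2
      · simp [hp]
      · simp only [if_neg hp]
        rw [Formula.realize_not, Formula.realize_equal]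
        simpa [Term.realize_var] using h p.1 p.2 hp
  -- the index type for the chain of tuples
  set α' : Type := Fin (r + 1) × Fin n with hα'
  set ℓ : Fin r → (Fin n ⊕ Fin n) → α' := fun j =>
    Sum.elim (fun i => (Fin.castSucc j, i)) (fun i => (Fin.succ j, i)) with hℓ
  set neEnd : Fin n → Fin n → L.Formula α' := fun j j' =>
    ((Term.var ((Fin.last r, j') : α')).equal (Term.var (((0 : Fin (r + 1)), j) : α'))).not
    with hneEnd
  set T_ab : Set (L.Formula (Fin n ⊕ Fin n)) := {Φ | Φ.Realize (Sum.elim a b)} with hT_ab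
  set Sig : Set (L.Formula α') :=
    {ψ | ∃ Φ ∈ T_ab, ∃ j : Fin r, ψ = Φ.relabel (ℓ j)} ∪
    {ψ | ∃ j j', j ∉ I ∧ j' ∉ I ∧ ψ = neEnd j j'} with hSig
  -- finite satisfiability of Sig
  have hfin : ∀ S : Finset (L.Formula α'), ↑S ⊆ Sig → ∃ v : α' → M, ∀ ψ ∈ S, ψ.Realize v := by
    intro S hS
    set P : L.Formula α' → Prop := fun ψ => ∃ Φ ∈ T_ab, ∃ j : Fin r, ψ = Φ.relabel (ℓ j)
      with hP
    set T₁ : Finset (L.Formula (Fin n ⊕ Fin n)) :=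
      S.attach.image (fun s => if h : P s.val then h.choose else (⊤ : L.Formula (Fin n ⊕ Fin n)))
      with hT₁
    have hT₁ab : ∀ Φ ∈ T₁, Φ.Realize (Sum.elim a b) := by
      intro Φ hΦ
      rw [hT₁] at hΦ
      obtain ⟨s, _, rfl⟩ := Finset.mem_image.1 hΦ
      by_cases h : P s.val
      · rw [dif_pos h]
        exact h.choose_spec.1
      · rw [dif_neg h]
        simp
    set χ : L.Formula (Fin n ⊕ Fin n) :=
      (finsetInf T₁ id) ⊓ ((finsetInf I eqF) ⊓
        ((finsetInf Finset.univ neF) ⊓ (finsetInf Finset.univ injF)))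
      with hχdef
    have hχiff : ∀ w z : Fin n → M, χ.Realize (Sum.elim w z) ↔
        ((∀ Φ ∈ T₁, Φ.Realize (Sum.elim w z)) ∧ (∀ i ∈ I, w (σ i) = z i) ∧
         (∀ j ∉ I, ∀ l, z j ≠ w l) ∧ (∀ j j' : Fin n, j ≠ j' → z j ≠ z j')) := by
      intro w z
      rw [hχdef]
      simp only [Formula.realize_inf]
      rw [realize_iInf', realize_iInf', realize_iInf', realize_iInf', hneFr, hinjFr]
      constructor
      · rintro ⟨h1, h2, h3, h4⟩
        exact ⟨h1, fun i hi => (heqF w z i).1 (h2 i hi), h3, h4⟩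
      · rintro ⟨h1, h2, h3, h4⟩
        exact ⟨h1, fun i hi => (heqF w z i).2 (h2 i hi), h3, h4⟩
    have hχab : χ.Realize (Sum.elim a b) := by
      rw [hχiff]
      refine ⟨hT₁ab, hσab, hboff, ?_⟩
      intro j j' hne hcon
      exact hne (binj hcon)
    obtain ⟨u, hu0, hu1, hulinks, huoff⟩ := chain_lemma' hacl I σ a b hST χ hχab
      (fun w z h => ((hχiff w z).1 h).2.1)
      (fun w z h => ((hχiff w z).1 h).2.2.1)
      (fun w z h j j' _ _ hne => ((hχiff w z).1 h).2.2.2 j j' hne)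
      r hr1
    refine ⟨fun p => u p.1.val p.2, ?_⟩
    intro ψ hψ
    rcases hS hψ with hmem | hmem
    · have hPψ : P ψ := hmem
      have hΦT₁ : (if h : P ψ then h.choose else (⊤ : L.Formula (Fin n ⊕ Fin n))) ∈ T₁ := by
        rw [hT₁]
        exact Finset.mem_image_of_mem _ (Finset.mem_attach S ⟨ψ, hψ⟩)
      rw [dif_pos hPψ] at hΦT₁
      obtain ⟨hPT, j', hψeq⟩ := hPψ.choose_spec
      rw [hψeq, Formula.realize_relabel]
      have hcomp : (fun p : α' => u p.1.val p.2) ∘ (ℓ j') =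
          Sum.elim (u j'.val) (u (j'.val + 1)) := by
        funext aa
        rcases aa with i | i
        · rfl
        · rfl
      rw [hcomp]
      have hlink := hulinks j'.val (by omega)
      exact ((hχiff _ _).1 hlink).1 _ hΦT₁
    · obtain ⟨j, j', hj, hj', rfl⟩ := hmem
      rw [hneEnd]
      rw [Formula.realize_not, Formula.realize_equal]
      simp only [Term.realize_var, Fin.val_last, Fin.val_zero]
      intro hcon
      rw [hu0] at hcon
      exact huoff r hr1 le_rfl j' hj' j hcon
  -- realize all of Sig at once
  obtain ⟨V, hV⟩ := realize_of_finitelySatisfiable hL M hcat Sig hfin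
  set w : Fin (r + 1) → Fin n → M := fun s i => V (s, i) with hw
  -- link transfer
  have hlinkAll : ∀ (j : Fin r) (Φ : L.Formula (Fin n ⊕ Fin n)),
      Φ.Realize (Sum.elim a b) →
      Φ.Realize (Sum.elim (w (Fin.castSucc j)) (w (Fin.succ j))) := by
    intro j Φ hΦ
    have hmem : Φ.relabel (ℓ j) ∈ Sig := Or.inl ⟨Φ, hΦ, j, rfl⟩
    have := hV _ hmem
    rw [Formula.realize_relabel] at this
    have hcomp : V ∘ (ℓ j) = Sum.elim (w (Fin.castSucc j)) (w (Fin.succ j)) := by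
      funext aa
      rcases aa with i | i <;> rfl
    rwa [hcomp] at this
  have hSTlink : ∀ j : Fin r,
      SameType L (Sum.elim (w (Fin.castSucc j)) (w (Fin.succ j))) (Sum.elim a b) := by
    intro j Φ
    constructor
    · intro h
      by_contra hna
      have := hlinkAll j Φ.not (by rwa [Formula.realize_not])
      rw [Formula.realize_not] at this
      exact this h
    · exact hlinkAll j Φ
  -- membership in X
  have hwT : ∀ s : Fin (r + 1), SameType L (w s) a₀ := by
    intro s
    by_cases hs : (s : ℕ) < r
    · set j : Fin r := ⟨s.val, hs⟩ with hj
      have hc : Fin.castSucc j = s := by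
        apply Fin.ext
        simp [hj]
      have h1 : SameType L (w (Fin.castSucc j)) a := by
        have h2 := (hSTlink j).comp' Sum.inl
        rwa [Sum.elim_comp_inl, Sum.elim_comp_inl] at h2
      rw [hc] at h1
      exact fun φ => (h1 φ).trans (haT φ)
    · have hsr : (s : ℕ) = r := by omega
      set j : Fin r := ⟨r - 1, by omega⟩ with hj
      have hc : Fin.succ j = s := by
        apply Fin.ext
        simp [hj]
        omega
      have h1 : SameType L (w (Fin.succ j)) b := by
        have h2 := (hSTlink j).comp' Sum.inr
        rwa [Sum.elim_comp_inr, Sum.elim_comp_inr] at h2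
      rw [hc] at h1
      exact fun φ => (h1 φ).trans (hbT φ)
  have hwX : ∀ s : Fin (r + 1), w s ∈ X := by
    intro s
    rw [hX]
    exact hwT s
  -- E along the chain
  have hwE : ∀ j : Fin r, E (w (Fin.castSucc j)) (w (Fin.succ j)) := by
    intro j
    have hφab : φE.Realize (Sum.elim a b) := (hφE a haX b hbX).1 hEab
    have := hlinkAll j φE hφab
    exact (hφE _ (hwX _) _ (hwX _)).2 this
  have hE0 : ∀ s : ℕ, ∀ hs : s ≤ r, E (w 0) (w ⟨s, by omega⟩) := by
    intro s
    induction s with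
    | zero =>
      intro _
      have h0 : (⟨0, by omega⟩ : Fin (r + 1)) = 0 := rfl
      rw [h0]
      exact hrefl _ (hwX 0)
    | succ s ih =>
      intro hs
      have hs' : s ≤ r := by omega
      have h1 := ih hs'
      set j : Fin r := ⟨s, by omega⟩ with hj
      have hc1 : Fin.castSucc j = (⟨s, by omega⟩ : Fin (r + 1)) := rfl
      have hc2 : Fin.succ j = (⟨s + 1, by omega⟩ : Fin (r + 1)) := rfl
      have h2 := hwE j
      rw [hc1, hc2] at h2
      exact htrans _ (hwX 0) _ (hwX _) _ (hwX _) h1 h2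
  -- pointwise agreement on I
  have hpoint : ∀ s : ℕ, ∀ hs : s ≤ r, ∀ i ∈ I, w ⟨s, by omega⟩ i = w 0 ((σ ^ s) i) := by
    intro s
    induction s with
    | zero =>
      intro _ i _
      have h0 : (⟨0, by omega⟩ : Fin (r + 1)) = 0 := rfl
      rw [h0, pow_zero]
      rfl
    | succ s ih =>
      intro hs i hi
      have hs' : s ≤ r := by omega
      set j : Fin r := ⟨s, by omega⟩ with hj
      have hc1 : Fin.castSucc j = (⟨s, by omega⟩ : Fin (r + 1)) := rfl
      have hc2 : Fin.succ j = (⟨s + 1, by omega⟩ : Fin (r + 1)) := rfl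
      have heqreal : (eqF i).Realize (Sum.elim a b) := (heqF a b i).2 (hσab i hi)
      have h2 := hlinkAll j (eqF i) heqreal
      rw [heqF, hc1, hc2] at h2
      have h3 : w (⟨s + 1, by omega⟩ : Fin (r + 1)) i = w (⟨s, by omega⟩ : Fin (r + 1)) (σ i) :=
        h2.symm
      rw [h3, ih hs' (σ i) (hσI i hi), pow_succ, Equiv.Perm.mul_apply]
  have hlast : ∀ i ∈ I, w (Fin.last r) i = w 0 i := by
    intro i hi
    have h1 := hpoint r le_rfl i hi
    rw [hσr] at h1
    have h2 : (⟨r, by omega⟩ : Fin (r + 1)) = Fin.last r := rfl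
    rw [h2] at h1
    simpa using h1
  -- end disjointness
  have hneEndr : ∀ j j', j ∉ I → j' ∉ I → w (Fin.last r) j' ≠ w 0 j := by
    intro j j' hj hj'
    have hmem : neEnd j j' ∈ Sig := Or.inr ⟨j, j', hj, hj', rfl⟩
    have := hV _ hmem
    rw [hneEnd, Formula.realize_not, Formula.realize_equal] at this
    simpa [Term.realize_var] using this
  -- conclusion
  have hABE : E (w 0) (w (Fin.last r)) := by
    have := hE0 r le_rfl
    have h2 : (⟨r, by omega⟩ : Fin (r + 1)) = Fin.last r := rfl
    rwa [h2] at this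
  refine ⟨w 0, hwX 0, w (Fin.last r), hwX _, hABE, ?_, ?_, ?_⟩
  · intro i hi
    exact (hlast i hi).symm
  · rw [Set.disjoint_left]
    rintro x ⟨i, hi, rfl⟩ ⟨j', hj', heq⟩
    exact hneEndr i j' hi hj' heq
  · have hAB : SameType L (w 0) (w (Fin.last r)) :=
      fun φ => (hwT 0 φ).trans ((hwT (Fin.last r)) φ).symm
    have h1 : (Sum.elim (fun i : {i // i ∈ I} => w 0 ↑i)
        (fun j : {j : Fin n // j ∉ I} => w 0 ↑j))
        = (w 0) ∘ (Sum.elim Subtype.val Subtype.val) := by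
      funext x
      rcases x with i | i <;> rfl
    have h2 : (Sum.elim (fun i : {i // i ∈ I} => w 0 ↑i)
        (fun j : {j : Fin n // j ∉ I} => w (Fin.last r) ↑j))
        = (w (Fin.last r)) ∘ (Sum.elim Subtype.val Subtype.val) := by
      funext x
      rcases x with i | i
      · exact (hlast i.val i.prop).symm
      · rfl
    rw [h1, h2]
    exact hAB.comp' _
end

section
/- The structure G' is ultrahomogeneous: every isomorphism between finite substructures of G' extends to an automorphism of G'. -/
open FirstOrder FirstOrder.Language

/-- The vertex set: all 2-element subsets of `M₀`. -/
def V (M₀ : Type) : Type := {s : Set M₀ // s.ncard = 2}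

/-- The adjacency relation: two 2-subsets are adjacent iff they are distinct and intersect
in exactly one point. -/
def ER {M₀ : Type} (u v : V M₀) : Prop :=
  u ≠ v ∧ (u.1 ∩ v.1).ncard = 1

/-- The ternary relation: three pairwise distinct 2-subsets with a common point. -/
def QR {M₀ : Type} (a b c : V M₀) : Prop :=
  a ≠ b ∧ a ≠ c ∧ b ≠ c ∧ (a.1 ∩ b.1 ∩ c.1).Nonempty

section Basic
variable {M₀ : Type}

lemma V.fin (u : V M₀) : u.1.Finite := by
  obtain ⟨a, b, -, h⟩ := Set.ncard_eq_two.mp u.2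
  rw [h]; exact (Set.finite_singleton b).insert a

lemma V.eq_of_two_mem {u v : V M₀} {x y : M₀} (hxy : x ≠ y) (hxu : x ∈ u.1) (hyu : y ∈ u.1)
    (hxv : x ∈ v.1) (hyv : y ∈ v.1) : u = v := by
  have h1 : u.1 = {x, y} := by
    refine (Set.eq_of_subset_of_ncard_le (by simp [Set.insert_subset_iff, hxu, hyu]) ?_ u.fin).symm
    rw [u.2, Set.ncard_pair hxy]
  have h2 : v.1 = {x, y} := by
    refine (Set.eq_of_subset_of_ncard_le (by simp [Set.insert_subset_iff, hxv, hyv]) ?_ v.fin).symm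
    rw [v.2, Set.ncard_pair hxy]
  exact Subtype.ext (h1.trans h2.symm)

lemma V.inter_eq_singleton {u v : V M₀} {x : M₀} (huv : u ≠ v) (hxu : x ∈ u.1) (hxv : x ∈ v.1) :
    u.1 ∩ v.1 = {x} := by
  apply Set.eq_singleton_iff_unique_mem.mpr
  refine ⟨⟨hxu, hxv⟩, fun y hy => ?_⟩
  by_contra hne
  exact huv (V.eq_of_two_mem hne hy.1 hxu hy.2 hxv)

lemma V.er_of_common {u v : V M₀} {x : M₀} (huv : u ≠ v) (hxu : x ∈ u.1) (hxv : x ∈ v.1) :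
    ER u v := ⟨huv, by rw [V.inter_eq_singleton huv hxu hxv, Set.ncard_singleton]⟩

lemma V.er_singleton {u v : V M₀} (h : ER u v) : ∃ p, u.1 ∩ v.1 = {p} :=
  Set.ncard_eq_one.mp h.2

lemma V.diff_singleton (u : V M₀) {p : M₀} (hp : p ∈ u.1) :
    ∃ q, q ∈ u.1 ∧ q ≠ p ∧ u.1 \ {p} = {q} := by
  obtain ⟨a, b, hab, h⟩ := Set.ncard_eq_two.mp u.2
  rw [h] at hp ⊢
  rcases hp with rfl | rfl
  · exact ⟨b, by simp [hab.symm], hab.symm, by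
      ext z; simp only [Set.mem_diff, Set.mem_insert_iff, Set.mem_singleton_iff]
      constructor
      · rintro ⟨rfl | rfl, hz⟩ <;> tauto
      · rintro rfl; exact ⟨Or.inr rfl, hab.symm⟩⟩
  · refine ⟨a, by simp, hab, ?_⟩
    ext z; simp only [Set.mem_diff, Set.mem_insert_iff, Set.mem_singleton_iff]
    constructor
    · rintro ⟨rfl | rfl, hz⟩ <;> tauto
    · rintro rfl; exact ⟨Or.inl rfl, hab⟩

end Basic

theorem key {M₀ : Type} [Countable M₀] [Infinite M₀] (𝒜 : Set (V M₀)) (h𝒜 : 𝒜.Finite)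
    (F : V M₀ → V M₀) (hinj : Set.InjOn F 𝒜)
    (hE : ∀ u ∈ 𝒜, ∀ v ∈ 𝒜, (ER (F u) (F v) ↔ ER u v))
    (hQ : ∀ u ∈ 𝒜, ∀ v ∈ 𝒜, ∀ w ∈ 𝒜, (QR (F u) (F v) (F w) ↔ QR u v w)) :
    ∃ σ : M₀ ≃ M₀, ∀ u ∈ 𝒜, σ '' u.1 = (F u).1 := by
  classical
  -- choose the two points of each 2-set
  choose p1 p2 hp12 hp using fun u : V M₀ => Set.ncard_eq_two.mp u.2
  -- multiplicity ≥ 2 predicate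
  set m2 : M₀ → Prop := fun x => ∃ u v, u ∈ 𝒜 ∧ v ∈ 𝒜 ∧ u ≠ v ∧ x ∈ u.1 ∧ x ∈ v.1 with hm2def
  -- singleton intersections
  have hFsing : ∀ u ∈ 𝒜, ∀ v ∈ 𝒜, u ≠ v → ∀ x, x ∈ u.1 → x ∈ v.1 →
      ∃ p, (F u).1 ∩ (F v).1 = {p} := by
    intro u hu v hv huv x hxu hxv
    exact V.er_singleton (((hE u hu v hv).mpr (V.er_of_common huv hxu hxv)))
  -- the consistent point function on m2 points
  have hptE : ∀ x : M₀, ∃ p : M₀,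
      m2 x → ∀ u ∈ 𝒜, ∀ v ∈ 𝒜, u ≠ v → x ∈ u.1 → x ∈ v.1 → (F u).1 ∩ (F v).1 = {p} := by
    intro x
    by_cases h : m2 x
    · obtain ⟨u₀, v₀, hu₀, hv₀, hne₀, hxu₀, hxv₀⟩ := h
      obtain ⟨p, hpp⟩ := hFsing u₀ hu₀ v₀ hv₀ hne₀ x hxu₀ hxv₀
      refine ⟨p, fun _ => ?_⟩
      -- first: for every w ≠ u₀ containing x, (F u₀).1 ∩ (F w).1 = {p}
      have claimA : ∀ w ∈ 𝒜, w ≠ u₀ → x ∈ w.1 → (F u₀).1 ∩ (F w).1 = {p} := by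
        intro w hw hwu hxw
        obtain ⟨q, hq⟩ := hFsing u₀ hu₀ w hw (Ne.symm hwu) x hxu₀ hxw
        rcases eq_or_ne w v₀ with rfl | hwv
        · rw [hq, ← hpp, hq]
        · -- Q argument
          have hQ1 : QR u₀ v₀ w := ⟨hne₀, Ne.symm hwu, Ne.symm hwv,
            ⟨x, ⟨hxu₀, hxv₀⟩, hxw⟩⟩
          have hQ2 : QR (F u₀) (F v₀) (F w) := (hQ u₀ hu₀ v₀ hv₀ w hw).mpr hQ1
          obtain ⟨z, ⟨hz1, hz2⟩, hz3⟩ := hQ2.2.2.2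
          have hzp : z = p := by
            have : z ∈ ({p} : Set M₀) := hpp ▸ (⟨hz1, hz2⟩ : z ∈ (F u₀).1 ∩ (F v₀).1)
            exact this
          have : z ∈ ({q} : Set M₀) := hq ▸ (⟨hz1, hz3⟩ : z ∈ (F u₀).1 ∩ (F w).1)
          rw [hq, Set.singleton_eq_singleton_iff, ← this, hzp]
      intro u hu v hv huv hxu hxv
      rcases eq_or_ne u u₀ with rfl | huu₀
      · exact claimA v hv (Ne.symm huv) hxv
      rcases eq_or_ne v u₀ with rfl | hvu₀
      · rw [Set.inter_comm]; exact claimA u hu huu₀ hxu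
      · obtain ⟨q, hq⟩ := hFsing u hu v hv huv x hxu hxv
        have hQ1 : QR u₀ u v := ⟨Ne.symm huu₀, Ne.symm hvu₀, huv, ⟨x, ⟨hxu₀, hxu⟩, hxv⟩⟩
        have hQ2 : QR (F u₀) (F u) (F v) := (hQ u₀ hu₀ u hu v hv).mpr hQ1
        obtain ⟨z, ⟨hz1, hz2⟩, hz3⟩ := hQ2.2.2.2
        have hzp : z = p := by
          have h5 := claimA u hu huu₀ hxu
          have : z ∈ ({p} : Set M₀) := h5 ▸ (⟨hz1, hz2⟩ : z ∈ (F u₀).1 ∩ (F u).1)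
          exact this
        have : z ∈ ({q} : Set M₀) := hq ▸ (⟨hz2, hz3⟩ : z ∈ (F u).1 ∩ (F v).1)
        rw [hq, Set.singleton_eq_singleton_iff, ← this, hzp]
    · exact ⟨Classical.arbitrary M₀, fun hx => absurd hx h⟩
  choose pt hpt using hptE

  have hL4 : ∀ x : M₀, m2 x → ∀ u ∈ 𝒜, x ∈ u.1 → pt x ∈ (F u).1 := by
    intro x hx u hu hxu
    obtain ⟨u₀, v₀, hu₀, hv₀, hne₀, hxu₀, hxv₀⟩ := id hx
    rcases eq_or_ne u u₀ with rfl | h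
    · have h5 := hpt x hx u hu v₀ hv₀ hne₀ hxu hxv₀
      have : pt x ∈ (F u).1 ∩ (F v₀).1 := by rw [h5]; exact rfl
      exact this.1
    · have h5 := hpt x hx u hu u₀ hu₀ h hxu hxu₀
      have : pt x ∈ (F u).1 ∩ (F u₀).1 := by rw [h5]; exact rfl
      exact this.1
  -- construct τ pointwise
  have hτE : ∀ x : M₀, ∃ y : M₀,
      (m2 x → y = pt x) ∧
      (¬ m2 x → ∀ u ∈ 𝒜, x ∈ u.1 →
        (m2 (if x = p1 u then p2 u else p1 u) →
           y ∈ (F u).1 ∧ y ≠ pt (if x = p1 u then p2 u else p1 u)) ∧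
        (¬ m2 (if x = p1 u then p2 u else p1 u) →
           y = (if x = p1 u then p1 (F u) else p2 (F u)))) := by
    intro x
    by_cases hx : m2 x
    · exact ⟨pt x, fun _ => rfl, fun h => absurd hx h⟩
    · by_cases hex : ∃ u, u ∈ 𝒜 ∧ x ∈ u.1
      · obtain ⟨u₀, hu₀, hxu₀⟩ := hex
        have huniq : ∀ u ∈ 𝒜, x ∈ u.1 → u = u₀ := by
          intro u hu hxu; by_contra hne; exact hx ⟨u, u₀, hu, hu₀, hne, hxu, hxu₀⟩
        by_cases hzm : m2 (if x = p1 u₀ then p2 u₀ else p1 u₀)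
        · have hzu : (if x = p1 u₀ then p2 u₀ else p1 u₀) ∈ u₀.1 := by
            rw [hp u₀]; split
            · right; rfl
            · left; rfl
          have hptz := hL4 _ hzm u₀ hu₀ hzu
          obtain ⟨q, hq1, hq2, hq3⟩ := V.diff_singleton (F u₀) hptz
          refine ⟨q, fun h => absurd h hx, fun _ u hu hxu => ?_⟩
          obtain rfl := huniq u hu hxu
          exact ⟨fun _ => ⟨hq1, hq2⟩, fun hzm' => absurd hzm hzm'⟩
        · refine ⟨if x = p1 u₀ then p1 (F u₀) else p2 (F u₀), fun h => absurd h hx,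
            fun _ u hu hxu => ?_⟩
          obtain rfl := huniq u hu hxu
          exact ⟨fun hm => absurd hm hzm, fun _ => rfl⟩
      · exact ⟨x, fun h => absurd h hx, fun _ u hu hxu => absurd ⟨u, hu, hxu⟩ hex⟩
  choose τ hτ1 hτ2 using hτE

  -- pick a witness distinct from a given u
  have pick : ∀ (u : V M₀) (z : M₀), m2 z → ∃ v ∈ 𝒜, v ≠ u ∧ z ∈ v.1 := by
    intro u z hz
    obtain ⟨a, b, ha, hb, hab, hza, hzb⟩ := hz
    rcases eq_or_ne a u with rfl | h
    · exact ⟨b, hb, Ne.symm hab, hzb⟩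
    · exact ⟨a, ha, h, hza⟩
  -- the per-pair lemma
  have hkey : ∀ u ∈ 𝒜, τ '' u.1 = (F u).1 ∧ Set.InjOn τ u.1 := by
    intro u hu
    have hu1 : u.1 = {p1 u, p2 u} := hp u
    have hxy : p1 u ≠ p2 u := hp12 u
    have hxu : p1 u ∈ u.1 := by rw [hu1]; left; rfl
    have hyu : p2 u ∈ u.1 := by rw [hu1]; right; rfl
    have hothx : (if p1 u = p1 u then p2 u else p1 u) = p2 u := if_pos rfl
    have hothy : (if p2 u = p1 u then p2 u else p1 u) = p1 u := if_neg (Ne.symm hxy)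
    have hmain : τ (p1 u) ∈ (F u).1 ∧ τ (p2 u) ∈ (F u).1 ∧ τ (p1 u) ≠ τ (p2 u) := by
      by_cases hmx : m2 (p1 u) <;> by_cases hmy : m2 (p2 u)
      · refine ⟨by rw [hτ1 _ hmx]; exact hL4 _ hmx u hu hxu,
          by rw [hτ1 _ hmy]; exact hL4 _ hmy u hu hyu, ?_⟩
        rw [hτ1 _ hmx, hτ1 _ hmy]
        intro heq
        obtain ⟨v, hv, hvu, hxv⟩ := pick u (p1 u) hmx
        obtain ⟨w, hw, hwu, hyw⟩ := pick u (p2 u) hmy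
        have hvw : v ≠ w := by
          rintro rfl
          exact hvu (V.eq_of_two_mem hxy hxv hyw hxu hyu)
        have h1 : (F u).1 ∩ (F v).1 = {pt (p1 u)} :=
          hpt _ hmx u hu v hv (Ne.symm hvu) hxu hxv
        have h2 : (F u).1 ∩ (F w).1 = {pt (p2 u)} :=
          hpt _ hmy u hu w hw (Ne.symm hwu) hyu hyw
        have hpx : pt (p1 u) ∈ (F u).1 ∩ (F v).1 := by rw [h1]; exact rfl
        have hpy : pt (p2 u) ∈ (F u).1 ∩ (F w).1 := by rw [h2]; exact rfl
        have hQ2 : QR (F u) (F v) (F w) := by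
          refine ⟨fun hh => hvu (hinj hv hu (hh.symm)), fun hh => hwu (hinj hw hu hh.symm),
            fun hh => hvw (hinj hv hw hh), ?_⟩
          exact ⟨pt (p1 u), ⟨⟨hpx.1, hpx.2⟩, by rw [heq]; exact hpy.2⟩⟩
        have hQ1 : QR u v w := (hQ u hu v hv w hw).mp hQ2
        obtain ⟨z, ⟨hz1, hz2⟩, hz3⟩ := hQ1.2.2.2
        have hzx : z = p1 u := by
          have h5 := V.inter_eq_singleton (show u ≠ v from fun hh => hvu hh.symm) hxu hxv
          have : z ∈ ({p1 u} : Set M₀) := h5 ▸ (⟨hz1, hz2⟩ : z ∈ u.1 ∩ v.1)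
          exact this
        rw [hzx] at hz3
        exact hwu (V.eq_of_two_mem hxy hz3 hyw hxu hyu)
      · -- m2 (p1 u), ¬ m2 (p2 u)
        have h2 := hτ2 _ hmy u hu hyu
        rw [hothy] at h2
        obtain ⟨hyF, hyne⟩ := h2.1 hmx
        refine ⟨by rw [hτ1 _ hmx]; exact hL4 _ hmx u hu hxu, hyF, ?_⟩
        rw [hτ1 _ hmx]
        exact fun hh => hyne hh.symm
      · -- ¬ m2 (p1 u), m2 (p2 u)
        have h2 := hτ2 _ hmx u hu hxu
        rw [hothx] at h2
        obtain ⟨hxF, hxne⟩ := h2.1 hmy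
        refine ⟨hxF, by rw [hτ1 _ hmy]; exact hL4 _ hmy u hu hyu, ?_⟩
        rw [hτ1 _ hmy]
        exact hxne
      · -- neither
        have h2 := hτ2 _ hmx u hu hxu
        rw [hothx] at h2
        have hxval : τ (p1 u) = p1 (F u) := by rw [h2.2 hmy, if_pos rfl]
        have h3 := hτ2 _ hmy u hu hyu
        rw [hothy] at h3
        have hyval : τ (p2 u) = p2 (F u) := by rw [h3.2 hmx, if_neg (Ne.symm hxy)]
        have hFu : (F u).1 = {p1 (F u), p2 (F u)} := hp (F u)
        exact ⟨by rw [hxval, hFu]; left; rfl, by rw [hyval, hFu]; right; rfl,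
          by rw [hxval, hyval]; exact hp12 (F u)⟩
    constructor
    · rw [hu1, Set.image_pair]
      refine Set.eq_of_subset_of_ncard_le ?_ ?_ (V.fin (F u))
      · rw [Set.insert_subset_iff, Set.singleton_subset_iff]
        exact ⟨hmain.1, hmain.2.1⟩
      · rw [(F u).2, Set.ncard_pair hmain.2.2]
    · rw [hu1]
      intro a ha b hb hab
      rcases ha with rfl | ha <;> rcases hb with rfl | hb
      · rfl
      · rw [Set.mem_singleton_iff] at hb; subst hb; exact absurd hab hmain.2.2
      · rw [Set.mem_singleton_iff] at ha; subst ha; exact absurd hab.symm hmain.2.2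
      · rw [Set.mem_singleton_iff] at ha hb; rw [ha, hb]

  -- global injectivity on the point set
  have hinjP : Set.InjOn τ (⋃ u ∈ 𝒜, u.1) := by
    intro a ha b hb hab
    simp only [Set.mem_iUnion] at ha hb
    obtain ⟨u, hu, hau⟩ := ha
    obtain ⟨v, hv, hbv⟩ := hb
    rcases eq_or_ne u v with rfl | huv
    · exact (hkey u hu).2 hau hbv hab
    · have haF : τ a ∈ (F u).1 := (hkey u hu).1 ▸ Set.mem_image_of_mem τ hau
      have hbF : τ b ∈ (F v).1 := (hkey v hv).1 ▸ Set.mem_image_of_mem τ hbv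
      rw [hab] at haF
      have hFne : F u ≠ F v := fun hh => huv (hinj hu hv hh)
      have hER : ER (F u) (F v) := V.er_of_common hFne haF hbF
      obtain ⟨z, hz⟩ := V.er_singleton ((hE u hu v hv).mp hER)
      have hzu : z ∈ u.1 := ((hz ▸ rfl : z ∈ u.1 ∩ v.1)).1
      have hzv : z ∈ v.1 := ((hz ▸ rfl : z ∈ u.1 ∩ v.1)).2
      have hm2z : m2 z := ⟨u, v, hu, hv, huv, hzu, hzv⟩
      have h3 : (F u).1 ∩ (F v).1 = {pt z} := hpt z hm2z u hu v hv huv hzu hzv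
      have h4 : τ b = pt z := by
        have : τ b ∈ (F u).1 ∩ (F v).1 := ⟨haF, hbF⟩
        rw [h3] at this; exact this
      have hτz : τ z = pt z := hτ1 z hm2z
      have ha' : a = z := (hkey u hu).2 hau hzu (by rw [hab, h4, ← hτz])
      have hb' : b = z := (hkey v hv).2 hbv hzv (by rw [h4, ← hτz])
      rw [ha', hb']
  have himg : τ '' (⋃ u ∈ 𝒜, u.1) = ⋃ u ∈ 𝒜, (F u).1 := by
    rw [Set.image_iUnion₂]; exact Set.iUnion₂_congr fun u hu => (hkey u hu).1
  have hbij : Set.BijOn τ (⋃ u ∈ 𝒜, u.1) (⋃ u ∈ 𝒜, (F u).1) :=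
    ⟨fun a ha => himg ▸ Set.mem_image_of_mem τ ha, hinjP, himg ▸ Set.Subset.rfl⟩
  have hPfin : (⋃ u ∈ 𝒜, u.1).Finite := h𝒜.biUnion fun u _ => u.fin
  have hPBfin : (⋃ u ∈ 𝒜, (F u).1).Finite := h𝒜.biUnion fun u _ => (F u).fin
  have hI1 : Infinite ↥((⋃ u ∈ 𝒜, u.1)ᶜ) := Set.infinite_coe_iff.mpr hPfin.infinite_compl
  have hI2 : Infinite ↥((⋃ u ∈ 𝒜, (F u).1)ᶜ) := Set.infinite_coe_iff.mpr hPBfin.infinite_compl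
  have e2 : ↥((⋃ u ∈ 𝒜, u.1)ᶜ) ≃ ↥((⋃ u ∈ 𝒜, (F u).1)ᶜ) := Classical.choice inferInstance
  let e1 : ↥(⋃ u ∈ 𝒜, u.1) ≃ ↥(⋃ u ∈ 𝒜, (F u).1) := Set.BijOn.equiv τ hbij
  refine ⟨(Equiv.Set.sumCompl _).symm.trans ((e1.sumCongr e2).trans (Equiv.Set.sumCompl _)), ?_⟩
  intro u hu
  have hστ : ∀ a ∈ (⋃ u ∈ 𝒜, u.1),
      ((Equiv.Set.sumCompl _).symm.trans ((e1.sumCongr e2).trans (Equiv.Set.sumCompl _))) a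
        = τ a := by
    intro a ha
    simp only [Equiv.trans_apply]
    rw [Equiv.Set.sumCompl_symm_apply_of_mem ha]
    simp only [Equiv.sumCongr_apply, Sum.map_inl, Equiv.Set.sumCompl_apply_inl]
    rfl
  rw [← (hkey u hu).1]
  exact Set.image_congr fun a ha => hστ a (Set.mem_biUnion hu ha)


/-- The symbols of the language with one binary relation symbol `E` and one ternary
relation symbol `Q`. -/
inductive EQRel : ℕ → Type
  | e : EQRel 2
  | q : EQRel 3

/-- The language with one binary relation symbol `E` and one ternary symbol `Q`. -/
def Leq : FirstOrder.Language := ⟨fun _ => Empty, EQRel⟩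

/-- The structure `G'` on `V M₀`: `E(u,v)` iff `u ≠ v` and `|u ∩ v| = 1`; `Q(a,b,c)` iff
`a,b,c` are pairwise distinct and `a ∩ b ∩ c ≠ ∅`. -/
instance (M₀ : Type) : Leq.Structure (V M₀) where
  funMap := fun f _ => f.elim
  RelMap := fun r x => match r with
    | .e => ER (x 0) (x 1)
    | .q => QR (x 0) (x 1) (x 2)

section VEquiv
variable {M₀ : Type}

def vmapFun (σ : M₀ ≃ M₀) : V M₀ → V M₀ := fun s =>
  ⟨σ '' s.1, by rw [Set.ncard_image_of_injective _ σ.injective]; exact s.2⟩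

def vequiv (σ : M₀ ≃ M₀) : V M₀ ≃ V M₀ where
  toFun := vmapFun σ
  invFun := vmapFun σ.symm
  left_inv := fun s => Subtype.ext (by simp [vmapFun, Set.image_image])
  right_inv := fun s => Subtype.ext (by simp [vmapFun, Set.image_image])

lemma vmap_ne (σ : M₀ ≃ M₀) (u v : V M₀) : vmapFun σ u ≠ vmapFun σ v ↔ u ≠ v := by
  constructor
  · intro h hh; exact h (by rw [hh])
  · intro h hh
    exact h ((vequiv σ).injective hh)

lemma er_vmap (σ : M₀ ≃ M₀) (u v : V M₀) : ER (vmapFun σ u) (vmapFun σ v) ↔ ER u v := by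
  unfold ER
  rw [vmap_ne]
  have : (vmapFun σ u).1 ∩ (vmapFun σ v).1 = σ '' (u.1 ∩ v.1) := by
    simp only [vmapFun]; rw [Set.image_inter σ.injective]
  rw [this, Set.ncard_image_of_injective _ σ.injective]

lemma qr_vmap (σ : M₀ ≃ M₀) (u v w : V M₀) :
    QR (vmapFun σ u) (vmapFun σ v) (vmapFun σ w) ↔ QR u v w := by
  unfold QR
  rw [vmap_ne, vmap_ne, vmap_ne]
  have : (vmapFun σ u).1 ∩ (vmapFun σ v).1 ∩ (vmapFun σ w).1 = σ '' (u.1 ∩ v.1 ∩ w.1) := by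
    simp only [vmapFun]; rw [Set.image_inter σ.injective, Set.image_inter σ.injective]
  rw [this, Set.image_nonempty]

def gEquiv (σ : M₀ ≃ M₀) : V M₀ ≃[Leq] V M₀ where
  toEquiv := vequiv σ
  map_fun' := fun {n} f _ => f.elim
  map_rel' := fun {n} r x => by
    cases r
    · exact er_vmap σ (x 0) (x 1)
    · exact qr_vmap σ (x 0) (x 1) (x 2)

end VEquiv



/-- `G'` is ultrahomogeneous: every isomorphism between finite substructures of `G'`
extends to an automorphism of `G'`. -/
theorem Gprime_ultrahomogeneous (M₀ : Type) [Countable M₀] [Infinite M₀] :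
    ∀ A B : Leq.Substructure (V M₀), (A : Set (V M₀)).Finite → (B : Set (V M₀)).Finite →
      ∀ f : A ≃[Leq] B, ∃ g : V M₀ ≃[Leq] V M₀, ∀ a : A, g ↑a = ↑(f a) := by
  classical
  intro A B hA hB f
  set F : V M₀ → V M₀ := fun u =>
    if h : u ∈ (A : Set (V M₀)) then ((f ⟨u, h⟩ : B) : V M₀) else u with hF
  have hFval : ∀ a : A, F ↑a = ↑(f a) := by
    intro a
    have hme : (↑a : V M₀) ∈ (A : Set (V M₀)) := a.2
    rw [hF]
    simp only
    rw [dif_pos hme]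
  have hrelE : ∀ a b : A, ER ((f a : B) : V M₀) ((f b : B) : V M₀) ↔ ER (a : V M₀) (b : V M₀) :=
    fun a b => f.map_rel' .e ![a, b]
  have hrelQ : ∀ a b c : A, QR ((f a : B) : V M₀) ((f b : B) : V M₀) ((f c : B) : V M₀) ↔
      QR (a : V M₀) (b : V M₀) (c : V M₀) := fun a b c => f.map_rel' .q ![a, b, c]
  have hinj : Set.InjOn F (A : Set (V M₀)) := by
    intro u hu v hv h
    rw [show u = ((⟨u, hu⟩ : A) : V M₀) from rfl, show v = ((⟨v, hv⟩ : A) : V M₀) from rfl,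
      hFval ⟨u, hu⟩, hFval ⟨v, hv⟩] at h
    have h2 : f ⟨u, hu⟩ = f ⟨v, hv⟩ := Subtype.ext h
    have h3 := f.injective h2
    exact congrArg Subtype.val h3
  have hE : ∀ u ∈ (A : Set (V M₀)), ∀ v ∈ (A : Set (V M₀)), (ER (F u) (F v) ↔ ER u v) := by
    intro u hu v hv
    rw [show u = ((⟨u, hu⟩ : A) : V M₀) from rfl, show v = ((⟨v, hv⟩ : A) : V M₀) from rfl,
      hFval ⟨u, hu⟩, hFval ⟨v, hv⟩]
    exact hrelE _ _
  have hQ : ∀ u ∈ (A : Set (V M₀)), ∀ v ∈ (A : Set (V M₀)), ∀ w ∈ (A : Set (V M₀)),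
      (QR (F u) (F v) (F w) ↔ QR u v w) := by
    intro u hu v hv w hw
    rw [show u = ((⟨u, hu⟩ : A) : V M₀) from rfl, show v = ((⟨v, hv⟩ : A) : V M₀) from rfl,
      show w = ((⟨w, hw⟩ : A) : V M₀) from rfl, hFval ⟨u, hu⟩, hFval ⟨v, hv⟩, hFval ⟨w, hw⟩]
    exact hrelQ _ _ _
  obtain ⟨σ, hσ⟩ := key (A : Set (V M₀)) hA F hinj hE hQ
  refine ⟨gEquiv σ, fun a => ?_⟩
  have h1 : (gEquiv σ) ↑a = vmapFun σ ↑a := rfl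
  rw [h1]
  apply Subtype.ext
  show σ '' (a : V M₀).1 = ((f a : B) : V M₀).1
  rw [hσ ↑a a.2, hFval a]
end
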